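/- arXiv:1406.0989 — 9 statements merged into one kernel-verified Lean document; each statement's English description precedes it below -/
import Mathlib

section
/- A measurable function L : [A,∞) → (0,∞) is slowly varying at infinity if and only if there exist b ≥ A, a measurable function M on [b,∞) with lim_{u→∞} M(u) = M* for some constant M* ∈ (0,∞), and a continuous function φ on [b,∞) with lim_{u→∞} φ(u) = 0, such that L(u) = M(u)·exp(∫_b^u φ(t)/t dt) for all u ≥ b. -/
open Filter MeasureTheory Set Topology

noncomputable section

/-- `f` is regularly varying at infinity of index `ρ`:
`f(ξu)/f(u) → ξ^ρ` as `u → ∞`, for every `ξ > 0`. -/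
def IsRV (f : ℝ → ℝ) (ρ : ℝ) : Prop :=
  ∀ ξ : ℝ, 0 < ξ → Tendsto (fun u => f (ξ * u) / f u) atTop (𝓝 (ξ ^ ρ))

/-!
Write `h x = log (L (exp x))`. Slow variation of `L` says `h (x + l) - h x → 0` for every `l`.
Egorov's theorem makes this convergence uniform in `l ∈ [0, 1]`: along a bad sequence `xₙ`, `lₙ`,
the increments from `xₙ` and from `xₙ + lₙ` converge uniformly off two sets of measure `1 / 4`,
so some `τ ∈ [0, 1]` is good for both, and `h (xₙ + lₙ) - h xₙ` is the difference of the
increments from `xₙ` by `lₙ + τ` and from `xₙ + lₙ` by `τ`. Uniform control makes `h` bounded,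
hence integrable, on compact subsets of a half-line `[X, ∞)`. The unit moving average
`F y = ∫_y^{y+1} h` is continuous with `h - F → 0`, and so is `H = ∫_y^{y+1} F` with `F - H → 0`;
moreover `H x - H X = ∫_X^x ψ` with `ψ t = F (t + 1) - F t` continuous and tending to `0`.
Hence `h = (h - H + H X) + ∫_X^x ψ`, which after exponentiating and substituting `t = exp x`
is the representation. Conversely `∫_u^{ξu} φ t / t dt = ∫_{log u}^{log u + log ξ} φ (exp x) dx`
tends to `0`.
-/

open Real intervalIntegral

theorem tendstoUniformlyOn_zero_iff_abs {ι α : Type*} {F : ι → α → ℝ} {p : Filter ι}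
    {s : Set α} :
    TendstoUniformlyOn F 0 p s ↔ ∀ ε > 0, ∀ᶠ n in p, ∀ x ∈ s, |F n x| < ε := by
  simp [Metric.tendstoUniformlyOn_iff, dist_zero_left]

theorem tendsto_integral_of_tendstoUniformlyOn {ι : Type*} {p : Filter ι} {F : ι → ℝ → ℝ}
    {a b : ℝ} (hF : TendstoUniformlyOn F 0 p (uIcc a b)) :
    Tendsto (fun n => ∫ l in a..b, F n l) p (𝓝 0) := by
  rw [tendstoUniformlyOn_zero_iff_abs] at hF
  rw [Metric.tendsto_nhds]
  intro ε hε
  filter_upwards [hF (ε / (|b - a| + 1)) (by positivity)] with n hn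
  rw [dist_zero_right]
  calc ‖∫ l in a..b, F n l‖ ≤ ε / (|b - a| + 1) * |b - a| :=
        norm_integral_le_of_norm_le_const fun l hl => (hn l (uIoc_subset_uIcc hl)).le
    _ < ε := by
        rw [div_mul_eq_mul_div, div_lt_iff₀ (by positivity)]
        nlinarith [abs_nonneg (b - a)]

theorem TendstoUniformlyOn.integral_comp_add_left {α : Type*} {F : ℝ → α → ℝ} {s : Set α}
    (hF : TendstoUniformlyOn F 0 atTop s) :
    TendstoUniformlyOn (fun x l => ∫ r in (0:ℝ)..1, F (x + r) l) 0 atTop s := by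
  rw [tendstoUniformlyOn_zero_iff_abs] at hF ⊢
  intro ε hε
  obtain ⟨X, hX⟩ := eventually_atTop.1 (hF (ε / 2) (by positivity))
  filter_upwards [eventually_ge_atTop X] with x hx l hl
  rw [← Real.norm_eq_abs]
  calc ‖∫ r in (0:ℝ)..1, F (x + r) l‖ ≤ ε / 2 * |1 - 0| :=
        norm_integral_le_of_norm_le_const fun r hr =>
          (hX (x + r) (by rw [uIoc_of_le zero_le_one] at hr; linarith [hr.1]) l hl).le
    _ < ε := by norm_num; linarith

theorem exists_mem_notMem_and_add_notMem {I s t : Set ℝ} (l : ℝ)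
    (h : volume t + volume s < volume I) : ∃ τ ∈ I, τ ∉ t ∧ l + τ ∉ s := by
  by_contra! hI
  have hcover : I ⊆ t ∪ (l + ·) ⁻¹' s := fun τ hτ => (em (τ ∈ t)).imp_right (hI τ hτ)
  refine h.not_ge ?_
  calc volume I ≤ volume (t ∪ (l + ·) ⁻¹' s) := measure_mono hcover
    _ ≤ volume t + volume ((l + ·) ⁻¹' s) := measure_union_le _ _
    _ = volume t + volume s := by rw [measure_preimage_add]

section Increments

variable {h : ℝ → ℝ}

theorem exists_tendstoUniformlyOn_add_sub_diff (hm : Measurable h)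
    (hs : ∀ l, Tendsto (fun x => h (x + l) - h x) atTop (𝓝 0)) {y : ℕ → ℝ}
    (hy : Tendsto y atTop atTop) (a b : ℝ) {δ : ℝ} (hδ : 0 < δ) :
    ∃ t, volume t ≤ ENNReal.ofReal δ ∧
      TendstoUniformlyOn (fun n l => h (y n + l) - h (y n)) 0 atTop (Icc a b \ t) := by
  obtain ⟨t, -, -, ht, hunif⟩ := tendstoUniformlyOn_of_ae_tendsto (μ := volume)
    (fun n => ((hm.comp (measurable_const_add (y n))).sub_const _).stronglyMeasurable)
    stronglyMeasurable_const measurableSet_Icc measure_Icc_lt_top.ne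
    (ae_of_all _ fun l _ => (hs l).comp hy) hδ
  exact ⟨t, ht, hunif⟩

theorem tendstoUniformlyOn_add_sub_of_measurable (hm : Measurable h)
    (hs : ∀ l, Tendsto (fun x => h (x + l) - h x) atTop (𝓝 0)) :
    TendstoUniformlyOn (fun x l => h (x + l) - h x) 0 atTop (Icc 0 1) := by
  rw [tendstoUniformlyOn_zero_iff_abs]
  by_contra! ⟨ε, hε, hfreq⟩
  choose x hx l hl hfar using fun n : ℕ => frequently_atTop.1 hfreq n
  have hxtop : Tendsto x atTop atTop := tendsto_atTop_mono hx tendsto_natCast_atTop_atTop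
  have hxltop : Tendsto (fun n => x n + l n) atTop atTop :=
    tendsto_atTop_mono (fun n => le_add_of_nonneg_right (hl n).1) hxtop
  obtain ⟨t₁, ht₁, hu₁⟩ := exists_tendstoUniformlyOn_add_sub_diff hm hs hxtop 0 2
    (by norm_num : (0:ℝ) < 1 / 4)
  obtain ⟨t₂, ht₂, hu₂⟩ := exists_tendstoUniformlyOn_add_sub_diff hm hs hxltop 0 2
    (by norm_num : (0:ℝ) < 1 / 4)
  have hvol : volume t₂ + volume t₁ < volume (Icc (0:ℝ) 1) := by
    calc volume t₂ + volume t₁ ≤ ENNReal.ofReal (1 / 4) + ENNReal.ofReal (1 / 4) :=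
          add_le_add ht₂ ht₁
      _ < volume (Icc (0:ℝ) 1) := by
          rw [Real.volume_Icc, ← ENNReal.ofReal_add (by norm_num) (by norm_num),
            ENNReal.ofReal_lt_ofReal_iff (by norm_num)]
          norm_num
  choose τ hτ hτt₂ hτt₁ using fun n => exists_mem_notMem_and_add_notMem (l n) hvol
  rw [tendstoUniformlyOn_zero_iff_abs] at hu₁ hu₂
  obtain ⟨n, hn₁, hn₂⟩ := ((hu₁ (ε / 2) (by positivity)).and (hu₂ (ε / 2) (by positivity))).exists
  have e₁ := hn₁ (l n + τ n)
    ⟨⟨by linarith [(hl n).1, (hτ n).1], by linarith [(hl n).2, (hτ n).2]⟩, hτt₁ n⟩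
  have e₂ := hn₂ (τ n) ⟨⟨(hτ n).1, by linarith [(hτ n).2]⟩, hτt₂ n⟩
  have hsplit : h (x n + l n) - h (x n) =
      (h (x n + (l n + τ n)) - h (x n)) - (h (x n + l n + τ n) - h (x n + l n)) := by
    rw [add_assoc]; ring
  have hfar_n := hfar n
  rw [hsplit] at hfar_n
  linarith [abs_sub (h (x n + (l n + τ n)) - h (x n)) (h (x n + l n + τ n) - h (x n + l n))]

theorem abs_sub_le_of_abs_add_sub_le {X C : ℝ}
    (hinc : ∀ x ≥ X, ∀ l ∈ Icc (0:ℝ) 1, |h (x + l) - h x| ≤ C) (n : ℕ) :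
    ∀ y ∈ Icc X (X + n), |h y - h X| ≤ n * C := by
  have hC : 0 ≤ C := by simpa using hinc X le_rfl 0 (by simp)
  induction n with
  | zero =>
    intro y hy
    rw [Nat.cast_zero, add_zero, Icc_self, mem_singleton_iff] at hy
    simp [hy]
  | succ n ih =>
    rintro y ⟨hXy, hy⟩
    push_cast at hy ⊢
    rcases le_or_gt y (X + n) with hyn | hyn
    · linarith [ih y ⟨hXy, hyn⟩]
    · have hstep := hinc (X + n) (by linarith [n.cast_nonneg (α := ℝ)]) (y - (X + n))
        ⟨by linarith, by linarith⟩
      rw [add_sub_cancel] at hstep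
      have hX := ih (X + n) ⟨by linarith [n.cast_nonneg (α := ℝ)], le_rfl⟩
      linarith [abs_sub_le (h y) (h (X + n)) (h X)]

theorem exists_abs_le_on_Icc_of_abs_add_sub_le {X C : ℝ}
    (hinc : ∀ x ≥ X, ∀ l ∈ Icc (0:ℝ) 1, |h (x + l) - h x| ≤ C) (c : ℝ) :
    ∃ B, ∀ y ∈ Icc X c, |h y| ≤ B := by
  obtain ⟨n, hn⟩ := exists_nat_ge (c - X)
  refine ⟨|h X| + n * C, fun y hy => ?_⟩
  have hy := abs_sub_le_of_abs_add_sub_le hinc n y ⟨hy.1, by linarith [hy.2]⟩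
  linarith [abs_sub_abs_le_abs_sub (h y) (h X)]

theorem intervalIntegrable_comp_max (hm : Measurable h) {X : ℝ}
    (hbdd : ∀ c, ∃ B, ∀ y ∈ Icc X c, |h y| ≤ B) (a c : ℝ) :
    IntervalIntegrable (fun y => h (max y X)) volume a c := by
  obtain ⟨B, hB⟩ := hbdd (max (max a c) X)
  refine (intervalIntegrable_const (c := B)).mono_fun
    (hm.comp (measurable_id.max measurable_const)).aestronglyMeasurable ?_
  filter_upwards [ae_restrict_mem measurableSet_uIoc] with y hy
  simp only [Real.norm_eq_abs]
  exact (hB _ ⟨le_max_right _ _, max_le_max hy.2 le_rfl⟩).trans (le_abs_self B)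

end Increments

def movingAverage (f : ℝ → ℝ) (y : ℝ) : ℝ := ∫ t in y..y + 1, f t

section MovingAverage

variable {f : ℝ → ℝ}

theorem movingAverage_eq_integral_comp_add_left (f : ℝ → ℝ) (y : ℝ) :
    movingAverage f y = ∫ r in (0:ℝ)..1, f (y + r) := by
  simp [movingAverage, integral_comp_add_left]

theorem continuous_movingAverage (hf : ∀ a b, IntervalIntegrable f volume a b) :
    Continuous (movingAverage f) := by
  have hP := continuous_primitive hf 0
  have hdiff : movingAverage f = fun y => (∫ t in 0..y + 1, f t) - ∫ t in 0..y, f t :=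
    funext fun y => (integral_interval_sub_left (hf _ _) (hf _ _)).symm
  rw [hdiff]
  exact (hP.comp (continuous_add_const 1)).sub hP

theorem movingAverage_sub_movingAverage (hf : ∀ a b, IntervalIntegrable f volume a b)
    (a x : ℝ) : movingAverage f x - movingAverage f a = ∫ t in a..x, (f (t + 1) - f t) := by
  have hshift : IntervalIntegrable (fun t => f (t + 1)) volume a x := by
    simpa using (hf (a + 1) (x + 1)).comp_add_right 1
  rw [integral_sub hshift (hf a x), integral_comp_add_right f 1, movingAverage, movingAverage,
    integral_interval_sub_interval_comm' (hf _ _) (hf _ _) (hf _ _)]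

theorem tendsto_sub_movingAverage (hf : ∀ a b, IntervalIntegrable f volume a b)
    (hinc : TendstoUniformlyOn (fun x l => f (x + l) - f x) 0 atTop (Icc 0 1)) :
    Tendsto (fun x => f x - movingAverage f x) atTop (𝓝 0) := by
  have hint : ∀ x, IntervalIntegrable (fun r => f (x + r)) volume 0 1 := fun x => by
    simpa using (hf x (x + 1)).comp_add_left x
  have hneg := (tendsto_integral_of_tendstoUniformlyOn (a := 0) (b := 1)
    (by rwa [uIcc_of_le zero_le_one])).neg
  rw [neg_zero] at hneg
  refine hneg.congr fun x => ?_
  rw [movingAverage_eq_integral_comp_add_left, integral_sub (hint x) intervalIntegrable_const]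
  simp

theorem tendstoUniformlyOn_movingAverage_add_sub (hf : ∀ a b, IntervalIntegrable f volume a b)
    (hinc : TendstoUniformlyOn (fun x l => f (x + l) - f x) 0 atTop (Icc 0 1)) :
    TendstoUniformlyOn (fun x l => movingAverage f (x + l) - movingAverage f x) 0 atTop
      (Icc 0 1) := by
  have hint : ∀ x, IntervalIntegrable (fun r => f (x + r)) volume 0 1 := fun x => by
    simpa using (hf x (x + 1)).comp_add_left x
  refine hinc.integral_comp_add_left.congr (Eventually.of_forall fun x l _ => ?_)
  simp only [movingAverage_eq_integral_comp_add_left]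
  rw [← integral_sub (hint _) (hint _)]
  simp only [add_right_comm x l]

theorem exists_primitive_tendsto_sub_of_tendstoUniformlyOn
    (hf : ∀ a b, IntervalIntegrable f volume a b)
    (hinc : TendstoUniformlyOn (fun x l => f (x + l) - f x) 0 atTop (Icc 0 1)) :
    ∃ ψ : ℝ → ℝ, Continuous ψ ∧ Tendsto ψ atTop (𝓝 0) ∧
      ∃ H : ℝ → ℝ, Continuous H ∧ Tendsto (fun x => f x - H x) atTop (𝓝 0) ∧
        ∀ a x, H x - H a = ∫ t in a..x, ψ t := by
  set F := movingAverage f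
  have hFc : Continuous F := continuous_movingAverage hf
  have hF : ∀ a b, IntervalIntegrable F volume a b := hFc.intervalIntegrable
  have hFinc := tendstoUniformlyOn_movingAverage_add_sub hf hinc
  refine ⟨fun t => F (t + 1) - F t, (hFc.comp (continuous_add_const 1)).sub hFc,
    hFinc.tendsto_at (right_mem_Icc.2 zero_le_one), movingAverage F, continuous_movingAverage hF,
    ?_, movingAverage_sub_movingAverage hF⟩
  have hsum := (tendsto_sub_movingAverage hf hinc).add (tendsto_sub_movingAverage hF hFinc)
  rw [add_zero] at hsum
  exact hsum.congr fun x => sub_add_sub_cancel _ _ _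

end MovingAverage

theorem exists_additive_representation {h : ℝ → ℝ} (hm : Measurable h)
    (hs : ∀ l, Tendsto (fun x => h (x + l) - h x) atTop (𝓝 0)) (a : ℝ) :
    ∃ X ≥ a, ∃ m : ℝ → ℝ, Measurable m ∧ (∃ c, Tendsto m atTop (𝓝 c)) ∧
      ∃ ψ : ℝ → ℝ, Continuous ψ ∧ Tendsto ψ atTop (𝓝 0) ∧
        ∀ x ≥ X, h x = m x + ∫ t in X..x, ψ t := by
  have hU := tendstoUniformlyOn_add_sub_of_measurable hm hs
  obtain ⟨X, hXa, hX⟩ : ∃ X ≥ a, ∀ x ≥ X, ∀ l ∈ Icc (0:ℝ) 1, |h (x + l) - h x| ≤ 1 := by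
    obtain ⟨X, hX⟩ := eventually_atTop.1 (tendstoUniformlyOn_zero_iff_abs.1 hU 1 one_pos)
    exact ⟨max a X, le_max_left _ _, fun x hx l hl => (hX x (le_of_max_le_right hx) l hl).le⟩
  -- `h` need not be integrable on bounded sets below `X`, so it is frozen there.
  set g := fun y => h (max y X)
  have hgm : Measurable g := hm.comp (measurable_id.max measurable_const)
  have hg_int := intervalIntegrable_comp_max hm (exists_abs_le_on_Icc_of_abs_add_sub_le hX)
  have hg_inc : TendstoUniformlyOn (fun x l => g (x + l) - g x) 0 atTop (Icc 0 1) := by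
    refine hU.congr ?_
    filter_upwards [eventually_ge_atTop X] with x hx l hl
    simp [g, max_eq_left hx, max_eq_left (hx.trans (le_add_of_nonneg_right hl.1))]
  obtain ⟨ψ, hψc, hψ0, H, hHc, hgH, hH⟩ :=
    exists_primitive_tendsto_sub_of_tendstoUniformlyOn hg_int hg_inc
  refine ⟨X, hXa, fun x => g x - H x + H X, (hgm.sub hHc.measurable).add_const _,
    ⟨H X, by simpa using hgH.add_const (H X)⟩, ψ, hψc, hψ0, fun x hx => ?_⟩
  rw [← hH X x]
  simp [g, max_eq_left hx]

theorem tendsto_integral_add_of_tendsto_zero {ψ : ℝ → ℝ} (hψ : Tendsto ψ atTop (𝓝 0)) (l : ℝ) :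
    Tendsto (fun x => ∫ t in x..x + l, ψ t) atTop (𝓝 0) := by
  rw [Metric.tendsto_nhds]
  intro ε hε
  obtain ⟨X, hX⟩ := eventually_atTop.1 (Metric.tendsto_nhds.1 hψ (ε / (|l| + 1)) (by positivity))
  filter_upwards [eventually_ge_atTop (X + |l|)] with x hx
  rw [dist_zero_right]
  have hbound : ∀ t ∈ uIoc x (x + l), ‖ψ t‖ ≤ ε / (|l| + 1) := fun t ht => by
    have : X ≤ t := by
      rcases le_total 0 l with hl | hl
      · rw [uIoc_of_le (by linarith)] at ht; linarith [ht.1, abs_nonneg l]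
      · rw [uIoc_of_ge (by linarith)] at ht; linarith [ht.1, abs_of_nonpos hl]
    simpa [dist_zero_right] using (hX t this).le
  calc ‖∫ t in x..x + l, ψ t‖ ≤ ε / (|l| + 1) * |x + l - x| :=
        norm_integral_le_of_norm_le_const hbound
    _ < ε := by
        rw [add_sub_cancel_left, div_mul_eq_mul_div, div_lt_iff₀ (by positivity)]
        nlinarith [abs_nonneg l]

theorem integral_comp_log_div (g : ℝ → ℝ) {a b : ℝ} (ha : 0 < a) (hb : 0 < b) :
    ∫ t in a..b, g (log t) / t = ∫ x in log a..log b, g x := by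
  have hpos : ∀ x ∈ Ioo (min a b) (max a b), 0 < x := fun x hx => (lt_min ha hb).trans hx.1
  have hsubst := integral_comp_mul_deriv_of_deriv_nonneg (g := g) (f' := fun t => t⁻¹)
    (continuousOn_log.mono fun x hx => ((lt_min ha hb).trans_le hx.1).ne')
    (fun x hx => hasDerivAt_log (hpos x hx).ne') (fun x hx => (inv_pos.2 (hpos x hx)).le)
  simpa [div_eq_mul_inv] using hsubst

theorem IsRV.tendsto_log_comp_exp_add_sub {L : ℝ → ℝ} {A : ℝ} (hL : IsRV L 0)
    (hLpos : ∀ u, A ≤ u → 0 < L u) (l : ℝ) :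
    Tendsto (fun x => log (L (exp (x + l))) - log (L (exp x))) atTop (𝓝 0) := by
  have hratio : Tendsto (fun x => L (exp l * exp x) / L (exp x)) atTop (𝓝 1) := by
    have hcomp := (hL (exp l) (exp_pos l)).comp tendsto_exp_atTop
    rw [rpow_zero] at hcomp
    exact hcomp
  have hlog := (continuousAt_log one_ne_zero).tendsto.comp hratio
  rw [log_one] at hlog
  refine hlog.congr' ?_
  have hA := tendsto_exp_atTop.eventually (eventually_ge_atTop A)
  filter_upwards [hA, (tendsto_atTop_add_const_right _ l tendsto_id).eventually hA]
    with x hx (hxl : A ≤ exp (x + l))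
  rw [Function.comp_apply, ← exp_add, add_comm l x, log_div (hLpos _ hxl).ne' (hLpos _ hx).ne']

theorem isRV_zero_of_representation {L M φ : ℝ → ℝ} {b Mstar : ℝ} (hb : 0 < b)
    (hMstar : Mstar ≠ 0) (hM : Tendsto M atTop (𝓝 Mstar)) (hφc : ContinuousOn φ (Ici b))
    (hφ0 : Tendsto φ atTop (𝓝 0))
    (hrep : ∀ u, b ≤ u → L u = M u * exp (∫ t in b..u, φ t / t)) : IsRV L 0 := by
  intro ξ hξ
  rw [rpow_zero]
  have hξu : Tendsto (fun u => ξ * u) atTop atTop := tendsto_id.const_mul_atTop hξ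
  have hint : ∀ x ≥ b, IntervalIntegrable (fun t => φ t / t) volume b x := fun x hx =>
    ((hφc.div continuousOn_id fun t ht => (hb.trans_le ht).ne').mono
      (by rw [uIcc_of_le hx]; exact Icc_subset_Ici_self)).intervalIntegrable
  have hMξ : Tendsto (fun u => M (ξ * u) / M u) atTop (𝓝 1) := by
    have hdiv := (hM.comp hξu).div hM hMstar
    rw [div_self hMstar] at hdiv
    exact hdiv
  have hI : Tendsto (fun u => ∫ t in u..ξ * u, φ t / t) atTop (𝓝 0) := by
    refine ((tendsto_integral_add_of_tendsto_zero (hφ0.comp tendsto_exp_atTop) (log ξ)).comp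
      tendsto_log_atTop).congr' ?_
    filter_upwards [eventually_gt_atTop 0] with u hu
    rw [Function.comp_apply, ← log_mul hu.ne' hξ.ne', mul_comm u ξ,
      ← integral_comp_log_div _ hu (mul_pos hξ hu)]
    refine integral_congr fun t ht => ?_
    simp [exp_log ((lt_min hu (mul_pos hξ hu)).trans_le ht.1)]
  have hlim := hMξ.mul ((continuous_exp.tendsto 0).comp hI)
  rw [exp_zero, mul_one] at hlim
  refine hlim.congr' ?_
  filter_upwards [eventually_ge_atTop b, hξu.eventually (eventually_ge_atTop b)] with u hu hu'
  rw [Function.comp_apply, hrep u hu, hrep _ hu', mul_div_mul_comm, ← exp_sub,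
    integral_interval_sub_left (hint _ hu') (hint _ hu)]

/-- Representation theorem: a measurable function `L : [A,∞) → (0,∞)` is slowly
varying at infinity iff `L(u) = M(u) * exp (∫_b^u φ(t)/t dt)` on `[b,∞)` for some
`b ≥ A`, where `M` is measurable with positive finite limit at infinity and `φ` is
continuous with `φ(u) → 0` at infinity. -/
theorem representation_theorem (A : ℝ) (hA : 0 < A) (L : ℝ → ℝ)
    (hLmeas : Measurable L) (hLpos : ∀ u, A ≤ u → 0 < L u) :
    IsRV L 0 ↔
      ∃ b : ℝ, A ≤ b ∧
        ∃ M : ℝ → ℝ, Measurable M ∧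
          ∃ Mstar : ℝ, 0 < Mstar ∧ Tendsto M atTop (𝓝 Mstar) ∧
            ∃ φ : ℝ → ℝ, ContinuousOn φ (Ici b) ∧ Tendsto φ atTop (𝓝 0) ∧
              ∀ u, b ≤ u → L u = M u * Real.exp (∫ t in b..u, φ t / t) := by
  constructor
  · intro hL
    obtain ⟨X, hXA, m, hm, ⟨c, hmc⟩, ψ, hψc, hψ0, hrep⟩ :=
      exists_additive_representation (hLmeas.comp measurable_exp).log
        (hL.tendsto_log_comp_exp_add_sub hLpos) (log A)
    have hAX : A ≤ exp X := by simpa [exp_log hA] using exp_le_exp.2 hXA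
    have hpos : ∀ u ∈ Ici (exp X), 0 < u := fun u hu => (exp_pos X).trans_le hu
    refine ⟨exp X, hAX, fun u => exp (m (log u)),
      (hm.comp measurable_log).exp, exp c, exp_pos c,
      (continuous_exp.tendsto c).comp (hmc.comp tendsto_log_atTop), fun u => ψ (log u),
      hψc.comp_continuousOn (continuousOn_log.mono fun u hu => (hpos u hu).ne'),
      hψ0.comp tendsto_log_atTop, fun u hu => ?_⟩
    have hXu : X ≤ log u := by simpa using log_le_log (exp_pos X) hu
    rw [integral_comp_log_div ψ (exp_pos X) (hpos u hu), log_exp, ← exp_add, ← hrep _ hXu,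
      Function.comp_apply, exp_log (hpos u hu), exp_log (hLpos u (hAX.trans hu))]
  · rintro ⟨b, hb, M, -, Mstar, hMstar, hM, φ, hφc, hφ0, hrep⟩
    exact isRV_zero_of_representation (hA.trans_le hb) hMstar.ne' hM hφc hφ0 hrep
end
end

section
/- Let ℓ ∈ (0,∞) and k ∈ K_ℓ, with K(s) = ∫₀ˢ k(θ) dθ. Then lim_{s→0⁺} K(s)/k(s) = 0 and lim_{s→0⁺} K(s)k'(s)/k(s)² = 1 − ℓ. Moreover, if k is non-decreasing then 0 < ℓ ≤ 1, and if k is non-increasing then ℓ ≥ 1. -/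
open Filter MeasureTheory Set Topology

noncomputable section

/-- `k ∈ K_ℓ`: `k` is a positive monotonic function in `C¹((0,μ)) ∩ L¹((0,μ))`
such that `(K/k)'(s) → ℓ` as `s → 0⁺`, where `K(s) = ∫₀ˢ k(θ) dθ`. -/
def memK (ℓ μ : ℝ) (k : ℝ → ℝ) : Prop :=
  (∀ s ∈ Ioo (0:ℝ) μ, 0 < k s) ∧
  (MonotoneOn k (Ioo (0:ℝ) μ) ∨ AntitoneOn k (Ioo (0:ℝ) μ)) ∧
  ContDiffOn ℝ 1 k (Ioo (0:ℝ) μ) ∧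
  IntegrableOn k (Ioo (0:ℝ) μ) ∧
  Tendsto (deriv fun s => (∫ θ in (0:ℝ)..s, k θ) / k s) (𝓝[>] (0:ℝ)) (𝓝 ℓ)

/-!
Write `g = K/k`. On `(0, μ)` one has `g' = 1 - K k'/k²`, which gives the second limit at once.
Monotonicity of `k` compares `K(s)` with `s k(s)`: `g(s) ≤ s` if `k` is non-decreasing and
`g(s) ≥ s` if it is non-increasing. In the first case `g → 0` by squeezing; in the second
`k(s) ≥ k(μ/2)` near `0`, so `g ≤ K / k(μ/2) → 0`. Since `g(0⁺) = 0` and `g' → ℓ`,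
L'Hôpital's rule gives `g(s)/s → ℓ`, and the bounds `g(s)/s ≤ 1` resp. `≥ 1` pass to the limit.
-/

theorem tendsto_div_self_nhdsGT_zero_of_tendsto_deriv {f : ℝ → ℝ} {ℓ : ℝ}
    (hdiff : ∀ᶠ x in 𝓝[>] 0, DifferentiableAt ℝ f x) (hf : Tendsto f (𝓝[>] 0) (𝓝 0))
    (hf' : Tendsto (deriv f) (𝓝[>] 0) (𝓝 ℓ)) :
    Tendsto (fun x => f x / x) (𝓝[>] 0) (𝓝 ℓ) := by
  refine deriv.lhopital_zero_nhdsGT hdiff (by simp) hf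
    (tendsto_id.mono_left nhdsWithin_le_nhds) ?_
  simpa using hf'

namespace MemK

variable {k : ℝ → ℝ} {μ s : ℝ}

theorem intervalIntegrable (hint : IntegrableOn k (Ioo 0 μ)) (hs₀ : 0 ≤ s) (hsμ : s ≤ μ) :
    IntervalIntegrable k volume 0 s :=
  (intervalIntegrable_iff_integrableOn_Ioo_of_le hs₀).2
    (hint.mono_set (Ioo_subset_Ioo_right hsμ))

theorem integral_pos (hpos : ∀ s ∈ Ioo 0 μ, 0 < k s) (hint : IntegrableOn k (Ioo 0 μ))
    (hs : s ∈ Ioo 0 μ) : 0 < ∫ θ in (0:ℝ)..s, k θ :=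
  intervalIntegral.intervalIntegral_pos_of_pos_on (intervalIntegrable hint hs.1.le hs.2.le)
    (fun x hx => hpos x ⟨hx.1, hx.2.trans hs.2⟩) hs.1

theorem integral_div_nonneg (hpos : ∀ s ∈ Ioo 0 μ, 0 < k s) (hint : IntegrableOn k (Ioo 0 μ))
    (hs : s ∈ Ioo 0 μ) : 0 ≤ (∫ θ in (0:ℝ)..s, k θ) / k s :=
  div_nonneg (integral_pos hpos hint hs).le (hpos s hs).le

theorem tendsto_integral_nhdsGT_zero (hμ : 0 < μ) (hint : IntegrableOn k (Ioo 0 μ)) :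
    Tendsto (fun s => ∫ θ in (0:ℝ)..s, k θ) (𝓝[>] 0) (𝓝 0) := by
  have hcont := intervalIntegral.continuousOn_primitive_interval'
    (intervalIntegrable hint hμ.le le_rfl) left_mem_uIcc
  rw [uIcc_of_le hμ.le] at hcont
  have h0 := hcont 0 (left_mem_Icc.2 hμ.le)
  rw [ContinuousWithinAt, intervalIntegral.integral_same] at h0
  refine h0.mono_left ?_
  rw [← nhdsWithin_Ioo_eq_nhdsGT hμ]
  exact nhdsWithin_mono 0 Ioo_subset_Icc_self

theorem integral_div_le_of_monotoneOn (hpos : ∀ s ∈ Ioo 0 μ, 0 < k s)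
    (hmono : MonotoneOn k (Ioo 0 μ)) (hint : IntegrableOn k (Ioo 0 μ)) (hs : s ∈ Ioo 0 μ) :
    (∫ θ in (0:ℝ)..s, k θ) / k s ≤ s := by
  rw [div_le_iff₀ (hpos s hs)]
  calc (∫ θ in (0:ℝ)..s, k θ) ≤ ∫ _ in (0:ℝ)..s, k s :=
        intervalIntegral.integral_mono_on_of_le_Ioo hs.1.le
          (intervalIntegrable hint hs.1.le hs.2.le) intervalIntegrable_const
          fun x hx => hmono ⟨hx.1, hx.2.trans hs.2⟩ hs hx.2.le
    _ = s * k s := by simp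

theorem le_integral_div_of_antitoneOn (hpos : ∀ s ∈ Ioo 0 μ, 0 < k s)
    (hanti : AntitoneOn k (Ioo 0 μ)) (hint : IntegrableOn k (Ioo 0 μ)) (hs : s ∈ Ioo 0 μ) :
    s ≤ (∫ θ in (0:ℝ)..s, k θ) / k s := by
  rw [le_div_iff₀ (hpos s hs)]
  calc s * k s = ∫ _ in (0:ℝ)..s, k s := by simp
    _ ≤ ∫ θ in (0:ℝ)..s, k θ :=
        intervalIntegral.integral_mono_on_of_le_Ioo hs.1.le intervalIntegrable_const
          (intervalIntegrable hint hs.1.le hs.2.le)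
          fun x hx => hanti ⟨hx.1, hx.2.trans hs.2⟩ hs hx.2.le

theorem tendsto_integral_div_nhdsGT_zero (hμ : 0 < μ) (hpos : ∀ s ∈ Ioo 0 μ, 0 < k s)
    (hmon : MonotoneOn k (Ioo 0 μ) ∨ AntitoneOn k (Ioo 0 μ)) (hint : IntegrableOn k (Ioo 0 μ)) :
    Tendsto (fun s => (∫ θ in (0:ℝ)..s, k θ) / k s) (𝓝[>] 0) (𝓝 0) := by
  have hIoo : Ioo 0 μ ∈ 𝓝[>] (0:ℝ) := Ioo_mem_nhdsGT hμ
  have hnonneg : ∀ᶠ s in 𝓝[>] 0, 0 ≤ (∫ θ in (0:ℝ)..s, k θ) / k s := by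
    filter_upwards [hIoo] with s hs using integral_div_nonneg hpos hint hs
  rcases hmon with hmono | hanti
  · refine tendsto_of_tendsto_of_tendsto_of_le_of_le' tendsto_const_nhds
      (tendsto_id.mono_left nhdsWithin_le_nhds) hnonneg ?_
    filter_upwards [hIoo] with s hs using integral_div_le_of_monotoneOn hpos hmono hint hs
  · have hmid : μ / 2 ∈ Ioo 0 μ := ⟨half_pos hμ, half_lt_self hμ⟩
    refine tendsto_of_tendsto_of_tendsto_of_le_of_le' tendsto_const_nhds
      (by simpa using (tendsto_integral_nhdsGT_zero hμ hint).div_const (k (μ / 2))) hnonneg ?_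
    filter_upwards [Ioo_mem_nhdsGT (half_pos hμ)] with s hs
    have hsμ : s ∈ Ioo 0 μ := ⟨hs.1, hs.2.trans (half_lt_self hμ)⟩
    exact div_le_div_of_nonneg_left (integral_pos hpos hint hsμ).le (hpos _ hmid)
      (hanti hsμ hmid hs.2.le)

theorem hasDerivAt_integral_div (hpos : ∀ s ∈ Ioo 0 μ, 0 < k s)
    (hC1 : ContDiffOn ℝ 1 k (Ioo 0 μ)) (hint : IntegrableOn k (Ioo 0 μ)) (hs : s ∈ Ioo 0 μ) :
    HasDerivAt (fun s => (∫ θ in (0:ℝ)..s, k θ) / k s)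
      (1 - (∫ θ in (0:ℝ)..s, k θ) * deriv k s / k s ^ 2) s := by
  have hnhds : Ioo 0 μ ∈ 𝓝 s := isOpen_Ioo.mem_nhds hs
  have hK : HasDerivAt (fun u => ∫ θ in (0:ℝ)..u, k θ) (k s) s :=
    intervalIntegral.integral_hasDerivAt_right (intervalIntegrable hint hs.1.le hs.2.le)
      (hC1.continuousOn.stronglyMeasurableAtFilter isOpen_Ioo s hs)
      (hC1.continuousOn.continuousAt hnhds)
  have hk : HasDerivAt k (deriv k s) s :=
    ((hC1.differentiableOn one_ne_zero).differentiableAt hnhds).hasDerivAt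
  have hne : k s ≠ 0 := (hpos s hs).ne'
  refine (hK.div hk hne).congr_deriv ?_
  rw [sub_div, ← sq, div_self (pow_ne_zero 2 hne)]

end MemK

open MemK in
/-- For `k ∈ K_ℓ` with `ℓ ∈ (0,∞)`: `K/k → 0` and `K k'/k² → 1 - ℓ` as `s → 0⁺`;
moreover `0 < ℓ ≤ 1` if `k` is non-decreasing and `ℓ ≥ 1` if `k` is non-increasing. -/
theorem memK_basic_properties (ℓ μ : ℝ) (hℓ : 0 < ℓ) (hμ : 0 < μ)
    (k : ℝ → ℝ) (hk : memK ℓ μ k) :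
    Tendsto (fun s => (∫ θ in (0:ℝ)..s, k θ) / k s) (𝓝[>] (0:ℝ)) (𝓝 0) ∧
    Tendsto (fun s => (∫ θ in (0:ℝ)..s, k θ) * deriv k s / (k s) ^ 2)
      (𝓝[>] (0:ℝ)) (𝓝 (1 - ℓ)) ∧
    (MonotoneOn k (Ioo (0:ℝ) μ) → 0 < ℓ ∧ ℓ ≤ 1) ∧
    (AntitoneOn k (Ioo (0:ℝ) μ) → 1 ≤ ℓ) := by
  obtain ⟨hpos, hmon, hC1, hint, hder⟩ := hk
  have hIoo : Ioo 0 μ ∈ 𝓝[>] (0:ℝ) := Ioo_mem_nhdsGT hμ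
  have hg₀ := tendsto_integral_div_nhdsGT_zero hμ hpos hmon hint
  have hg_div : Tendsto (fun s => (∫ θ in (0:ℝ)..s, k θ) / k s / s) (𝓝[>] 0) (𝓝 ℓ) :=
    tendsto_div_self_nhdsGT_zero_of_tendsto_deriv
      (mem_of_superset hIoo fun s hs => (hasDerivAt_integral_div hpos hC1 hint hs).differentiableAt)
      hg₀ hder
  refine ⟨hg₀, ?_, fun hmono => ⟨hℓ, ?_⟩, fun hanti => ?_⟩
  · refine (hder.const_sub 1).congr' ?_
    filter_upwards [hIoo] with s hs
    rw [(hasDerivAt_integral_div hpos hC1 hint hs).deriv, sub_sub_cancel]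
  · refine le_of_tendsto hg_div ?_
    filter_upwards [hIoo] with s hs
    exact div_le_one_of_le₀ (integral_div_le_of_monotoneOn hpos hmono hint hs) hs.1.le
  · refine ge_of_tendsto hg_div ?_
    filter_upwards [hIoo] with s hs
    exact (one_le_div hs.1).2 (le_integral_div_of_antitoneOn hpos hanti hint hs)
end
end

section
/- Let ℓ ∈ (0,∞) and k ∈ K_ℓ, with K(s) = ∫₀ˢ k(θ) dθ. Then the function u ↦ k(1/u) belongs to NRV_{(ℓ−1)/ℓ} and the function u ↦ K(1/u) belongs to NRV_{−1/ℓ}; equivalently, K ∈ NRVZ_{1/ℓ} and k ∈ NRVZ_{(1−ℓ)/ℓ}. -/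
/-!
Write `g = K / k`. Since `g' → ℓ > 0`, `g` is increasing near `0` and has a limit `c ≥ 0`
there; `c > 0` is impossible, because then `(log K)' = 1 / g` would be bounded near `0`
while `K → 0`. So L'Hôpital gives `g(s) / s → ℓ`, i.e. `s k(s) / K(s) → 1 / ℓ`, and
`g' = 1 - g k' / k` turns this into `s k'(s) / k(s) → (1 - ℓ) / ℓ`.

A positive `C¹` function `f` whose index `s f'(s) / f(s)` tends to `σ` at `0⁺` is
normalized regularly varying at the origin: with `ψ(u) = -(1/u) f'(1/u) / f(1/u) → -σ`,
the function `F(u) = f(1/u)` solves `F' = F ψ / u`, so `F(u) = F(b) exp ∫_b^u ψ(t)/t dt`,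
and splitting `ψ = -σ + φ` gives the representation with `φ → 0`.
-/

open Filter MeasureTheory Set Topology

noncomputable section

/-- `f` is normalized regularly varying at infinity of index `ρ`:
`f(u) = M* · u^ρ · exp (∫_b^u φ(t)/t dt)` for `u ≥ b`, with `M* > 0`, `φ`
continuous on `[b,∞)` and `φ(u) → 0` at infinity. -/
def IsNRV (f : ℝ → ℝ) (ρ : ℝ) : Prop :=
  ∃ b : ℝ, 0 < b ∧ ∃ Mstar : ℝ, 0 < Mstar ∧ ∃ φ : ℝ → ℝ,
    ContinuousOn φ (Ici b) ∧ Tendsto φ atTop (𝓝 0) ∧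
    ∀ u, b ≤ u → f u = Mstar * u ^ ρ * Real.exp (∫ t in b..u, φ t / t)

/-- `f` is normalized regularly varying at the origin of index `ρ`:
`u ↦ f(1/u)` is normalized regularly varying at infinity of index `-ρ`. -/
def IsNRVZ (f : ℝ → ℝ) (ρ : ℝ) : Prop := IsNRV (fun u => f (1 / u)) (-ρ)

theorem eq_mul_exp_sub_of_hasDerivAt {f h H : ℝ → ℝ} {a b : ℝ} (hab : a ≤ b)
    (hf : ∀ x ∈ Icc a b, HasDerivAt f (f x * h x) x)
    (hH : ∀ x ∈ Icc a b, HasDerivAt H (h x) x) :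
    f b = f a * Real.exp (H b - H a) := by
  have hG : ∀ x ∈ Icc a b, HasDerivAt (fun x => f x * Real.exp (-H x)) 0 x := fun x hx => by
    refine ((hf x hx).mul (hH x hx).neg.exp).congr_deriv ?_
    simp only [Pi.neg_apply]
    ring
  have hconst := constant_of_has_deriv_right_zero
    (fun x hx => (hG x hx).continuousAt.continuousWithinAt)
    (fun x hx => (hG x (Ico_subset_Icc_self hx)).hasDerivWithinAt) b ⟨hab, le_rfl⟩
  simp only [Real.exp_neg] at hconst
  rw [Real.exp_sub]
  field_simp at hconst ⊢
  exact hconst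

theorem isNRV_of_hasDerivAt {f ψ : ℝ → ℝ} {ρ b : ℝ} (hb : 0 < b) (hfb : 0 < f b)
    (hψc : ContinuousOn ψ (Ici b)) (hψ : Tendsto ψ atTop (𝓝 ρ))
    (hf : ∀ u ∈ Ici b, HasDerivAt f (f u * ψ u / u) u) : IsNRV f ρ := by
  set φ : ℝ → ℝ := fun t => ψ (max t b) - ρ
  have hφ_eq : ∀ t ∈ Ici b, φ t = ψ t - ρ := fun t ht => by
    simp [φ, max_eq_left (mem_Ici.1 ht)]
  have hφc : Continuous φ := (hψc.comp_continuous (continuous_id.max continuous_const)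
    fun _ => mem_Ici.2 (le_max_right _ _)).sub continuous_const
  have hφ : Tendsto φ atTop (𝓝 0) := by
    refine (by simpa using hψ.sub_const ρ : Tendsto (fun t => ψ t - ρ) atTop (𝓝 0)).congr' ?_
    filter_upwards [eventually_ge_atTop b] with t ht using (hφ_eq t ht).symm
  have hcont : ContinuousOn (fun t => φ t / t) (Ioi 0) :=
    hφc.continuousOn.div continuousOn_id fun _ ht => ht.ne'
  have hH : ∀ x ∈ Ici b,
      HasDerivAt (fun x => ρ * Real.log x + ∫ t in b..x, φ t / t) (ψ x / x) x := by
    intro x hx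
    have hx0 : 0 < x := hb.trans_le hx
    have hsub : uIcc b x ⊆ Ioi 0 := by
      rw [uIcc_of_le hx]
      exact fun t ht => hb.trans_le ht.1
    have hint : HasDerivAt (fun x => ∫ t in b..x, φ t / t) (φ x / x) x :=
      intervalIntegral.integral_hasDerivAt_right ((hcont.mono hsub).intervalIntegrable)
        (hcont.stronglyMeasurableAtFilter isOpen_Ioi x hx0)
        (hcont.continuousAt (isOpen_Ioi.mem_nhds hx0))
    refine (((Real.hasDerivAt_log hx0.ne').const_mul ρ).add hint).congr_deriv ?_
    rw [hφ_eq x hx]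
    field_simp
    ring
  refine ⟨b, hb, f b * b ^ (-ρ), by positivity, φ, hφc.continuousOn, hφ, fun u hu => ?_⟩
  rw [eq_mul_exp_sub_of_hasDerivAt (f := f) hu
    (fun x hx => by simpa only [mul_div_assoc] using hf x hx.1) (fun x hx => hH x hx.1),
    Real.rpow_def_of_pos hb, Real.rpow_def_of_pos (hb.trans_le hu),
    intervalIntegral.integral_same, mul_assoc, mul_assoc, ← Real.exp_add, ← Real.exp_add]
  congr 2
  ring

theorem isNRV_comp_one_div {f f' : ℝ → ℝ} {μ σ : ℝ} (hμ : 0 < μ)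
    (hpos : ∀ s ∈ Ioo 0 μ, 0 < f s) (hf : ∀ s ∈ Ioo 0 μ, HasDerivAt f (f' s) s)
    (hf'c : ContinuousOn f' (Ioo 0 μ))
    (hσ : Tendsto (fun s => s * f' s / f s) (𝓝[>] 0) (𝓝 σ)) :
    IsNRV (fun u => f (1 / u)) (-σ) := by
  have hb : 0 < 2 / μ := by positivity
  have hmaps : MapsTo (fun u : ℝ => 1 / u) (Ici (2 / μ)) (Ioo 0 μ) := fun u hu => by
    have hu0 : 0 < u := hb.trans_le hu
    refine ⟨by positivity, ?_⟩
    rw [div_lt_iff₀ hu0]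
    rw [mem_Ici, div_le_iff₀ hμ] at hu
    linarith
  have hinv : ContinuousOn (fun u : ℝ => 1 / u) (Ici (2 / μ)) :=
    continuousOn_const.div continuousOn_id fun u hu => (hb.trans_le hu).ne'
  have hfc : ContinuousOn f (Ioo 0 μ) := fun s hs => (hf s hs).continuousAt.continuousWithinAt
  refine isNRV_of_hasDerivAt (ψ := fun u => -(1 / u * f' (1 / u) / f (1 / u))) hb
    (hpos _ (hmaps self_mem_Ici))
    (((hinv.mul (hf'c.comp hinv hmaps)).div (hfc.comp hinv hmaps)
      fun u hu => (hpos _ (hmaps hu)).ne').neg)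
    (by simpa [Function.comp_def, one_div] using (hσ.comp tendsto_inv_atTop_nhdsGT_zero).neg)
    fun u hu => ?_
  have hu0 : 0 < u := hb.trans_le hu
  have hfu := (hpos _ (hmaps hu)).ne'
  have hinv_deriv : HasDerivAt (fun u : ℝ => 1 / u) (-(u ^ 2)⁻¹) u := by
    simpa only [one_div] using hasDerivAt_inv hu0.ne'
  refine ((hf _ (hmaps hu)).comp u hinv_deriv).congr_deriv ?_
  field_simp

theorem not_tendsto_nhdsGT_zero_of_div_le {K k : ℝ → ℝ} {ε C : ℝ} (hε : 0 < ε)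
    (hpos : ∀ s ∈ Ioo 0 ε, 0 < K s) (hK : ∀ s ∈ Ioo 0 ε, HasDerivAt K (k s) s)
    (hle : ∀ s ∈ Ioo 0 ε, k s / K s ≤ C) : ¬Tendsto K (𝓝[>] 0) (𝓝 0) := by
  intro hK0
  have hd : ∀ s ∈ Ioo 0 ε,
      HasDerivAt (fun s => Real.log (K s) - C * s) (k s / K s - C) s := fun s hs => by
    refine (((hK s hs).log (hpos s hs).ne').sub ((hasDerivAt_id s).const_mul C)).congr_deriv ?_
    rw [mul_one]
  have hanti : AntitoneOn (fun s => Real.log (K s) - C * s) (Ioo 0 ε) :=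
    antitoneOn_of_deriv_nonpos (convex_Ioo 0 ε)
      (fun s hs => (hd s hs).continuousAt.continuousWithinAt)
      (fun s hs => (hd s (interior_subset hs)).differentiableAt.differentiableWithinAt)
      fun s hs => by
        rw [interior_Ioo] at hs
        rw [(hd s hs).deriv]
        linarith [hle s hs]
  set s₀ := ε / 2
  have hs₀ : s₀ ∈ Ioo 0 ε := ⟨half_pos hε, half_lt_self hε⟩
  set a := Real.log (K s₀) - C * s₀
  have hlow : ∀ s ∈ Ioo 0 s₀, Real.exp (a + C * s) ≤ K s := fun s hs => by
    have hsε : s ∈ Ioo 0 ε := ⟨hs.1, hs.2.trans hs₀.2⟩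
    rw [← Real.exp_log (hpos s hsε)]
    exact Real.exp_le_exp.2 (by linarith [hanti hsε hs₀ hs.2.le])
  have hlim : Tendsto (fun s => Real.exp (a + C * s)) (𝓝[>] 0) (𝓝 (Real.exp (a + C * 0))) :=
    ((by fun_prop : Continuous fun s => Real.exp (a + C * s)).tendsto 0).mono_left
      nhdsWithin_le_nhds
  exact (Real.exp_pos _).not_ge
    (le_of_tendsto_of_tendsto hlim hK0 (eventually_of_mem (Ioo_mem_nhdsGT hs₀.1) hlow))

theorem exists_tendsto_nhdsGT_zero_of_tendsto_deriv {g g' : ℝ → ℝ} {μ ℓ : ℝ} (hμ : 0 < μ)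
    (hℓ : 0 < ℓ) (hg : ∀ s ∈ Ioo 0 μ, HasDerivAt g (g' s) s) (hg' : Tendsto g' (𝓝[>] 0) (𝓝 ℓ))
    (hbdd : BddBelow (g '' Ioo 0 μ)) : ∃ c, Tendsto g (𝓝[>] 0) (𝓝 c) := by
  obtain ⟨ε, hε, hsub⟩ := mem_nhdsGT_iff_exists_Ioo_subset.1
    (Filter.Eventually.and (Ioo_mem_nhdsGT hμ) (hg'.eventually (eventually_gt_nhds hℓ)))
  have hmono : StrictMonoOn g (Ioo 0 ε) :=
    strictMonoOn_of_deriv_pos (convex_Ioo 0 ε)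
      (fun s hs => (hg s (hsub hs).1).continuousAt.continuousWithinAt) fun s hs => by
        rw [interior_Ioo] at hs
        rw [(hg s (hsub hs).1).deriv]
        exact (hsub hs).2
  exact ⟨_, hmono.monotoneOn.tendsto_nhdsWithin_Ioo_right (nonempty_Ioo.2 hε)
    (hbdd.mono (image_mono fun s hs => (hsub hs).1))⟩

theorem tendsto_div_div_self_nhdsGT_zero {K k g' : ℝ → ℝ} {μ ℓ : ℝ} (hμ : 0 < μ) (hℓ : 0 < ℓ)
    (hKpos : ∀ s ∈ Ioo 0 μ, 0 < K s) (hkpos : ∀ s ∈ Ioo 0 μ, 0 < k s)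
    (hK : ∀ s ∈ Ioo 0 μ, HasDerivAt K (k s) s) (hK0 : Tendsto K (𝓝[>] 0) (𝓝 0))
    (hg : ∀ s ∈ Ioo 0 μ, HasDerivAt (fun s => K s / k s) (g' s) s)
    (hg' : Tendsto g' (𝓝[>] 0) (𝓝 ℓ)) :
    Tendsto (fun s => K s / k s / s) (𝓝[>] 0) (𝓝 ℓ) := by
  have hgpos : ∀ s ∈ Ioo 0 μ, 0 < K s / k s := fun s hs => div_pos (hKpos s hs) (hkpos s hs)
  obtain ⟨c, hc⟩ := exists_tendsto_nhdsGT_zero_of_tendsto_deriv hμ hℓ hg hg'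
    ⟨0, by rintro _ ⟨s, hs, rfl⟩; exact (hgpos s hs).le⟩
  have hc0 : c = 0 := by
    have hc_nonneg : 0 ≤ c :=
      ge_of_tendsto hc (eventually_of_mem (Ioo_mem_nhdsGT hμ) fun s hs => (hgpos s hs).le)
    by_contra hne
    have hcpos : 0 < c := lt_of_le_of_ne hc_nonneg (Ne.symm hne)
    obtain ⟨ε, hε, hsub⟩ := mem_nhdsGT_iff_exists_Ioo_subset.1
      (Filter.Eventually.and (Ioo_mem_nhdsGT hμ)
        (hc.eventually (eventually_gt_nhds (half_lt_self hcpos))))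
    refine not_tendsto_nhdsGT_zero_of_div_le hε (C := 2 / c) (fun s hs => hKpos s (hsub hs).1)
      (fun s hs => hK s (hsub hs).1) (fun s hs => ?_) hK0
    obtain ⟨hsμ, hlt⟩ := hsub hs
    rw [div_le_div_iff₀ (hKpos s hsμ) hcpos]
    rw [lt_div_iff₀ (hkpos s hsμ)] at hlt
    linarith
  subst hc0
  exact HasDerivAt.lhopital_zero_right_on_Ioo hμ hg (fun s _ => hasDerivAt_id s)
    (fun _ _ => one_ne_zero) hc (tendsto_nhdsWithin_of_tendsto_nhds tendsto_id)
    (by simpa using hg')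

namespace memK

variable {ℓ μ : ℝ} {k : ℝ → ℝ}

theorem pos (hk : memK ℓ μ k) {s : ℝ} (hs : s ∈ Ioo 0 μ) : 0 < k s := hk.1 s hs

theorem continuousOn (hk : memK ℓ μ k) : ContinuousOn k (Ioo 0 μ) := hk.2.2.1.continuousOn

theorem tendsto_deriv_primitive_div (hk : memK ℓ μ k) :
    Tendsto (deriv fun s => (∫ θ in (0:ℝ)..s, k θ) / k s) (𝓝[>] 0) (𝓝 ℓ) :=
  hk.2.2.2.2

theorem intervalIntegrable (hk : memK ℓ μ k) {s : ℝ} (hs : s ∈ Ioo 0 μ) :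
    IntervalIntegrable k volume 0 s := by
  rw [intervalIntegrable_iff_integrableOn_Ioc_of_le hs.1.le]
  exact hk.2.2.2.1.mono_set fun θ hθ => ⟨hθ.1, hθ.2.trans_lt hs.2⟩

theorem hasDerivAt (hk : memK ℓ μ k) {s : ℝ} (hs : s ∈ Ioo 0 μ) :
    HasDerivAt k (deriv k s) s :=
  ((hk.2.2.1.differentiableOn one_ne_zero).differentiableAt (isOpen_Ioo.mem_nhds hs)).hasDerivAt

theorem continuousOn_deriv (hk : memK ℓ μ k) : ContinuousOn (deriv k) (Ioo 0 μ) :=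
  hk.2.2.1.continuousOn_deriv_of_isOpen isOpen_Ioo le_rfl

theorem hasDerivAt_primitive (hk : memK ℓ μ k) {s : ℝ} (hs : s ∈ Ioo 0 μ) :
    HasDerivAt (fun s => ∫ θ in (0:ℝ)..s, k θ) (k s) s :=
  intervalIntegral.integral_hasDerivAt_right (hk.intervalIntegrable hs)
    (hk.continuousOn.stronglyMeasurableAtFilter isOpen_Ioo s hs)
    (hk.continuousOn.continuousAt (isOpen_Ioo.mem_nhds hs))

theorem primitive_pos (hk : memK ℓ μ k) {s : ℝ} (hs : s ∈ Ioo 0 μ) :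
    0 < ∫ θ in (0:ℝ)..s, k θ :=
  intervalIntegral.intervalIntegral_pos_of_pos_on (hk.intervalIntegrable hs)
    (fun _ hθ => hk.pos ⟨hθ.1, hθ.2.trans hs.2⟩) hs.1

theorem tendsto_primitive (hk : memK ℓ μ k) (hμ : 0 < μ) :
    Tendsto (fun s => ∫ θ in (0:ℝ)..s, k θ) (𝓝[>] 0) (𝓝 0) := by
  have hs : μ / 2 ∈ Ioo 0 μ := ⟨half_pos hμ, half_lt_self hμ⟩
  have hcont := intervalIntegral.continuousOn_primitive_interval' (hk.intervalIntegrable hs)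
    left_mem_uIcc 0 left_mem_uIcc
  rw [uIcc_of_le hs.1.le] at hcont
  simpa [← nhdsWithin_Ioc_eq_nhdsGT hs.1] using
    hcont.tendsto.mono_left (nhdsWithin_mono _ Ioc_subset_Icc_self)

theorem hasDerivAt_primitive_div (hk : memK ℓ μ k) {s : ℝ} (hs : s ∈ Ioo 0 μ) :
    HasDerivAt (fun s => (∫ θ in (0:ℝ)..s, k θ) / k s)
      ((k s * k s - (∫ θ in (0:ℝ)..s, k θ) * deriv k s) / k s ^ 2) s :=
  (hk.hasDerivAt_primitive hs).div (hk.hasDerivAt hs) (hk.pos hs).ne'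

theorem tendsto_primitive_div_div_self (hk : memK ℓ μ k) (hℓ : 0 < ℓ) (hμ : 0 < μ) :
    Tendsto (fun s => (∫ θ in (0:ℝ)..s, k θ) / k s / s) (𝓝[>] 0) (𝓝 ℓ) :=
  tendsto_div_div_self_nhdsGT_zero hμ hℓ (fun _ => hk.primitive_pos) (fun _ => hk.pos)
    (fun _ => hk.hasDerivAt_primitive) (hk.tendsto_primitive hμ)
    (fun _ hs => (hk.hasDerivAt_primitive_div hs).differentiableAt.hasDerivAt)
    hk.tendsto_deriv_primitive_div

theorem tendsto_mul_div_primitive (hk : memK ℓ μ k) (hℓ : 0 < ℓ) (hμ : 0 < μ) :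
    Tendsto (fun s => s * k s / ∫ θ in (0:ℝ)..s, k θ) (𝓝[>] 0) (𝓝 (1 / ℓ)) := by
  rw [one_div]
  refine ((hk.tendsto_primitive_div_div_self hℓ hμ).inv₀ hℓ.ne').congr fun s => ?_
  rw [inv_div, div_div_eq_mul_div]

theorem tendsto_mul_deriv_div (hk : memK ℓ μ k) (hℓ : 0 < ℓ) (hμ : 0 < μ) :
    Tendsto (fun s => s * deriv k s / k s) (𝓝[>] 0) (𝓝 ((1 - ℓ) / ℓ)) := by
  rw [div_eq_mul_one_div, mul_comm]
  refine ((hk.tendsto_mul_div_primitive hℓ hμ).mul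
    (tendsto_const_nhds.sub hk.tendsto_deriv_primitive_div)).congr' ?_
  filter_upwards [Ioo_mem_nhdsGT hμ] with s hs
  have hK := (hk.primitive_pos hs).ne'
  have hks := (hk.pos hs).ne'
  rw [(hk.hasDerivAt_primitive_div hs).deriv]
  field_simp
  ring

theorem isNRVZ_primitive (hk : memK ℓ μ k) (hℓ : 0 < ℓ) (hμ : 0 < μ) :
    IsNRVZ (fun s => ∫ θ in (0:ℝ)..s, k θ) (1 / ℓ) :=
  isNRV_comp_one_div hμ (fun _ => hk.primitive_pos) (fun _ => hk.hasDerivAt_primitive)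
    hk.continuousOn (hk.tendsto_mul_div_primitive hℓ hμ)

theorem isNRVZ (hk : memK ℓ μ k) (hℓ : 0 < ℓ) (hμ : 0 < μ) : IsNRVZ k ((1 - ℓ) / ℓ) :=
  isNRV_comp_one_div hμ (fun _ => hk.pos) (fun _ => hk.hasDerivAt) hk.continuousOn_deriv
    (hk.tendsto_mul_deriv_div hℓ hμ)

end memK

/-- For `k ∈ K_ℓ` with `ℓ > 0`: `u ↦ k(1/u) ∈ NRV_{(ℓ-1)/ℓ}` and
`u ↦ K(1/u) ∈ NRV_{-1/ℓ}`; equivalently, `K ∈ NRVZ_{1/ℓ}` and `k ∈ NRVZ_{(1-ℓ)/ℓ}`. -/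
theorem memK_normalized_regular_variation (ℓ μ : ℝ) (hℓ : 0 < ℓ) (hμ : 0 < μ)
    (k : ℝ → ℝ) (hk : memK ℓ μ k) :
    IsNRV (fun u => k (1 / u)) ((ℓ - 1) / ℓ) ∧
    IsNRV (fun u => ∫ θ in (0:ℝ)..(1 / u), k θ) (-(1 / ℓ)) ∧
    IsNRVZ (fun s => ∫ θ in (0:ℝ)..s, k θ) (1 / ℓ) ∧
    IsNRVZ k ((1 - ℓ) / ℓ) := by
  have hkZ := hk.isNRVZ hℓ hμ
  refine ⟨?_, hk.isNRVZ_primitive hℓ hμ, hk.isNRVZ_primitive hℓ hμ, hkZ⟩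
  rwa [IsNRVZ, ← neg_div, neg_sub] at hkZ
end
end

section
/- Let p > 1 and let f ∈ C¹([0,∞)) satisfy f(0) = 0 and f'(u) > 0 for u > 0, and assume f ∈ RV_ρ with ρ > p−1. Let F(t) = ∫₀ᵗ f(s) ds, p' = p/(p−1), and let φ : (0,∞) → (0,∞) be defined by ∫_{φ(t)}^∞ ds/(p'F(s))^{1/p} = t. Then: (i) −φ'(t) = (p'F(φ(t)))^{1/p} and |φ'(t)|^{p−2}·φ''(t) = (p'/p)·f(φ(t)) for all t > 0; (ii) −φ' ∈ NRVZ_{−r} and φ ∈ NRVZ_{1−r}, where r = (ρ+1)/(ρ+1−p) > 1. -/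
open Filter MeasureTheory Set Topology

noncomputable section

/-!
`φ` is the inverse of the decreasing function `ψ(a) = ∫_a^∞ (p'F)^{-1/p}`, so
`φ' = 1 / ψ'(φ) = -(p'F(φ))^{1/p}`, and differentiating once more gives the second identity of (i).

For (ii), a positive `R` with `t R'(t) / R(t) → σ` as `t → 0+` lies in `NRVZ_σ`: its normalized
representation has `t R'(t) / R(t)` as index function. Writing `a = φ(t)`, so that `t = ψ(a)`,
both `t φ'(t) / φ(t)` and `t φ''(t) / φ'(t)` are expressed through `ψ(a) (p'F(a))^{1/p} / a` and
`a f(a) / F(a)`. Karamata's theorem gives `a f(a) / F(a) → ρ + 1`, and l'Hôpital's rule applied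
to `ψ(a) / (a (p'F(a))^{-1/p})` then gives `ψ(a) (p'F(a))^{1/p} / a → p / (ρ + 1 - p) = r - 1`.
-/

open Real

theorem isNRV_of_hasDerivAt_s3 {G e : ℝ → ℝ} {b ρ : ℝ} (hb : 0 < b)
    (hGpos : ∀ u, b ≤ u → 0 < G u) (hG : ∀ u, b ≤ u → HasDerivAt G (e u * G u / u) u)
    (he : ContinuousOn e (Ici b)) (hlim : Tendsto e atTop (𝓝 ρ)) : IsNRV G ρ := by
  refine ⟨b, hb, G b / b ^ ρ, div_pos (hGpos b le_rfl) (rpow_pos_of_pos hb ρ), fun u => e u - ρ,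
    he.sub continuousOn_const, by simpa using hlim.sub_const ρ, fun u hu => ?_⟩
  have hsub : uIcc b u ⊆ Ici b := by rw [uIcc_of_le hu]; exact Icc_subset_Ici_self
  have hpos : ∀ x ∈ uIcc b u, 0 < x := fun x hx => hb.trans_le (hsub hx)
  have hint : ∫ t in b..u, (e t - ρ) / t
      = (log (G u) - ρ * log u) - (log (G b) - ρ * log b) := by
    refine intervalIntegral.integral_eq_sub_of_hasDerivAt
      (f := fun x => log (G x) - ρ * log x) (fun x hx => ?_) ?_
    · have hx0 := (hpos x hx).ne'
      have hGx := (hGpos x (hsub hx)).ne'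
      refine (((hG x (hsub hx)).log hGx).sub ((hasDerivAt_log hx0).const_mul ρ)).congr_deriv ?_
      field_simp
    · exact ContinuousOn.intervalIntegrable (((he.mono hsub).sub continuousOn_const).div
        continuousOn_id fun x hx => (hpos x hx).ne')
  have hu0 : 0 < u := hb.trans_le hu
  rw [hint, exp_sub, exp_sub, exp_sub, exp_log (hGpos u hu), exp_log (hGpos b le_rfl),
    mul_comm ρ, mul_comm ρ, ← rpow_def_of_pos hu0, ← rpow_def_of_pos hb]
  have huρ := (rpow_pos_of_pos hu0 ρ).ne'
  have hGb := (hGpos b le_rfl).ne'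
  field_simp

theorem isNRVZ_of_hasDerivAt {R e : ℝ → ℝ} {σ : ℝ}
    (hRpos : ∀ t, 0 < t → 0 < R t) (hR : ∀ t, 0 < t → HasDerivAt R (e t * R t / t) t)
    (he : ContinuousOn e (Ioi 0)) (hlim : Tendsto e (𝓝[>] 0) (𝓝 σ)) : IsNRVZ R σ := by
  have hinv : Tendsto (fun u : ℝ => 1 / u) atTop (𝓝[>] 0) := by
    simpa only [one_div] using tendsto_inv_atTop_nhdsGT_zero
  refine isNRV_of_hasDerivAt_s3 (e := fun u => -e (1 / u)) one_pos
    (fun u hu => hRpos _ (by positivity)) (fun u hu => ?_) ?_ (by simpa using (hlim.comp hinv).neg)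
  · have hu0 : 0 < u := one_pos.trans_le hu
    have hinner : HasDerivAt (fun x : ℝ => 1 / x) (-(1 / u ^ 2)) u := by
      simpa [one_div] using hasDerivAt_inv hu0.ne'
    refine ((hR _ (by positivity)).comp u hinner).congr_deriv ?_
    field_simp
  · have hpos : ∀ u ∈ Ici (1 : ℝ), 0 < u := fun u hu => one_pos.trans_le hu
    exact (he.comp (continuousOn_const.div continuousOn_id fun u hu => (hpos u hu).ne')
      fun u hu => one_div_pos.2 (hpos u hu)).neg

theorem IsRV.tendsto_mul_div_intervalIntegral {f : ℝ → ℝ} {ρ : ℝ} (hRV : IsRV f ρ)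
    (hρ : -1 < ρ) (hf : ContinuousOn f (Ioi 0)) (hmono : MonotoneOn f (Ioi 0))
    (hpos : ∀ a, 0 < a → 0 < f a) :
    Tendsto (fun a => a * f a / ∫ s in (0:ℝ)..a, f s) atTop (𝓝 (ρ + 1)) := by
  set μ : Measure ℝ := volume.restrict (Ioc 0 1)
  have hmem : ∀ {a s : ℝ}, 0 < a → s ∈ Ioc (0:ℝ) 1 → a * s ∈ Ioi 0 :=
    fun ha hs => mul_pos ha hs.1
  -- Dominated convergence in `∫₀¹ f(as)/f(a) ds`, with the bound `1` from monotonicity.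
  have hDCT : Tendsto (fun a => ∫ s, f (a * s) / f a ∂μ) atTop (𝓝 (∫ s, s ^ ρ ∂μ)) := by
    refine tendsto_integral_filter_of_dominated_convergence (fun _ => 1) ?_ ?_
      (integrable_const 1) ?_
    · filter_upwards [eventually_gt_atTop 0] with a ha
      exact ((hf.comp (continuous_const_mul a).continuousOn fun s hs => hmem ha hs).div_const
        _).aestronglyMeasurable measurableSet_Ioc
    · filter_upwards [eventually_gt_atTop 0] with a ha
      refine (ae_restrict_iff' measurableSet_Ioc).2 (ae_of_all _ fun s hs => ?_)
      rw [Real.norm_of_nonneg (div_nonneg (hpos _ (hmem ha hs)).le (hpos a ha).le)]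
      exact div_le_one_of_le₀ (hmono (hmem ha hs) ha (mul_le_of_le_one_right ha.le hs.2))
        (hpos a ha).le
    · exact (ae_restrict_iff' measurableSet_Ioc).2 (ae_of_all _ fun s hs =>
        (hRV s hs.1).congr fun u => by rw [mul_comm])
  have hval : ∫ s, s ^ ρ ∂μ = (ρ + 1)⁻¹ := by
    rw [← intervalIntegral.integral_of_le zero_le_one, integral_rpow (Or.inl hρ),
      one_rpow, zero_rpow (by linarith)]
    ring
  rw [hval] at hDCT
  have hinv := hDCT.inv₀ (inv_ne_zero (by linarith))
  rw [inv_inv] at hinv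
  refine hinv.congr' ?_
  filter_upwards [eventually_gt_atTop 0] with a ha
  rw [integral_div, ← intervalIntegral.integral_of_le zero_le_one,
    intervalIntegral.integral_comp_mul_left (fun x => f x) ha.ne', mul_zero, mul_one, smul_eq_mul]
  have hfa := (hpos a ha).ne'
  field_simp

theorem tendsto_mul_zero_of_tendsto_mul_deriv_div {g g' : ℝ → ℝ} {κ : ℝ} (hκ : 1 < κ)
    (hg : ∀ a, 0 < a → HasDerivAt g (g' a) a) (hgpos : ∀ a, 0 < a → 0 < g a)
    (hlim : Tendsto (fun a => a * g' a / g a) atTop (𝓝 (-κ))) :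
    Tendsto (fun a => a * g a) atTop (𝓝 0) := by
  obtain ⟨θ, hθ1, hθκ⟩ : ∃ θ, 1 < θ ∧ θ < κ := ⟨(1 + κ) / 2, by linarith, by linarith⟩
  obtain ⟨a₀, ha₀⟩ := eventually_atTop.1 ((hlim.eventually (gt_mem_nhds
    (neg_lt_neg hθκ))).and (eventually_gt_atTop 0))
  -- `a ^ θ * g a` decreases on `[a₀, ∞)`, so `a * g a = a ^ (1 - θ) * (a ^ θ * g a) → 0`.
  have hanti : AntitoneOn (fun a => a ^ θ * g a) (Ici a₀) := by
    have hd : ∀ a, a₀ ≤ a → HasDerivAt (fun a => a ^ θ * g a)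
        (a ^ (θ - 1) * g a * (θ + a * g' a / g a)) a := by
      intro a ha
      have ha0 := (ha₀ a ha).2
      refine ((Real.hasDerivAt_rpow_const (Or.inl ha0.ne')).mul (hg a ha0)).congr_deriv ?_
      rw [rpow_sub_one ha0.ne']
      field_simp [(hgpos a ha0).ne']
    refine antitoneOn_of_hasDerivWithinAt_nonpos (convex_Ici a₀)
      (f' := fun a => a ^ (θ - 1) * g a * (θ + a * g' a / g a))
      (fun a ha => (hd a ha).continuousAt.continuousWithinAt) (fun a ha => ?_) (fun a ha => ?_)
    · rw [interior_Ici] at ha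
      exact (hd a (le_of_lt ha)).hasDerivWithinAt
    · rw [interior_Ici] at ha
      have ha0 := (ha₀ a ha.le).2
      exact mul_nonpos_of_nonneg_of_nonpos
        (mul_nonneg (rpow_nonneg ha0.le _) (hgpos a ha0).le) (by linarith [(ha₀ a ha.le).1])
  have hbound : Tendsto (fun a => a ^ (-(θ - 1)) * (a₀ ^ θ * g a₀)) atTop (𝓝 0) := by
    simpa using (tendsto_rpow_neg_atTop (by linarith : 0 < θ - 1)).mul_const (a₀ ^ θ * g a₀)
  refine tendsto_of_tendsto_of_tendsto_of_le_of_le' tendsto_const_nhds hbound ?_ ?_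
  · filter_upwards [eventually_gt_atTop 0] with a ha
    exact (mul_pos ha (hgpos a ha)).le
  · filter_upwards [eventually_ge_atTop a₀, eventually_gt_atTop 0] with a ha ha0
    calc a * g a = a ^ (-(θ - 1)) * (a ^ θ * g a) := by
          rw [← mul_assoc, ← rpow_add ha0, show -(θ - 1) + θ = 1 by ring, rpow_one]
      _ ≤ a ^ (-(θ - 1)) * (a₀ ^ θ * g a₀) :=
          mul_le_mul_of_nonneg_left (hanti self_mem_Ici ha ha) (rpow_nonneg ha0.le _)

theorem hasDerivAt_integral_Ioi {g : ℝ → ℝ} {a b : ℝ} (hint : IntegrableOn g (Ioi b))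
    (hba : b < a) (hg : ContinuousAt g a) :
    HasDerivAt (fun x => ∫ s in Ioi x, g s) (-g a) a := by
  have hprim : HasDerivAt (fun x => ∫ s in x..a + 1, g s) (-g a) a :=
    intervalIntegral.integral_hasDerivAt_left
      ((intervalIntegrable_iff_integrableOn_Ioc_of_le (by linarith)).2
        (hint.mono_set (Ioc_subset_Ioi_self.trans (Ioi_subset_Ioi hba.le))))
      (AEStronglyMeasurable.stronglyMeasurableAtFilter_of_mem hint.aestronglyMeasurable
        (Ioi_mem_nhds hba)) hg
  refine (hprim.add_const (∫ s in Ioi (a + 1), g s)).congr_of_eventuallyEq ?_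
  filter_upwards [Ioi_mem_nhds hba] with x hx
  exact (intervalIntegral.integral_interval_add_Ioi (hint.mono_set (Ioi_subset_Ioi hx.le))
    (hint.mono_set (Ioi_subset_Ioi (by linarith)))).symm

theorem tendsto_integral_Ioi_div_mul {g g' : ℝ → ℝ} {κ : ℝ} (hκ : 1 < κ)
    (hg : ∀ a, 0 < a → HasDerivAt g (g' a) a) (hgpos : ∀ a, 0 < a → 0 < g a)
    (hint : ∀ a, 0 < a → IntegrableOn g (Ioi a))
    (hlim : Tendsto (fun a => a * g' a / g a) atTop (𝓝 (-κ))) :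
    Tendsto (fun a => (∫ s in Ioi a, g s) / (a * g a)) atTop (𝓝 (κ - 1)⁻¹) := by
  -- The ratio of derivatives is `-g / (g + a g') = -(1 + a g' / g)⁻¹`.
  have hratio : Tendsto (fun a => (-(1 + a * g' a / g a))⁻¹) atTop (𝓝 (-(1 + -κ))⁻¹) :=
    (tendsto_const_nhds.add hlim).neg.inv₀ (by linarith)
  rw [neg_add, neg_neg, neg_add_eq_sub] at hratio
  refine HasDerivAt.lhopital_zero_atTop (f' := fun a => -g a) (g' := fun a => g a + a * g' a)
    ?_ ?_ ?_ (tendsto_integral_Ioi_zero tendsto_id)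
    (tendsto_mul_zero_of_tendsto_mul_deriv_div hκ hg hgpos hlim) (hratio.congr' ?_)
  · filter_upwards [eventually_gt_atTop 1] with a ha
    exact hasDerivAt_integral_Ioi (hint 1 one_pos) ha (hg a (by linarith)).continuousAt
  · filter_upwards [eventually_gt_atTop 0] with a ha
    exact ((hasDerivAt_id' a).mul (hg a ha)).congr_deriv (by rw [one_mul])
  · filter_upwards [eventually_gt_atTop 0, hlim.eventually (gt_mem_nhds (by linarith : -κ < -1))]
      with a ha ha'
    rw [div_lt_iff₀ (hgpos a ha)] at ha'
    linarith
  · filter_upwards [eventually_gt_atTop 0] with a ha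
    have hga := (hgpos a ha).ne'
    field_simp

section TailIntegralInverse

variable {g φ : ℝ → ℝ}

theorem integrableOn_Ioi_of_integral_ne_zero (hg : ContinuousOn g (Ioi 0)) {a b : ℝ}
    (ha : 0 < a) (hb : ∫ s in Ioi b, g s ≠ 0) : IntegrableOn g (Ioi a) := by
  have hb' : IntegrableOn g (Ioi b) := by
    by_contra h
    exact hb (integral_undef h)
  rw [← Ioc_union_Ioi_eq_Ioi (le_max_left a b)]
  exact (((hg.mono fun x hx => ha.trans_le hx.1).integrableOn_Icc).mono_set
    Ioc_subset_Icc_self).union (hb'.mono_set (Ioi_subset_Ioi (le_max_right a b)))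

theorem strictAntiOn_integral_Ioi (hg : ContinuousOn g (Ioi 0))
    (hgpos : ∀ a, 0 < a → 0 < g a) (hint : ∀ a, 0 < a → IntegrableOn g (Ioi a)) :
    StrictAntiOn (fun a => ∫ s in Ioi a, g s) (Ioi 0) := by
  have hd : ∀ a ∈ Ioi (0 : ℝ), HasDerivAt (fun a => ∫ s in Ioi a, g s) (-g a) a :=
    fun a ha => hasDerivAt_integral_Ioi (hint (a / 2) (half_pos ha)) (half_lt_self ha)
      (hg.continuousAt (Ioi_mem_nhds ha))
  refine strictAntiOn_of_hasDerivWithinAt_neg (convex_Ioi 0) (f' := fun a => -g a)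
    (fun a ha => (hd a ha).continuousAt.continuousWithinAt) (fun a ha => ?_) (fun a ha => ?_)
  · rw [interior_Ioi] at ha ⊢
    exact (hd a ha).hasDerivWithinAt
  · rw [interior_Ioi] at ha
    exact neg_neg_of_pos (hgpos a ha)

theorem integral_Ioi_pos (hg : ContinuousOn g (Ioi 0))
    (hgpos : ∀ a, 0 < a → 0 < g a) (hint : ∀ a, 0 < a → IntegrableOn g (Ioi a)) {a : ℝ}
    (ha : 0 < a) : 0 < ∫ s in Ioi a, g s :=
  (setIntegral_nonneg measurableSet_Ioi fun x (hx : a + 1 < x) =>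
    (hgpos x (by linarith)).le).trans_lt (strictAntiOn_integral_Ioi hg hgpos hint ha
      (show a + 1 ∈ Ioi (0 : ℝ) from mem_Ioi.2 (by linarith)) (lt_add_one a))

theorem antitoneOn_of_integral_Ioi_eq (hg : ContinuousOn g (Ioi 0))
    (hgpos : ∀ a, 0 < a → 0 < g a) (hint : ∀ a, 0 < a → IntegrableOn g (Ioi a))
    (hφpos : ∀ t, 0 < t → 0 < φ t) (hφ : ∀ t, 0 < t → ∫ s in Ioi (φ t), g s = t) :
    AntitoneOn φ (Ioi 0) :=
  Function.antitoneOn_of_rightInvOn_of_mapsTo (strictAntiOn_integral_Ioi hg hgpos hint).antitoneOn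
    hφ hφpos

theorem apply_integral_Ioi_of_integral_Ioi_eq (hg : ContinuousOn g (Ioi 0))
    (hgpos : ∀ a, 0 < a → 0 < g a) (hint : ∀ a, 0 < a → IntegrableOn g (Ioi a))
    (hφpos : ∀ t, 0 < t → 0 < φ t) (hφ : ∀ t, 0 < t → ∫ s in Ioi (φ t), g s = t) {a : ℝ}
    (ha : 0 < a) : φ (∫ s in Ioi a, g s) = a := by
  have hψ := integral_Ioi_pos hg hgpos hint ha
  exact (strictAntiOn_integral_Ioi hg hgpos hint).injOn (hφpos _ hψ) ha (hφ _ hψ)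

theorem tendsto_nhdsGT_atTop_of_integral_Ioi_eq (hg : ContinuousOn g (Ioi 0))
    (hgpos : ∀ a, 0 < a → 0 < g a) (hint : ∀ a, 0 < a → IntegrableOn g (Ioi a))
    (hφpos : ∀ t, 0 < t → 0 < φ t) (hφ : ∀ t, 0 < t → ∫ s in Ioi (φ t), g s = t) :
    Tendsto φ (𝓝[>] 0) atTop := by
  refine tendsto_atTop.2 fun M => ?_
  have hM : 0 < max M 1 := lt_max_of_lt_right one_pos
  have hψ := integral_Ioi_pos hg hgpos hint hM
  filter_upwards [Ioc_mem_nhdsGT hψ] with t ht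
  calc M ≤ max M 1 := le_max_left M 1
    _ = φ (∫ s in Ioi (max M 1), g s) :=
        (apply_integral_Ioi_of_integral_Ioi_eq hg hgpos hint hφpos hφ hM).symm
    _ ≤ φ t := antitoneOn_of_integral_Ioi_eq hg hgpos hint hφpos hφ ht.1 hψ ht.2

theorem hasDerivAt_of_integral_Ioi_eq (hg : ContinuousOn g (Ioi 0))
    (hgpos : ∀ a, 0 < a → 0 < g a) (hint : ∀ a, 0 < a → IntegrableOn g (Ioi a))
    (hφpos : ∀ t, 0 < t → 0 < φ t) (hφ : ∀ t, 0 < t → ∫ s in Ioi (φ t), g s = t) {t : ℝ}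
    (ht : 0 < t) : HasDerivAt φ (-(g (φ t))⁻¹) t := by
  have hφt := hφpos t ht
  -- `φ` is antitone and its image contains the neighbourhood `(0, ∞)` of `φ t`.
  have hcont : ContinuousAt φ t := by
    refine continuousAt_of_monotoneOn_of_image_mem_nhds (β := ℝᵒᵈ)
      (antitoneOn_of_integral_Ioi_eq hg hgpos hint hφpos hφ) (Ioi_mem_nhds ht)
      (show φ '' Ioi 0 ∈ 𝓝 (φ t) from mem_of_superset (Ioi_mem_nhds hφt)
        fun a (ha : 0 < a) => ⟨_, integral_Ioi_pos hg hgpos hint ha,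
          apply_integral_Ioi_of_integral_Ioi_eq hg hgpos hint hφpos hφ ha⟩)
  rw [← inv_neg]
  exact HasDerivAt.of_local_left_inverse hcont
    (hasDerivAt_integral_Ioi (hint _ (half_pos hφt)) (half_lt_self hφt)
      (hg.continuousAt (Ioi_mem_nhds hφt)))
    (neg_ne_zero.2 (hgpos _ hφt).ne') (eventually_nhds_iff.2 ⟨Ioi 0, hφ, isOpen_Ioi, ht⟩)

end TailIntegralInverse

section Profile

variable {G G' φ : ℝ → ℝ} {p : ℝ}

theorem continuousOn_rpow_of_hasDerivAt (hG : ∀ a, 0 < a → HasDerivAt G (G' a) a)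
    (hGpos : ∀ a, 0 < a → 0 < G a) (q : ℝ) : ContinuousOn (fun s => G s ^ q) (Ioi 0) :=
  fun a ha => ((hG a ha).continuousAt.rpow_const (Or.inl (hGpos a ha).ne')).continuousWithinAt

theorem integrableOn_Ioi_of_integral_Ioi_rpow_eq (hG : ∀ a, 0 < a → HasDerivAt G (G' a) a)
    (hGpos : ∀ a, 0 < a → 0 < G a) (hφ : ∀ t, 0 < t → ∫ s in Ioi (φ t), G s ^ (-(1 / p)) = t)
    {a : ℝ} (ha : 0 < a) : IntegrableOn (fun s => G s ^ (-(1 / p))) (Ioi a) :=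
  integrableOn_Ioi_of_integral_ne_zero (continuousOn_rpow_of_hasDerivAt hG hGpos _) ha
    (by rw [hφ 1 one_pos]; exact one_ne_zero)

theorem hasDerivAt_of_integral_Ioi_rpow_eq (hG : ∀ a, 0 < a → HasDerivAt G (G' a) a)
    (hGpos : ∀ a, 0 < a → 0 < G a) (hφpos : ∀ t, 0 < t → 0 < φ t)
    (hφ : ∀ t, 0 < t → ∫ s in Ioi (φ t), G s ^ (-(1 / p)) = t) {t : ℝ} (ht : 0 < t) :
    HasDerivAt φ (-(G (φ t) ^ (1 / p))) t := by
  have h := hasDerivAt_of_integral_Ioi_eq (continuousOn_rpow_of_hasDerivAt hG hGpos _)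
    (fun a ha => rpow_pos_of_pos (hGpos a ha) _)
    (fun _ => integrableOn_Ioi_of_integral_Ioi_rpow_eq hG hGpos hφ) hφpos hφ ht
  rwa [rpow_neg (hGpos _ (hφpos t ht)).le, inv_inv] at h

theorem tendsto_nhdsGT_atTop_of_integral_Ioi_rpow_eq (hG : ∀ a, 0 < a → HasDerivAt G (G' a) a)
    (hGpos : ∀ a, 0 < a → 0 < G a) (hφpos : ∀ t, 0 < t → 0 < φ t)
    (hφ : ∀ t, 0 < t → ∫ s in Ioi (φ t), G s ^ (-(1 / p)) = t) : Tendsto φ (𝓝[>] 0) atTop :=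
  tendsto_nhdsGT_atTop_of_integral_Ioi_eq (continuousOn_rpow_of_hasDerivAt hG hGpos _)
    (fun a ha => rpow_pos_of_pos (hGpos a ha) _)
    (fun _ => integrableOn_Ioi_of_integral_Ioi_rpow_eq hG hGpos hφ) hφpos hφ

theorem abs_deriv_rpow_mul_deriv_deriv_of_integral_Ioi_rpow_eq (hp : p ≠ 0)
    (hG : ∀ a, 0 < a → HasDerivAt G (G' a) a) (hGpos : ∀ a, 0 < a → 0 < G a)
    (hφpos : ∀ t, 0 < t → 0 < φ t) (hφ : ∀ t, 0 < t → ∫ s in Ioi (φ t), G s ^ (-(1 / p)) = t)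
    {t : ℝ} (ht : 0 < t) : |deriv φ t| ^ (p - 2) * deriv (deriv φ) t = G' (φ t) / p := by
  have hφ' := fun s (hs : 0 < s) => hasDerivAt_of_integral_Ioi_rpow_eq hG hGpos hφpos hφ hs
  have hx := hGpos _ (hφpos t ht)
  have hderiv : deriv φ =ᶠ[𝓝 t] fun s => -(G (φ s) ^ (1 / p)) :=
    eventually_nhds_iff.2 ⟨Ioi 0, fun s hs => (hφ' s hs).deriv, isOpen_Ioi, ht⟩
  have hφ'' : HasDerivAt (fun s => -(G (φ s) ^ (1 / p)))
      (-(G' (φ t) * -(G (φ t) ^ (1 / p)) * (1 / p) * G (φ t) ^ (1 / p - 1))) t :=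
    (((hG _ (hφpos t ht)).comp t (hφ' t ht)).rpow_const (Or.inl hx.ne')).neg
  rw [hderiv.deriv_eq, hφ''.deriv, (hφ' t ht).deriv, abs_neg,
    abs_of_pos (rpow_pos_of_pos hx _), ← rpow_mul hx.le]
  have hexp : G (φ t) ^ (1 / p * (p - 2)) * (G (φ t) ^ (1 / p - 1) * G (φ t) ^ (1 / p)) = 1 := by
    rw [← rpow_add hx, ← rpow_add hx, show 1 / p * (p - 2) + (1 / p - 1 + 1 / p) = 0 by
      field_simp; ring, rpow_zero]
  linear_combination (G' (φ t) / p) * hexp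

theorem tendsto_integral_Ioi_rpow_mul_rpow_div {σ : ℝ} (hp : 0 < p) (hσ : p < σ)
    (hG : ∀ a, 0 < a → HasDerivAt G (G' a) a) (hGpos : ∀ a, 0 < a → 0 < G a)
    (hint : ∀ a, 0 < a → IntegrableOn (fun s => G s ^ (-(1 / p))) (Ioi a))
    (hlim : Tendsto (fun a => a * G' a / G a) atTop (𝓝 σ)) :
    Tendsto (fun a => (∫ s in Ioi a, G s ^ (-(1 / p))) * G a ^ (1 / p) / a) atTop
      (𝓝 (p / (σ - p))) := by
  have hlim' : Tendsto (fun a => a * (G' a * -(1 / p) * G a ^ (-(1 / p) - 1)) / G a ^ (-(1 / p)))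
      atTop (𝓝 (-(σ / p))) := by
    have h := hlim.const_mul (-(1 / p))
    rw [show -(1 / p) * σ = -(σ / p) by ring] at h
    refine h.congr' ?_
    filter_upwards [eventually_gt_atTop 0] with a ha
    have hGa := hGpos a ha
    rw [rpow_sub_one hGa.ne']
    field_simp [(rpow_pos_of_pos hGa (-(1 / p))).ne']
  have h := tendsto_integral_Ioi_div_mul ((one_lt_div hp).2 hσ)
    (fun a ha => (hG a ha).rpow_const (Or.inl (hGpos a ha).ne')) (fun a ha =>
      rpow_pos_of_pos (hGpos a ha) _) hint hlim'
  rw [show (σ / p - 1)⁻¹ = p / (σ - p) by field_simp [(sub_pos.2 hσ).ne']] at h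
  refine h.congr' ?_
  filter_upwards [eventually_gt_atTop 0] with a ha
  rw [rpow_neg (hGpos a ha).le]
  field_simp

theorem tendsto_mul_rpow_div_of_integral_Ioi_rpow_eq {σ : ℝ} (hp : 0 < p) (hσ : p < σ)
    (hG : ∀ a, 0 < a → HasDerivAt G (G' a) a) (hGpos : ∀ a, 0 < a → 0 < G a)
    (hφpos : ∀ t, 0 < t → 0 < φ t) (hφ : ∀ t, 0 < t → ∫ s in Ioi (φ t), G s ^ (-(1 / p)) = t)
    (hlim : Tendsto (fun a => a * G' a / G a) atTop (𝓝 σ)) :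
    Tendsto (fun t => t * G (φ t) ^ (1 / p) / φ t) (𝓝[>] 0) (𝓝 (p / (σ - p))) := by
  refine ((tendsto_integral_Ioi_rpow_mul_rpow_div hp hσ hG hGpos
    (fun _ => integrableOn_Ioi_of_integral_Ioi_rpow_eq hG hGpos hφ) hlim).comp
    (tendsto_nhdsGT_atTop_of_integral_Ioi_rpow_eq hG hGpos hφpos hφ)).congr' ?_
  filter_upwards [self_mem_nhdsWithin] with t (ht : 0 < t)
  simp only [Function.comp, hφ t ht]

theorem isNRVZ_of_integral_Ioi_rpow_eq {σ : ℝ} (hp : 0 < p) (hσ : p < σ)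
    (hG : ∀ a, 0 < a → HasDerivAt G (G' a) a) (hGpos : ∀ a, 0 < a → 0 < G a)
    (hφpos : ∀ t, 0 < t → 0 < φ t) (hφ : ∀ t, 0 < t → ∫ s in Ioi (φ t), G s ^ (-(1 / p)) = t)
    (hlim : Tendsto (fun a => a * G' a / G a) atTop (𝓝 σ)) : IsNRVZ φ (-(p / (σ - p))) := by
  have hφ' := fun t (ht : 0 < t) => hasDerivAt_of_integral_Ioi_rpow_eq hG hGpos hφpos hφ ht
  refine isNRVZ_of_hasDerivAt (e := fun t => -(t * G (φ t) ^ (1 / p) / φ t)) hφpos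
    (fun t ht => (hφ' t ht).congr_deriv ?_) ?_
    (tendsto_mul_rpow_div_of_integral_Ioi_rpow_eq hp hσ hG hGpos hφpos hφ hlim).neg
  · field_simp [(hφpos t ht).ne']
  · have hφc : ContinuousOn φ (Ioi 0) := fun t ht => (hφ' t ht).continuousAt.continuousWithinAt
    exact ((continuousOn_id.mul ((continuousOn_rpow_of_hasDerivAt hG hGpos _).comp hφc hφpos)).div
      hφc fun t ht => (hφpos t ht).ne').neg

theorem isNRVZ_neg_deriv_of_integral_Ioi_rpow_eq {σ : ℝ} (hp : 0 < p) (hσ : p < σ)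
    (hG : ∀ a, 0 < a → HasDerivAt G (G' a) a) (hG' : ContinuousOn G' (Ioi 0))
    (hGpos : ∀ a, 0 < a → 0 < G a)
    (hφpos : ∀ t, 0 < t → 0 < φ t) (hφ : ∀ t, 0 < t → ∫ s in Ioi (φ t), G s ^ (-(1 / p)) = t)
    (hlim : Tendsto (fun a => a * G' a / G a) atTop (𝓝 σ)) :
    IsNRVZ (fun t => -deriv φ t) (-(σ / (σ - p))) := by
  have hφ' := fun t (ht : 0 < t) => hasDerivAt_of_integral_Ioi_rpow_eq hG hGpos hφpos hφ ht
  have hφc : ContinuousOn φ (Ioi 0) := fun t ht => (hφ' t ht).continuousAt.continuousWithinAt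
  have hR : ∀ t, 0 < t → -deriv φ t = G (φ t) ^ (1 / p) := fun t ht => by
    rw [(hφ' t ht).deriv, neg_neg]
  have hA := tendsto_mul_rpow_div_of_integral_Ioi_rpow_eq hp hσ hG hGpos hφpos hφ hlim
  have hB : Tendsto (fun t => φ t * G' (φ t) / G (φ t)) (𝓝[>] 0) (𝓝 σ) :=
    hlim.comp (tendsto_nhdsGT_atTop_of_integral_Ioi_rpow_eq hG hGpos hφpos hφ)
  refine isNRVZ_of_hasDerivAt
    (e := fun t => -(t * G (φ t) ^ (1 / p) / φ t * (φ t * G' (φ t) / G (φ t)) / p))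
    (fun t ht => hR t ht ▸ rpow_pos_of_pos (hGpos _ (hφpos t ht)) _) (fun t ht => ?_) ?_ ?_
  · have hx := hGpos _ (hφpos t ht)
    have hd := ((hG _ (hφpos t ht)).comp t (hφ' t ht)).rpow_const (p := 1 / p) (Or.inl hx.ne')
    refine (hd.congr_of_eventuallyEq
      (eventually_nhds_iff.2 ⟨Ioi 0, hR, isOpen_Ioi, ht⟩)).congr_deriv ?_
    rw [hR t ht, Function.comp_apply, rpow_sub_one hx.ne']
    field_simp [(hφpos t ht).ne']
  · have hGc : ContinuousOn G (Ioi 0) := fun a ha => (hG a ha).continuousAt.continuousWithinAt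
    exact ((((continuousOn_id.mul ((continuousOn_rpow_of_hasDerivAt hG hGpos _).comp hφc
      hφpos)).div hφc fun t ht => (hφpos t ht).ne').mul ((hφc.mul (hG'.comp hφc hφpos)).div
      (hGc.comp hφc hφpos) fun t ht => (hGpos _ (hφpos t ht)).ne')).div_const p).neg
  · convert ((hA.mul hB).div_const p).neg using 2
    field_simp

end Profile

theorem hasDerivAt_intervalIntegral_zero {f : ℝ → ℝ} (hf : ContinuousOn f (Ici 0)) {a : ℝ}
    (ha : 0 < a) : HasDerivAt (fun t => ∫ s in (0 : ℝ)..t, f s) (f a) a :=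
  intervalIntegral.integral_hasDerivAt_right
    (hf.mono (by rw [uIcc_of_le ha.le]; exact Icc_subset_Ici_self)).intervalIntegrable
    (ContinuousOn.stronglyMeasurableAtFilter isOpen_Ioi (hf.mono Ioi_subset_Ici_self) a ha)
    (hf.continuousAt (Ici_mem_nhds ha))

theorem intervalIntegral_zero_pos {f : ℝ → ℝ} (hf : ContinuousOn f (Ici 0))
    (hpos : ∀ a, 0 < a → 0 < f a) {a : ℝ} (ha : 0 < a) : 0 < ∫ s in (0 : ℝ)..a, f s :=
  intervalIntegral.intervalIntegral_pos_of_pos_on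
    (hf.mono (by rw [uIcc_of_le ha.le]; exact Icc_subset_Ici_self)).intervalIntegrable
    (fun x hx => hpos x hx.1) ha

/-- Properties of the function `φ` defined by `∫_{φ(t)}^∞ (p'F(s))^{-1/p} ds = t`,
where `F(t) = ∫₀ᵗ f(s) ds`, `p' = p/(p-1)`, `f ∈ C¹([0,∞))` with `f(0) = 0`,
`f' > 0` on `(0,∞)`, and `f ∈ RV_ρ` with `ρ > p - 1`:
(i) `-φ'(t) = (p'F(φ(t)))^{1/p}` and `|φ'(t)|^{p-2} φ''(t) = (p'/p) f(φ(t))`;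
(ii) `-φ' ∈ NRVZ_{-r}` and `φ ∈ NRVZ_{1-r}`, where `r = (ρ+1)/(ρ+1-p) > 1`. -/
theorem phi_properties (p ρ : ℝ) (hp : 1 < p) (f : ℝ → ℝ)
    (hfC : ContDiffOn ℝ 1 f (Ici (0:ℝ))) (hf0 : f 0 = 0)
    (hf' : ∀ u : ℝ, 0 < u → 0 < deriv f u)
    (hRV : IsRV f ρ) (hρ : p - 1 < ρ)
    (F : ℝ → ℝ) (hF : ∀ t, F t = ∫ s in (0:ℝ)..t, f s)
    (φ : ℝ → ℝ) (hφpos : ∀ t : ℝ, 0 < t → 0 < φ t)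
    (hφ : ∀ t : ℝ, 0 < t →
      (∫ s in Ioi (φ t), ((p / (p - 1)) * F s) ^ (-(1 / p))) = t)
    (r : ℝ) (hr : r = (ρ + 1) / (ρ + 1 - p)) :
    (∀ t : ℝ, 0 < t →
        deriv φ t = -(((p / (p - 1)) * F (φ t)) ^ (1 / p)) ∧
        |deriv φ t| ^ (p - 2) * deriv (deriv φ) t = (p / (p - 1)) / p * f (φ t)) ∧
    1 < r ∧
    IsNRVZ (fun t => -deriv φ t) (-r) ∧
    IsNRVZ φ (1 - r) := by
  obtain rfl : F = fun t => ∫ s in (0 : ℝ)..t, f s := funext hF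
  subst hr
  have hp0 : 0 < p := by linarith
  have hσ : p < ρ + 1 := by linarith
  have hc : 0 < p / (p - 1) := div_pos hp0 (by linarith)
  have hfc : ContinuousOn f (Ici 0) := hfC.continuousOn
  have hfmono : StrictMonoOn f (Ici 0) :=
    strictMonoOn_of_deriv_pos (convex_Ici 0) hfc fun x hx => hf' x (by rwa [interior_Ici] at hx)
  have hfpos : ∀ a, 0 < a → 0 < f a := fun a ha => hf0 ▸ hfmono self_mem_Ici ha.le ha
  have hG : ∀ a, 0 < a → HasDerivAt (fun t => p / (p - 1) * ∫ s in (0 : ℝ)..t, f s)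
      (p / (p - 1) * f a) a := fun a ha => (hasDerivAt_intervalIntegral_zero hfc ha).const_mul _
  have hGpos : ∀ a, 0 < a → 0 < p / (p - 1) * ∫ s in (0 : ℝ)..a, f s := fun a ha =>
    mul_pos hc (intervalIntegral_zero_pos hfc hfpos ha)
  have hlim : Tendsto (fun a => a * (p / (p - 1) * f a) / (p / (p - 1) * ∫ s in (0 : ℝ)..a, f s))
      atTop (𝓝 (ρ + 1)) :=
    (hRV.tendsto_mul_div_intervalIntegral (by linarith) (hfc.mono Ioi_subset_Ici_self)
      (hfmono.monotoneOn.mono Ioi_subset_Ici_self) hfpos).congr fun a => by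
        rw [mul_left_comm, mul_div_mul_left _ _ hc.ne']
  refine ⟨fun t ht => ⟨(hasDerivAt_of_integral_Ioi_rpow_eq hG hGpos hφpos hφ ht).deriv, ?_⟩,
    (one_lt_div (by linarith)).2 (by linarith), ?_, ?_⟩
  · rw [abs_deriv_rpow_mul_deriv_deriv_of_integral_Ioi_rpow_eq hp0.ne' hG hGpos hφpos hφ ht]
    ring
  · exact isNRVZ_neg_deriv_of_integral_Ioi_rpow_eq hp0 hσ hG
      (continuousOn_const.mul (hfc.mono Ioi_subset_Ici_self)) hGpos hφpos hφ hlim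
  · convert isNRVZ_of_integral_Ioi_rpow_eq hp0 hσ hG hGpos hφpos hφ hlim using 1
    field_simp [(sub_pos.2 hσ).ne']
    ring
end
end

section
/- Let ϱ > 0 and let f be a positive continuous function on (0,∞) with f ∈ RV_γ for some γ > max{1, ϱ}. Let w₀ > 0 and C ≥ 1. Then there exists a constant Λ > 0 (depending only on w₀, C and γ) such that C·(Λ + Λ^ϱ)·f(z) < f(Λz) for every z ≥ w₀. -/
open Filter MeasureTheory Set Topology

noncomputable section

/-- Let `ϱ > 0` and let `f` be a positive continuous function on `(0,∞)` with
`f ∈ RV_γ`, `γ > max{1,ϱ}`. Then for any `w₀ > 0` and `C ≥ 1` there is `Λ > 0`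
such that `C (Λ + Λ^ϱ) f(z) < f(Λ z)` for all `z ≥ w₀`. -/
theorem superlinear_scaling (ϱ γ : ℝ) (hϱ : 0 < ϱ)
    (f : ℝ → ℝ) (hfc : ContinuousOn f (Ioi (0:ℝ)))
    (hfpos : ∀ z : ℝ, 0 < z → 0 < f z)
    (hRV : IsRV f γ) (hγ : max 1 ϱ < γ)
    (w₀ : ℝ) (hw₀ : 0 < w₀) (C : ℝ) (hC : 1 ≤ C) :
    ∃ Λ : ℝ, 0 < Λ ∧ ∀ z : ℝ, w₀ ≤ z → C * (Λ + Λ ^ ϱ) * f z < f (Λ * z) := by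
  set μ := max 1 ϱ with hμdef
  have hμ1 : (1:ℝ) ≤ μ := le_max_left _ _
  have hϱμ : ϱ ≤ μ := le_max_right _ _
  set β : ℝ := (γ + μ)/2 with hβdef
  have hμβ : μ < β := by rw [hβdef]; linarith
  have hβγ : β < γ := by rw [hβdef]; linarith
  have hgb : 0 < γ - β := by linarith
  set l : ℝ := (2:ℝ) ^ ((1:ℝ)/(γ - β)) with hldef
  have hl1 : 1 < l := by
    rw [hldef]
    exact (Real.one_lt_rpow_iff_of_pos (by norm_num)).mpr (Or.inl ⟨by norm_num, by positivity⟩)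
  have hl0 : (0:ℝ) < l := lt_trans one_pos hl1
  have hlγβ : l ^ (γ - β) = 2 := by
    rw [hldef, ← Real.rpow_mul (by norm_num : (0:ℝ) ≤ 2),
      one_div_mul_cancel (ne_of_gt hgb), Real.rpow_one]
  have hlγ : l ^ γ = 2 * l ^ β := by
    have : l ^ (β + (γ - β)) = l ^ β * l ^ (γ - β) := Real.rpow_add hl0 _ _
    rw [hlγβ] at this
    rw [show β + (γ - β) = γ by ring] at this
    rw [this]; ring
  have hlβpos : 0 < l ^ β := Real.rpow_pos_of_pos hl0 _
  have hlμpos : 0 < l ^ μ := Real.rpow_pos_of_pos hl0 _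
  -- eventual doubling
  have hβltγ : l ^ β < l ^ γ := by rw [hlγ]; linarith
  have hT := hRV l hl0
  have hev : ∀ᶠ u in atTop, l ^ β < f (l * u) / f u :=
    hT.eventually (eventually_gt_nhds hβltγ)
  obtain ⟨U₀, hU₀⟩ := eventually_atTop.mp hev
  set U : ℝ := max U₀ w₀ with hUdef
  have hUw : w₀ ≤ U := le_max_right _ _
  have hU0 : 0 < U := lt_of_lt_of_le hw₀ hUw
  have key : ∀ u, U ≤ u → l ^ β * f u < f (l * u) := by
    intro u hu
    have hu0 : 0 < u := lt_of_lt_of_le hU0 hu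
    have h1 : l ^ β < f (l * u) / f u := hU₀ u (le_trans (le_max_left _ _) hu)
    have := (lt_div_iff₀ (hfpos u hu0)).mp h1
    linarith
  have iter : ∀ n : ℕ, ∀ u, U ≤ u → (l ^ β) ^ n * f u ≤ f (l ^ n * u) := by
    intro n
    induction n with
    | zero => intro u hu; simp
    | succ n ih =>
      intro u hu
      have hu0 : 0 < u := lt_of_lt_of_le hU0 hu
      have hln : U ≤ l ^ n * u := by
        calc U ≤ u := hu
        _ = 1 * u := (one_mul u).symm
        _ ≤ l ^ n * u := by
            apply mul_le_mul_of_nonneg_right (one_le_pow₀ (le_of_lt hl1)) (le_of_lt hu0)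
      have h1 := key (l ^ n * u) hln
      have h2 := ih u hu
      have h3 : l ^ β * ((l ^ β) ^ n * f u) ≤ l ^ β * f (l ^ n * u) :=
        mul_le_mul_of_nonneg_left h2 (le_of_lt hlβpos)
      calc (l ^ β) ^ (n + 1) * f u = l ^ β * ((l ^ β) ^ n * f u) := by ring
      _ ≤ l ^ β * f (l ^ n * u) := h3
      _ ≤ f (l * (l ^ n * u)) := le_of_lt (key _ hln)
      _ = f (l ^ (n + 1) * u) := by rw [pow_succ]; ring_nf
  -- j with l^j * w₀ ≥ U
  obtain ⟨j, hj⟩ := pow_unbounded_of_one_lt (U / w₀) hl1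
  have hjw : U ≤ l ^ j * w₀ := le_of_lt ((div_lt_iff₀ hw₀).mp hj)
  have hlj1 : (1:ℝ) ≤ l ^ j := one_le_pow₀ (le_of_lt hl1)
  -- min on [U, l^j U]
  have hUlj : U ≤ l ^ j * U := le_mul_of_one_le_left (le_of_lt hU0) hlj1
  have hsub1 : Icc U (l ^ j * U) ⊆ Ioi (0:ℝ) := fun x hx => lt_of_lt_of_le hU0 hx.1
  obtain ⟨um, hum, hmin⟩ := isCompact_Icc.exists_isMinOn ⟨U, le_refl U, hUlj⟩ (hfc.mono hsub1)
  set m : ℝ := f um with hmdef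
  have hm0 : 0 < m := hfpos um (hsub1 hum)
  -- max on [w₀, U]
  have hsub2 : Icc w₀ U ⊆ Ioi (0:ℝ) := fun x hx => lt_of_lt_of_le hw₀ hx.1
  obtain ⟨zM, hzM, hmax⟩ := isCompact_Icc.exists_isMaxOn ⟨w₀, le_refl w₀, hUw⟩ (hfc.mono hsub2)
  set M : ℝ := f zM with hMdef
  have hM0 : 0 < M := hfpos zM (hsub2 hzM)
  -- D
  set D : ℝ := l ^ (β - μ) with hDdef
  have hD1 : 1 < D := by
    rw [hDdef]
    exact (Real.one_lt_rpow_iff_of_pos hl0).mpr (Or.inl ⟨hl1, by linarith⟩)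
  have hD0 : 0 < D := lt_trans one_pos hD1
  have hβμD : l ^ β = l ^ μ * D := by
    rw [hDdef, ← Real.rpow_add hl0]; ring_nf
  -- choose k
  obtain ⟨k₀, hk₀⟩ := eventually_atTop.mp
    ((tendsto_pow_atTop_atTop_of_one_lt hD1).eventually_gt_atTop
      (max (2 * C) (2 * C * M * (l ^ β) ^ j / m)))
  set k : ℕ := max k₀ j with hkdef
  have hkj : j ≤ k := le_max_right _ _
  have hkD : max (2 * C) (2 * C * M * (l ^ β) ^ j / m) < D ^ k := hk₀ k (le_max_left _ _)
  have hkD1 : 2 * C < D ^ k := lt_of_le_of_lt (le_max_left _ _) hkD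
  have hkD2 : 2 * C * M * (l ^ β) ^ j / m < D ^ k := lt_of_le_of_lt (le_max_right _ _) hkD
  refine ⟨l ^ k, pow_pos hl0 k, ?_⟩
  intro z hz
  have hz0 : 0 < z := lt_of_lt_of_le hw₀ hz
  -- bound C (Λ + Λ^ϱ) ≤ 2 C (l^μ)^k
  have hΛμ : (l:ℝ) ^ k ≤ (l ^ μ) ^ k := by
    apply pow_le_pow_left₀ (le_of_lt hl0)
    calc l = l ^ (1:ℝ) := (Real.rpow_one l).symm
    _ ≤ l ^ μ := Real.rpow_le_rpow_of_exponent_le (le_of_lt hl1) hμ1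
  have hΛϱ : ((l:ℝ) ^ k) ^ ϱ ≤ (l ^ μ) ^ k := by
    rw [← Real.rpow_natCast l k, ← Real.rpow_natCast (l ^ μ) k,
      ← Real.rpow_mul (le_of_lt hl0), ← Real.rpow_mul (le_of_lt hl0)]
    exact Real.rpow_le_rpow_of_exponent_le (le_of_lt hl1)
      (by nlinarith [Nat.cast_nonneg (α := ℝ) k])
  have hC0 : (0:ℝ) < C := lt_of_lt_of_le one_pos hC
  have hbound : C * ((l:ℝ) ^ k + ((l:ℝ) ^ k) ^ ϱ) ≤ 2 * C * (l ^ μ) ^ k := by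
    have h := add_le_add hΛμ hΛϱ
    calc C * ((l:ℝ) ^ k + ((l:ℝ) ^ k) ^ ϱ) ≤ C * ((l ^ μ) ^ k + (l ^ μ) ^ k) :=
          mul_le_mul_of_nonneg_left h (le_of_lt hC0)
    _ = 2 * C * (l ^ μ) ^ k := by ring
  have hlμk : (0:ℝ) < (l ^ μ) ^ k := pow_pos hlμpos k
  have hβk : ((l:ℝ) ^ β) ^ k = (l ^ μ) ^ k * D ^ k := by rw [hβμD, mul_pow]
  rcases le_total U z with hUz | hzU
  · -- large z
    have h1 := iter k z hUz
    have hfz := hfpos z hz0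
    have h2 : 2 * C * (l ^ μ) ^ k * f z < ((l:ℝ) ^ β) ^ k * f z := by
      rw [hβk]
      have := mul_lt_mul_of_pos_right hkD1 (mul_pos hlμk hfz)
      calc 2 * C * (l ^ μ) ^ k * f z = 2 * C * ((l ^ μ) ^ k * f z) := by ring
      _ < D ^ k * ((l ^ μ) ^ k * f z) := this
      _ = (l ^ μ) ^ k * D ^ k * f z := by ring
    calc C * ((l:ℝ) ^ k + ((l:ℝ) ^ k) ^ ϱ) * f z ≤ 2 * C * (l ^ μ) ^ k * f z :=
        mul_le_mul_of_nonneg_right hbound (le_of_lt hfz)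
    _ < ((l:ℝ) ^ β) ^ k * f z := h2
    _ ≤ f (l ^ k * z) := h1
  · -- compact part
    have hfzM : f z ≤ M := hmax ⟨hz, hzU⟩
    set u' : ℝ := l ^ j * z with hu'def
    have hu'U : U ≤ u' := le_trans hjw (mul_le_mul_of_nonneg_left hz (by positivity))
    have hu'mem : u' ∈ Icc U (l ^ j * U) :=
      ⟨hu'U, mul_le_mul_of_nonneg_left hzU (by positivity)⟩
    have hmu' : m ≤ f u' := hmin hu'mem
    have h1 := iter (k - j) u' hu'U
    have heq : (l:ℝ) ^ (k - j) * u' = l ^ k * z := by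
      rw [hu'def, ← mul_assoc, pow_sub_mul_pow l hkj]
    rw [heq] at h1
    have hβj : (0:ℝ) < ((l:ℝ) ^ β) ^ j := pow_pos hlβpos j
    -- main numeric inequality
    have hnum : 2 * C * (l ^ μ) ^ k * M < ((l:ℝ) ^ β) ^ (k - j) * m := by
      have h2 : 2 * C * M * (l ^ β) ^ j < D ^ k * m := (div_lt_iff₀ hm0).mp hkD2
      have h3 : ((l:ℝ) ^ β) ^ (k - j) * ((l:ℝ) ^ β) ^ j = ((l:ℝ) ^ β) ^ k :=
        pow_sub_mul_pow _ hkj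
      have h4 : 2 * C * (l ^ μ) ^ k * M * ((l:ℝ) ^ β) ^ j
          < (((l:ℝ) ^ β) ^ (k - j) * m) * ((l:ℝ) ^ β) ^ j := by
        calc 2 * C * (l ^ μ) ^ k * M * ((l:ℝ) ^ β) ^ j
            = (l ^ μ) ^ k * (2 * C * M * (l ^ β) ^ j) := by ring
        _ < (l ^ μ) ^ k * (D ^ k * m) := mul_lt_mul_of_pos_left h2 hlμk
        _ = ((l:ℝ) ^ β) ^ k * m := by rw [hβk]; ring
        _ = (((l:ℝ) ^ β) ^ (k - j) * m) * ((l:ℝ) ^ β) ^ j := by rw [← h3]; ring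
      exact lt_of_mul_lt_mul_right h4 (le_of_lt hβj)
    have hiter2 : ((l:ℝ) ^ β) ^ (k - j) * m ≤ f (l ^ k * z) :=
      le_trans (mul_le_mul_of_nonneg_left hmu' (by positivity)) h1
    calc C * ((l:ℝ) ^ k + ((l:ℝ) ^ k) ^ ϱ) * f z ≤ 2 * C * (l ^ μ) ^ k * M :=
        mul_le_mul hbound hfzM (le_of_lt (hfpos z hz0)) (by positivity)
    _ < ((l:ℝ) ^ β) ^ (k - j) * m := hnum
    _ ≤ f (l ^ k * z) := hiter2
end
end

section
/- Suppose f ∈ RV_γ for some γ ∈ ℝ, and f is continuous, increasing and positive on (0,∞). Then for any given τ > 0 there exists a constant c = c(τ) > 0 such that f(a) + f(b) > c·f(a+b) for all a, b ≥ τ. -/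
open Filter MeasureTheory Set Topology

noncomputable section

/-- If `f ∈ RV_γ` is continuous, increasing and positive on `(0,∞)`, then for any
`τ > 0` there is `c = c(τ) > 0` such that `f(a) + f(b) > c f(a+b)` for all `a,b ≥ τ`. -/
theorem superadditive_up_to_constant (γ : ℝ)
    (f : ℝ → ℝ) (hfc : ContinuousOn f (Ioi (0:ℝ)))
    (hfmono : StrictMonoOn f (Ioi (0:ℝ)))
    (hfpos : ∀ z : ℝ, 0 < z → 0 < f z)
    (hRV : IsRV f γ) (τ : ℝ) (hτ : 0 < τ) :
    ∃ c : ℝ, 0 < c ∧ ∀ a b : ℝ, τ ≤ a → τ ≤ b → c * f (a + b) < f a + f b := by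
  set K : ℝ := (2:ℝ) ^ γ + 1 with hK
  have hKpos : 0 < K := by positivity
  have h2 : (2:ℝ) ^ γ < K := by simp [hK]
  -- eventually f(2u) < K f(u)
  have hev : ∀ᶠ u in atTop, f (2 * u) / f u < K :=
    (hRV 2 two_pos).eventually (eventually_lt_nhds h2)
  obtain ⟨M0, hM0⟩ := eventually_atTop.1 hev
  set M : ℝ := max M0 τ with hM
  have hMτ : τ ≤ M := le_max_right _ _
  have hMpos : 0 < M := lt_of_lt_of_le hτ hMτ
  have hbig : ∀ u : ℝ, M ≤ u → f (2 * u) < K * f u := by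
    intro u hu
    have hupos : 0 < u := lt_of_lt_of_le hMpos hu
    have := hM0 u (le_trans (le_max_left _ _) hu)
    exact (div_lt_iff₀ (hfpos u hupos)).1 this
  have hf2M : 0 < f (2 * M) := hfpos _ (by linarith)
  have hfτ : 0 < f τ := hfpos _ hτ
  set c0 : ℝ := min (1 / K) (2 * f τ / f (2 * M)) with hc0
  have hc0pos : 0 < c0 := lt_min (by positivity) (by positivity)
  refine ⟨c0 / 2, by positivity, ?_⟩
  have mono := hfmono.monotoneOn
  -- auxiliary claim for ordered a ≤ b
  have key : ∀ a b : ℝ, τ ≤ a → τ ≤ b → a ≤ b → c0 / 2 * f (a + b) < f a + f b := by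
    intro a b ha hb hab
    have hapos : 0 < a := lt_of_lt_of_le hτ ha
    have hbpos : 0 < b := lt_of_lt_of_le hτ hb
    have habpos : 0 < a + b := by linarith
    have hfab : 0 < f (a + b) := hfpos _ habpos
    have hfa : 0 < f a := hfpos _ hapos
    have hfb : 0 < f b := hfpos _ hbpos
    rcases le_total M b with hMb | hbM
    · -- b large : f(a+b) ≤ f(2b) < K f b ≤ K (f a + f b)
      have h1 : f (a + b) ≤ f (2 * b) := by
        apply mono (mem_Ioi.2 habpos) (mem_Ioi.2 (by linarith)) (by linarith)
      have h2' : f (2 * b) < K * f b := hbig b hMb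
      have h3 : c0 / 2 * f (a + b) ≤ (1 / K) * f (a + b) := by
        apply mul_le_mul_of_nonneg_right _ hfab.le
        calc c0 / 2 ≤ c0 := by linarith
          _ ≤ 1 / K := min_le_left _ _
      calc c0 / 2 * f (a + b) ≤ (1 / K) * f (a + b) := h3
        _ ≤ (1 / K) * f (2 * b) := by
            apply mul_le_mul_of_nonneg_left h1 (by positivity)
        _ < (1 / K) * (K * f b) := by
            apply mul_lt_mul_of_pos_left h2' (by positivity)
        _ = f b := by field_simp
        _ < f a + f b := by linarith
    · -- both small : a ≤ b ≤ M, so a+b ≤ 2M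
      have h1 : f (a + b) ≤ f (2 * M) := by
        apply mono (mem_Ioi.2 habpos) (mem_Ioi.2 (by linarith)) (by linarith)
      have hfaτ : f τ ≤ f a := mono (mem_Ioi.2 hτ) (mem_Ioi.2 hapos) ha
      have hfbτ : f τ ≤ f b := mono (mem_Ioi.2 hτ) (mem_Ioi.2 hbpos) hb
      have h3 : c0 * f (a + b) ≤ 2 * f τ := by
        calc c0 * f (a + b) ≤ (2 * f τ / f (2 * M)) * f (a + b) := by
              apply mul_le_mul_of_nonneg_right (min_le_right _ _) hfab.le
          _ ≤ (2 * f τ / f (2 * M)) * f (2 * M) := by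
              apply mul_le_mul_of_nonneg_left h1 (by positivity)
          _ = 2 * f τ := by field_simp
      have : c0 / 2 * f (a + b) < c0 * f (a + b) := by
        apply mul_lt_mul_of_pos_right _ hfab
        linarith
      calc c0 / 2 * f (a + b) < c0 * f (a + b) := this
        _ ≤ 2 * f τ := h3
        _ ≤ f a + f b := by linarith
  intro a b ha hb
  rcases le_total a b with h | h
  · exact key a b ha hb h
  · have := key b a hb ha h
    rw [add_comm b a, add_comm (f b)] at this
    exact this
end
end

section
/- Assume f is a positive continuous function on (0,∞) with f ∈ RV_γ for some γ > 0, and let τ > 0 be a given constant. Then there exist a positive, continuous, increasing function g on (0,∞) with g ∈ RV_γ and a constant σ > 0 such that σ·g(u) ≤ f(u) ≤ g(u) for all u ≥ τ. -/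
/-!
In logarithmic coordinates `k x = log (f (exp x))`, regular variation says
`k (x + t) - k x → γ t` for every `t`. A Baire category argument upgrades this to a bound on
`|k (x + s) - k x|` uniform in `s ∈ [0, 1]` for large `x`. Hence the sliding mean
`q x = ∫_{x-1}^x k` stays within bounded distance of `k`, while `q' x = k x - k (x - 1) → γ > 0`;
so `q` is eventually strictly increasing and, by the mean value theorem, still satisfies
`q (x + t) - q x → γ t`. Once `q` is made strictly increasing on all of `ℝ` and shifted above `k`
on `[log τ, ∞)`, the function `g = exp ∘ q ∘ log` does the job.
-/

open Filter MeasureTheory Set Topology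

noncomputable section

theorem exists_uniform_bound_add_sub_of_forall_bound {k : ℝ → ℝ} (hk : Continuous k)
    (h : ∀ t, ∃ C, ∀ᶠ x in atTop, |k (x + t) - k x| ≤ C) :
    ∃ δ > 0, ∃ C N : ℝ, ∀ x ≥ N, ∀ s ∈ Icc 0 δ, |k (x + s) - k x| ≤ C := by
  set E : ℕ → Set ℝ := fun n => {t | ∀ x : ℝ, (n : ℝ) ≤ x → |k (x + t) - k x| ≤ n}
  have hclosed : ∀ n, IsClosed (E n) := fun n => by
    simp only [E, ofPred_forall]
    exact isClosed_iInter fun x => isClosed_iInter fun _ =>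
      isClosed_le (by fun_prop) continuous_const
  have hcover : ⋃ n, E n = univ := by
    refine eq_univ_of_forall fun t => mem_iUnion.2 ?_
    obtain ⟨C, hC⟩ := h t
    obtain ⟨N, hN⟩ := eventually_atTop.1 hC
    refine ⟨⌈max N C⌉₊, fun x hx => ?_⟩
    have hmax := (le_max_left N C).trans (Nat.le_ceil (max N C))
    exact (hN x (hmax.trans hx)).trans ((le_max_right N C).trans (Nat.le_ceil _))
  obtain ⟨n, t₀, ht₀⟩ := nonempty_interior_of_iUnion_of_closed hclosed hcover
  obtain ⟨r, hr, hball⟩ := Metric.mem_nhds_iff.1 (mem_interior_iff_mem_nhds.1 ht₀)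
  refine ⟨r / 2, half_pos hr, 2 * n, n + t₀, fun x hx s hs => ?_⟩
  have hs' : t₀ + s ∈ E n := hball <| by
    rw [Metric.mem_ball, Real.dist_eq, add_sub_cancel_left, abs_of_nonneg hs.1]
    linarith [hs.2]
  have hy : (n : ℝ) ≤ x - t₀ := by linarith
  -- `x + s` and `x` are both one step from `x - t₀`, by steps `t₀ + s` and `t₀` in the ball.
  have h₁ := hs' (x - t₀) hy
  have h₂ := hball (Metric.mem_ball_self hr) (x - t₀) hy
  rw [show x - t₀ + (t₀ + s) = x + s by ring] at h₁
  rw [sub_add_cancel] at h₂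
  calc |k (x + s) - k x| = |(k (x + s) - k (x - t₀)) - (k x - k (x - t₀))| := by ring_nf
    _ ≤ |k (x + s) - k (x - t₀)| + |k x - k (x - t₀)| := abs_sub _ _
    _ ≤ 2 * n := by linarith

theorem abs_add_sub_le_succ_mul_of_forall_Icc {k : ℝ → ℝ} {δ C N : ℝ}
    (h : ∀ x ≥ N, ∀ s ∈ Icc 0 δ, |k (x + s) - k x| ≤ C) (m : ℕ) :
    ∀ x ≥ N, ∀ s ∈ Icc 0 ((m + 1) * δ), |k (x + s) - k x| ≤ (m + 1) * C := by
  induction m with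
  | zero => simpa using h
  | succ m ih =>
    intro x hx s hs
    have hδ : 0 ≤ δ := by nlinarith [hs.1, hs.2]
    set s₁ := min s δ with hs₁_def
    have hs₁ : s₁ ∈ Icc 0 δ := ⟨le_min hs.1 hδ, min_le_right s δ⟩
    have hs₂ : s - s₁ ∈ Icc 0 ((m + 1) * δ) := by
      constructor
      · linarith [min_le_left s δ]
      · have := hs.2
        push_cast at this
        rcases le_total s δ with hsδ | hδs
        · rw [hs₁_def, min_eq_left hsδ, sub_self]; positivity
        · rw [hs₁_def, min_eq_right hδs]; linarith
    have e₁ := h x hx s₁ hs₁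
    have e₂ := ih (x + s₁) (by linarith [hs₁.1]) (s - s₁) hs₂
    rw [add_add_sub_cancel] at e₂
    calc |k (x + s) - k x| = |(k (x + s) - k (x + s₁)) + (k (x + s₁) - k x)| := by ring_nf
      _ ≤ |k (x + s) - k (x + s₁)| + |k (x + s₁) - k x| := abs_add_le _ _
      _ ≤ ((m + 1 : ℕ) + 1) * C := by push_cast; linarith

theorem exists_bound_add_sub_Icc_zero_one {k : ℝ → ℝ} (hk : Continuous k)
    (h : ∀ t, ∃ C, ∀ᶠ x in atTop, |k (x + t) - k x| ≤ C) :
    ∃ C N : ℝ, ∀ x ≥ N, ∀ s ∈ Icc 0 1, |k (x + s) - k x| ≤ C := by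
  obtain ⟨δ, hδ, C, N, hC⟩ := exists_uniform_bound_add_sub_of_forall_bound hk h
  set m := ⌈δ⁻¹⌉₊
  have hm : 1 ≤ (m + 1) * δ := by
    rw [← inv_le_iff_one_le_mul₀ hδ]
    linarith [Nat.le_ceil δ⁻¹]
  exact ⟨(m + 1) * C, N, fun x hx s hs =>
    abs_add_sub_le_succ_mul_of_forall_Icc hC m x hx s ⟨hs.1, hs.2.trans hm⟩⟩

def slidingMean (k : ℝ → ℝ) (x : ℝ) : ℝ := ∫ t in (x - 1)..x, k t

theorem hasDerivAt_slidingMean {k : ℝ → ℝ} (hk : Continuous k) (x : ℝ) :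
    HasDerivAt (slidingMean k) (k x - k (x - 1)) x := by
  have hsub : slidingMean k = fun y => (∫ t in (0:ℝ)..y, k t) - ∫ t in (0:ℝ)..(y - 1), k t := by
    ext y
    exact (intervalIntegral.integral_interval_sub_left (hk.intervalIntegrable _ _)
      (hk.intervalIntegrable _ _)).symm
  rw [hsub]
  exact (hk.integral_hasStrictDerivAt 0 x).hasDerivAt.sub
    ((hk.integral_hasStrictDerivAt 0 (x - 1)).hasDerivAt.comp_sub_const x 1)

theorem abs_sub_slidingMean_le {k : ℝ → ℝ} (hk : Continuous k) {C N : ℝ}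
    (h : ∀ y ≥ N, ∀ s ∈ Icc 0 1, |k (y + s) - k y| ≤ C) {x : ℝ} (hx : N + 1 ≤ x) :
    |k x - slidingMean k x| ≤ C := by
  have hmean : k x - slidingMean k x = ∫ t in (x - 1)..x, (k x - k t) := by
    rw [intervalIntegral.integral_sub intervalIntegrable_const (hk.intervalIntegrable _ _),
      intervalIntegral.integral_const, slidingMean, sub_sub_cancel, one_smul]
  have hbound : ∀ t ∈ uIoc (x - 1) x, ‖k x - k t‖ ≤ C := by
    intro t ht
    rw [uIoc_of_le (by linarith)] at ht
    have := h t (by linarith [ht.1]) (x - t) ⟨by linarith [ht.2], by linarith [ht.1]⟩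
    rwa [add_sub_cancel, ← Real.norm_eq_abs] at this
  simpa [hmean] using intervalIntegral.norm_integral_le_of_norm_le_const hbound

theorem tendsto_add_sub_of_hasDerivAt {q q' : ℝ → ℝ} {L : ℝ} (hq : ∀ x, HasDerivAt q (q' x) x)
    (hq' : Tendsto q' atTop (𝓝 L)) (t : ℝ) :
    Tendsto (fun x => q (x + t) - q x) atTop (𝓝 (L * t)) := by
  rw [Metric.tendsto_atTop]
  intro ε hε
  have hη : 0 < ε / (|t| + 1) := by positivity
  obtain ⟨N, hN⟩ := Metric.tendsto_atTop.1 hq' _ hη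
  refine ⟨N + |t|, fun x hx => ?_⟩
  have hmvt := Convex.norm_image_sub_le_of_norm_hasDerivWithin_le (s := Ici N) (C := ε / (|t| + 1))
    (f := fun y => q y - L * y) (f' := fun y => q' y - L)
    (fun y _ => ((hq y).sub ((hasDerivAt_id y).const_mul L)).hasDerivWithinAt.congr_deriv
      (by ring))
    (fun y hy => (hN y hy).le) (convex_Ici N)
    (show x ∈ Ici N by simp only [mem_Ici]; linarith [abs_nonneg t])
    (show x + t ∈ Ici N by simp only [mem_Ici]; linarith [neg_abs_le t])
  rw [Real.dist_eq]
  calc |q (x + t) - q x - L * t| = ‖(q (x + t) - L * (x + t)) - (q x - L * x)‖ := by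
        rw [Real.norm_eq_abs]; ring_nf
    _ ≤ ε / (|t| + 1) * ‖x + t - x‖ := hmvt
    _ < ε := by
        rw [add_sub_cancel_left, Real.norm_eq_abs, div_mul_eq_mul_div, div_lt_iff₀ (by positivity)]
        nlinarith [abs_nonneg t]

theorem StrictMonoOn.strictMono_max_add_min {q : ℝ → ℝ} {X : ℝ} (hq : StrictMonoOn q (Ici X)) :
    StrictMono fun x => q (max x X) + min x X := by
  refine StrictMonoOn.Iic_union_Ici (a := X) (fun x hx y hy hxy => ?_) (fun x hx y hy hxy => ?_)
  · simp only [max_eq_right (mem_Iic.1 hx), max_eq_right (mem_Iic.1 hy),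
      min_eq_left (mem_Iic.1 hx), min_eq_left (mem_Iic.1 hy)]
    linarith
  · simp only [max_eq_left (mem_Ici.1 hx), max_eq_left (mem_Ici.1 hy),
      min_eq_right (mem_Ici.1 hx), min_eq_right (mem_Ici.1 hy)]
    linarith [hq hx hy hxy]

theorem Continuous.exists_abs_le_on_Ici {φ : ℝ → ℝ} (hφ : Continuous φ) {C N : ℝ}
    (h : ∀ x ≥ N, |φ x| ≤ C) (c : ℝ) : ∃ M, ∀ x ≥ c, |φ x| ≤ M := by
  obtain ⟨M₀, hM₀⟩ := isCompact_Icc.exists_bound_of_continuousOn (hφ.continuousOn (s := Icc c N))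
  refine ⟨max M₀ C, fun x hx => ?_⟩
  rcases le_total x N with hxN | hNx
  · exact (hM₀ x ⟨hx, hxN⟩).trans (le_max_left _ _)
  · exact (h x hNx).trans (le_max_right _ _)

section LogScale

variable {k : ℝ → ℝ} {γ : ℝ}

theorem exists_strictMono_eventually_abs_sub_le (hk : Continuous k) (hγ : 0 < γ)
    (hlim : ∀ t, Tendsto (fun x => k (x + t) - k x) atTop (𝓝 (γ * t))) :
    ∃ G : ℝ → ℝ, Continuous G ∧ StrictMono G ∧
      (∀ t, Tendsto (fun x => G (x + t) - G x) atTop (𝓝 (γ * t))) ∧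
      ∃ C N : ℝ, ∀ x ≥ N, |G x - k x| ≤ C := by
  obtain ⟨C, N, hC⟩ := exists_bound_add_sub_Icc_zero_one hk fun t =>
    ⟨|γ * t| + 1, (hlim t).abs.eventually (eventually_le_nhds (lt_add_one _))⟩
  set q := slidingMean k
  have hq : ∀ x, HasDerivAt q (k x - k (x - 1)) x := hasDerivAt_slidingMean hk
  have hq' : Tendsto (fun x => k x - k (x - 1)) atTop (𝓝 γ) := by
    have h := (hlim 1).comp (tendsto_atTop_add_const_right atTop (-1) tendsto_id)
    rw [mul_one] at h
    refine h.congr fun x => ?_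
    simp only [Function.comp_apply, id, ← sub_eq_add_neg, sub_add_cancel]
  obtain ⟨X, hX⟩ := eventually_atTop.1 (hq'.eventually (eventually_gt_nhds hγ))
  have hqc : Continuous q := continuous_iff_continuousAt.2 fun x => (hq x).continuousAt
  have hqmono : StrictMonoOn q (Ici X) := strictMonoOn_of_deriv_pos (convex_Ici X)
    hqc.continuousOn fun x hx => by
      rw [interior_Ici, mem_Ioi] at hx
      rw [(hq x).deriv]
      exact hX x hx.le
  have hG : ∀ x ≥ X, q (max x X) + min x X = q x + X := fun x hx => by
    rw [max_eq_left hx, min_eq_right hx]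
  refine ⟨fun x => q (max x X) + min x X, by fun_prop, hqmono.strictMono_max_add_min,
    fun t => ?_, C + |X|, max (N + 1) X, fun x hx => ?_⟩
  · refine (tendsto_add_sub_of_hasDerivAt hq hq' t).congr' ?_
    filter_upwards [eventually_ge_atTop (max X (X - t))] with x hx
    rw [hG x (le_of_max_le_left hx), hG (x + t) (by linarith [le_max_right X (X - t)])]
    ring
  · change |q (max x X) + min x X - k x| ≤ C + |X|
    rw [hG x (le_of_max_le_right hx), add_sub_right_comm]
    calc |q x - k x + X| ≤ |k x - q x| + |X| := abs_sub_comm (k x) (q x) ▸ abs_add_le _ _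
      _ ≤ C + |X| := by gcongr; exact abs_sub_slidingMean_le hk hC (le_of_max_le_left hx)

theorem exists_strictMono_le_le_add_on_Ici (hk : Continuous k) (hγ : 0 < γ)
    (hlim : ∀ t, Tendsto (fun x => k (x + t) - k x) atTop (𝓝 (γ * t))) (c : ℝ) :
    ∃ G : ℝ → ℝ, ∃ M : ℝ, Continuous G ∧ StrictMono G ∧
      (∀ t, Tendsto (fun x => G (x + t) - G x) atTop (𝓝 (γ * t))) ∧
      ∀ x ≥ c, k x ≤ G x ∧ G x ≤ k x + M := by
  obtain ⟨G, hGc, hGmono, hGlim, C, N, hGk⟩ :=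
    exists_strictMono_eventually_abs_sub_le hk hγ hlim
  obtain ⟨M, hM⟩ := (hGc.sub hk).exists_abs_le_on_Ici hGk c
  refine ⟨fun x => G x + M, 2 * M, by fun_prop, fun x y hxy => by simpa using hGmono hxy,
    fun t => by simpa using hGlim t, fun x hx => ?_⟩
  have := abs_le.1 (hM x hx)
  simp only [Pi.sub_apply] at this
  constructor <;> linarith [this.1, this.2]

end LogScale

theorem IsRV.tendsto_log_comp_exp_add_sub_s9 {f : ℝ → ℝ} {γ : ℝ} (hf : IsRV f γ)
    (hpos : ∀ u, 0 < u → 0 < f u) (t : ℝ) :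
    Tendsto (fun x => Real.log (f (Real.exp (x + t))) - Real.log (f (Real.exp x))) atTop
      (𝓝 (γ * t)) := by
  have hlog := ((Real.continuousAt_log (Real.rpow_pos_of_pos (Real.exp_pos t) γ).ne').tendsto.comp
    ((hf _ (Real.exp_pos t)).comp Real.tendsto_exp_atTop))
  rw [Real.log_rpow (Real.exp_pos t), Real.log_exp] at hlog
  refine hlog.congr fun x => ?_
  simp only [Function.comp_apply, Real.exp_add, mul_comm (Real.exp x)]
  exact Real.log_div (hpos _ (by positivity)).ne' (hpos _ (Real.exp_pos x)).ne'

theorem isRV_exp_comp_comp_log {G : ℝ → ℝ} {γ : ℝ}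
    (hG : ∀ t, Tendsto (fun x => G (x + t) - G x) atTop (𝓝 (γ * t))) :
    IsRV (fun u => Real.exp (G (Real.log u))) γ := by
  intro ξ hξ
  have hexp := (Real.continuous_exp.tendsto _).comp
    ((hG (Real.log ξ)).comp Real.tendsto_log_atTop)
  rw [mul_comm, ← Real.rpow_def_of_pos hξ] at hexp
  refine hexp.congr' ?_
  filter_upwards [eventually_gt_atTop 0] with u hu
  rw [Function.comp_apply, Function.comp_apply, Real.exp_sub, Real.log_mul hξ.ne' hu.ne', add_comm]

/-- If `f` is a positive continuous function on `(0,∞)` with `f ∈ RV_γ`, `γ > 0`,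
then for any `τ > 0` there exist a positive, continuous, increasing function
`g ∈ RV_γ` on `(0,∞)` and a constant `σ > 0` with `σ g(u) ≤ f(u) ≤ g(u)` for `u ≥ τ`. -/
theorem bounded_by_increasing_RV (γ : ℝ) (hγ : 0 < γ)
    (f : ℝ → ℝ) (hfc : ContinuousOn f (Ioi (0:ℝ)))
    (hfpos : ∀ u : ℝ, 0 < u → 0 < f u)
    (hRV : IsRV f γ) (τ : ℝ) (hτ : 0 < τ) :
    ∃ g : ℝ → ℝ, ∃ σ : ℝ, 0 < σ ∧
      ContinuousOn g (Ioi (0:ℝ)) ∧ (∀ u : ℝ, 0 < u → 0 < g u) ∧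
      StrictMonoOn g (Ioi (0:ℝ)) ∧ IsRV g γ ∧
      ∀ u : ℝ, τ ≤ u → σ * g u ≤ f u ∧ f u ≤ g u := by
  set k : ℝ → ℝ := fun x => Real.log (f (Real.exp x))
  have hk : Continuous k := (hfc.comp_continuous Real.continuous_exp Real.exp_pos).log
    fun x => (hfpos _ (Real.exp_pos x)).ne'
  obtain ⟨G, M, hGc, hGmono, hGlim, hGk⟩ := exists_strictMono_le_le_add_on_Ici hk hγ
    (hRV.tendsto_log_comp_exp_add_sub_s9 hfpos) (Real.log τ)
  refine ⟨fun u => Real.exp (G (Real.log u)), Real.exp (-M), Real.exp_pos _,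
    (Real.continuous_exp.comp hGc).comp_continuousOn
      (Real.continuousOn_log.mono fun u hu => (mem_Ioi.1 hu).ne'),
    fun u _ => Real.exp_pos _,
    fun u hu v _ huv => Real.exp_lt_exp.2 (hGmono (Real.log_lt_log hu huv)),
    isRV_exp_comp_comp_log hGlim, fun u hu => ?_⟩
  have hu0 : 0 < u := hτ.trans_le hu
  have hfu : f u = Real.exp (k (Real.log u)) := by
    simp only [k, Real.exp_log hu0, Real.exp_log (hfpos u hu0)]
  obtain ⟨hlow, hupp⟩ := hGk (Real.log u) (Real.log_le_log hτ hu)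
  rw [hfu, ← Real.exp_add]
  exact ⟨Real.exp_le_exp.2 (by linarith), Real.exp_le_exp.2 hlow⟩
end
end

section
/- Let g and h be positive continuously differentiable functions on (0,∞) with g ∈ RV_θ and h ∈ RV_γ, where γ + θ > 1, and let c > 0. Let T > 0 and let v, w : (0,T] → (0,∞) be differentiable functions satisfying v'(t) = −g(c·v(t))·h(v(t)) and w'(t) = −g(w(t))·h(w(t)) for all t ∈ (0,T], with v(t) → ∞ and w(t) → ∞ as t → 0⁺. Then there exists a constant C > 1 such that C⁻¹·v(t) ≤ w(t) ≤ C·v(t) for all t ∈ (0,T]. -/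
/-!
Writing `Φ(x) = ∫ₓ^∞ du / (g(u) h(u))` and `Ψ(x) = ∫ₓ^∞ du / (g(cu) h(u))`, the equations say
`d/dt Φ(w(t)) = 1 = d/dt Ψ(v(t))`, and the blow-up at `0` forces `Φ(w(t)) = t = Ψ(v(t))`.
The integrand `1 / (g h)` is regularly varying of index `-(γ + θ) < -1`, so it eventually
decays by a factor `r < 1/2` under `u ↦ 2u`; hence `Φ` is finite and `Φ(2ᵏ x) ≤ (2r)ᵏ Φ(x)`.
The two integrands have ratio tending to `c^(-θ)`, so `Ψ` and `Φ` are comparable for large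
arguments, and a bounded factor between `Φ(w)` and `Φ(v)` gives a bounded factor `2ᵏ` between
`w` and `v` for small `t`. On the rest of `(0, T]`, which is compact, continuity suffices.
-/

open Filter MeasureTheory Set Topology

noncomputable section

namespace IsRV

variable {f g : ℝ → ℝ} {ρ σ : ℝ}

theorem mul (hf : IsRV f ρ) (hg : IsRV g σ) : IsRV (fun u => f u * g u) (ρ + σ) := by
  intro ξ hξ
  rw [Real.rpow_add hξ]
  exact ((hf ξ hξ).mul (hg ξ hξ)).congr fun u => (mul_div_mul_comm _ _ _ _).symm

theorem inv (hf : IsRV f ρ) : IsRV (fun u => (f u)⁻¹) (-ρ) := by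
  intro ξ hξ
  rw [Real.rpow_neg hξ.le]
  exact ((hf ξ hξ).inv₀ (Real.rpow_pos_of_pos hξ ρ).ne').congr fun u => by
    rw [inv_div_inv, inv_div]

theorem eventually_le_mul {ξ r : ℝ} (hf : IsRV f ρ) (hξ : 0 < ξ) (hr : ξ ^ ρ < r)
    (hpos : ∀ᶠ u in atTop, 0 < f u) : ∀ᶠ u in atTop, f (ξ * u) ≤ r * f u := by
  filter_upwards [(hf ξ hξ).eventually_lt_const hr, hpos] with u hlt hu
  exact ((div_lt_iff₀ hu).1 hlt).le

theorem exists_eventually_two_mul_le (hf : IsRV f ρ) (hρ : ρ < -1)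
    (hpos : ∀ᶠ u in atTop, 0 < f u) :
    ∃ r, 0 < r ∧ 2 * r < 1 ∧ ∀ᶠ u in atTop, f (2 * u) ≤ r * f u := by
  have h2ρ : (2 : ℝ) ^ ρ < 1 / 2 := by
    calc (2 : ℝ) ^ ρ < 2 ^ (-1 : ℝ) := Real.rpow_lt_rpow_of_exponent_lt one_lt_two hρ
      _ = 1 / 2 := by rw [Real.rpow_neg_one, one_div]
  obtain ⟨r, hρr, hr⟩ := exists_between h2ρ
  exact ⟨r, (Real.rpow_pos_of_pos two_pos ρ).trans hρr, by linarith,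
    hf.eventually_le_mul two_pos hρr hpos⟩

end IsRV

theorem eventually_mul_le_and_le_mul_of_tendsto_div {α : Type*} {l : Filter α} {f g : α → ℝ}
    {L : ℝ} (h : Tendsto (fun x => f x / g x) l (𝓝 L)) (hL : 0 < L)
    (hg : ∀ᶠ x in l, 0 < g x) : ∀ᶠ x in l, L / 2 * g x ≤ f x ∧ f x ≤ 2 * L * g x := by
  filter_upwards [h.eventually (Icc_mem_nhds (by linarith : L / 2 < L) (by linarith : L < 2 * L)),
    hg] with x hx hgx
  rwa [le_div_iff₀ hgx, div_le_iff₀ hgx] at hx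

theorem intervalIntegrable_of_continuousOn_Ioi {f : ℝ → ℝ} {a b : ℝ}
    (hf : ContinuousOn f (Ioi 0)) (ha : 0 < a) (hb : 0 < b) : IntervalIntegrable f volume a b :=
  (hf.mono fun _ hx => (lt_min ha hb).trans_le hx.1).intervalIntegrable

theorem integrableOn_Ioi_of_continuousOn_Ici {f : ℝ → ℝ} {x u₀ : ℝ}
    (hcont : ContinuousOn f (Ici x)) (hf : IntegrableOn f (Ioi u₀)) : IntegrableOn f (Ioi x) :=
  (((hcont.mono Icc_subset_Ici_self).integrableOn_Icc.mono_set Ioc_subset_Icc_self).union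
    hf).mono_set fun t ht => (le_or_gt t u₀).imp (fun h => ⟨ht, h⟩) id

section DyadicDecay

variable {f : ℝ → ℝ} {r u₀ : ℝ}

theorem intervalIntegral_two_mul_le (hcont : ContinuousOn f (Ioi 0)) (hu₀ : 0 < u₀)
    (hdecay : ∀ u, u₀ ≤ u → f (2 * u) ≤ r * f u) {a b : ℝ} (ha : u₀ ≤ a) (hab : a ≤ b) :
    ∫ x in (2 * a)..(2 * b), f x ≤ 2 * r * ∫ x in a..b, f x := by
  have ha₀ : 0 < a := hu₀.trans_le ha
  have hcomp : ContinuousOn (fun x => f (2 * x)) (Ioi 0) :=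
    hcont.comp (continuousOn_const.mul continuousOn_id) fun x hx => mem_Ioi.2 (mul_pos two_pos hx)
  have hmono : ∫ x in a..b, f (2 * x) ≤ ∫ x in a..b, r * f x :=
    intervalIntegral.integral_mono_on hab
      (intervalIntegrable_of_continuousOn_Ioi hcomp ha₀ (ha₀.trans_le hab))
      ((intervalIntegrable_of_continuousOn_Ioi hcont ha₀ (ha₀.trans_le hab)).const_mul r)
      fun x hx => hdecay x (ha.trans hx.1)
  rw [intervalIntegral.integral_comp_mul_left _ two_ne_zero, smul_eq_mul,
    intervalIntegral.integral_const_mul] at hmono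
  linarith

theorem intervalIntegral_two_pow_mul_le (hcont : ContinuousOn f (Ioi 0))
    (hnonneg : ∀ u, 0 < u → 0 ≤ f u) (hu₀ : 0 < u₀) (hr₀ : 0 ≤ r) (hr : 2 * r < 1)
    (hdecay : ∀ u, u₀ ≤ u → f (2 * u) ≤ r * f u) (n : ℕ) :
    ∫ x in u₀..(2 ^ n * u₀), f x ≤ (∫ x in u₀..(2 * u₀), f x) / (1 - 2 * r) := by
  set J := ∫ x in u₀..(2 * u₀), f x
  have hJ : 0 ≤ J := intervalIntegral.integral_nonneg (by linarith) fun u hu =>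
    hnonneg u (hu₀.trans_le hu.1)
  have hu₀n : ∀ n : ℕ, u₀ ≤ 2 ^ n * u₀ := fun n =>
    le_mul_of_one_le_left hu₀.le (one_le_pow₀ one_le_two)
  induction n with
  | zero => simpa using div_nonneg hJ (by linarith)
  | succ n ih =>
    have hsplit : ∫ x in u₀..(2 ^ (n + 1) * u₀), f x
        = J + ∫ x in (2 * u₀)..(2 * (2 ^ n * u₀)), f x := by
      rw [intervalIntegral.integral_add_adjacent_intervals
        (intervalIntegrable_of_continuousOn_Ioi hcont hu₀ (by positivity))
        (intervalIntegrable_of_continuousOn_Ioi hcont (by positivity) (by positivity))]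
      ring_nf
    have hstep := intervalIntegral_two_mul_le hcont hu₀ hdecay le_rfl (hu₀n n)
    rw [hsplit, le_div_iff₀ (by linarith)]
    rw [le_div_iff₀ (by linarith)] at ih
    nlinarith

theorem integrableOn_Ioi_of_two_mul_le (hcont : ContinuousOn f (Ioi 0))
    (hnonneg : ∀ u, 0 < u → 0 ≤ f u) (hu₀ : 0 < u₀) (hr₀ : 0 ≤ r) (hr : 2 * r < 1)
    (hdecay : ∀ u, u₀ ≤ u → f (2 * u) ≤ r * f u) : IntegrableOn f (Ioi u₀) := by
  refine integrableOn_Ioi_of_intervalIntegral_norm_bounded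
    ((∫ x in u₀..(2 * u₀), f x) / (1 - 2 * r)) u₀ (b := fun n : ℕ => 2 ^ n * u₀)
    (fun n => (hcont.mono fun _ hx => hu₀.trans_le hx.1).integrableOn_Icc.mono_set
      Ioc_subset_Icc_self)
    ((tendsto_pow_atTop_atTop_of_one_lt one_lt_two).atTop_mul_const hu₀)
    (Eventually.of_forall fun n => ?_)
  rw [intervalIntegral.integral_congr fun x hx => Real.norm_of_nonneg (hnonneg x ?_)]
  · exact intervalIntegral_two_pow_mul_le hcont hnonneg hu₀ hr₀ hr hdecay n
  · rw [uIcc_of_le (le_mul_of_one_le_left hu₀.le (one_le_pow₀ one_le_two))] at hx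
    exact hu₀.trans_le hx.1

end DyadicDecay

def tailIntegral (f : ℝ → ℝ) (x : ℝ) : ℝ := ∫ u in Ioi x, f u

section TailIntegral

variable {f : ℝ → ℝ} {a x y : ℝ}

theorem tailIntegral_eq_intervalIntegral_add (hf : IntegrableOn f (Ioi a)) (hay : a ≤ y) :
    tailIntegral f a = (∫ u in a..y, f u) + tailIntegral f y := by
  rw [tailIntegral, tailIntegral, intervalIntegral.integral_of_le hay,
    ← setIntegral_union (Ioc_disjoint_Ioi le_rfl) measurableSet_Ioi
      (hf.mono_set Ioc_subset_Ioi_self) (hf.mono_set (Ioi_subset_Ioi hay)),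
    Ioc_union_Ioi_eq_Ioi hay]

theorem tailIntegral_le_tailIntegral (hf : IntegrableOn f (Ioi x))
    (hnonneg : ∀ u, x < u → 0 ≤ f u) (hxy : x ≤ y) : tailIntegral f y ≤ tailIntegral f x :=
  setIntegral_mono_set hf (ae_restrict_of_forall_mem measurableSet_Ioi hnonneg)
    (Ioi_subset_Ioi hxy).eventuallyLE

theorem tailIntegral_mono {g : ℝ → ℝ} (hf : IntegrableOn f (Ioi x))
    (hg : IntegrableOn g (Ioi x)) (hle : ∀ u, x < u → f u ≤ g u) :
    tailIntegral f x ≤ tailIntegral g x :=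
  setIntegral_mono_on hf hg measurableSet_Ioi hle

theorem tailIntegral_const_mul (c : ℝ) :
    tailIntegral (fun u => c * f u) x = c * tailIntegral f x :=
  integral_const_mul c _

theorem hasDerivAt_tailIntegral (hcont : ContinuousOn f (Ioi a)) (hf : IntegrableOn f (Ioi a))
    (hax : a < x) : HasDerivAt (tailIntegral f) (-f x) x := by
  have hprim : HasDerivAt (fun y => ∫ u in a..y, f u) (f x) x :=
    intervalIntegral.integral_hasDerivAt_right
      ((intervalIntegrable_iff_integrableOn_Ioc_of_le hax.le).2 (hf.mono_set Ioc_subset_Ioi_self))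
      (hcont.stronglyMeasurableAtFilter isOpen_Ioi x hax)
      (hcont.continuousAt (Ioi_mem_nhds hax))
  refine (((hasDerivAt_const x (tailIntegral f a)).sub hprim).congr_of_eventuallyEq
    ?_).congr_deriv (zero_sub _)
  filter_upwards [Ioi_mem_nhds hax] with y hy
  show tailIntegral f y = tailIntegral f a - ∫ u in a..y, f u
  rw [tailIntegral_eq_intervalIntegral_add hf hy.le, add_sub_cancel_left]

theorem tendsto_tailIntegral_atTop (hf : IntegrableOn f (Ioi a)) :
    Tendsto (tailIntegral f) atTop (𝓝 0) := by
  have hempty : ⋂ x : ℝ, Ioi x = ∅ :=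
    eq_empty_of_forall_notMem fun x hx => lt_irrefl x (mem_iInter.1 hx x)
  show Tendsto (fun x => ∫ u in Ioi x, f u) atTop (𝓝 0)
  simpa [hempty] using
    tendsto_setIntegral_of_antitone (fun _ => measurableSet_Ioi)
      (fun _ _ h => Ioi_subset_Ioi h) ⟨a, hf⟩

end TailIntegral

section TailDecay

variable {f : ℝ → ℝ} {r u₀ : ℝ}

theorem tailIntegral_two_mul_le {x : ℝ} (hx : 0 ≤ x) (hf : IntegrableOn f (Ioi x))
    (hdecay : ∀ u, x < u → f (2 * u) ≤ r * f u) :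
    tailIntegral f (2 * x) ≤ 2 * r * tailIntegral f x := by
  have hcomp : IntegrableOn (fun u => f (2 * u)) (Ioi x) :=
    (integrableOn_Ioi_comp_mul_left_iff f x two_pos).2
      (hf.mono_set (Ioi_subset_Ioi (by linarith)))
  have hmono := tailIntegral_mono hcomp (hf.const_mul r) hdecay
  rw [tailIntegral_const_mul, tailIntegral, integral_comp_mul_left_Ioi f x two_pos,
    smul_eq_mul] at hmono
  rw [tailIntegral]
  linarith

theorem tailIntegral_two_pow_mul_le (hu₀ : 0 ≤ u₀) (hf : IntegrableOn f (Ioi u₀)) (hr : 0 ≤ r)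
    (hdecay : ∀ u, u₀ ≤ u → f (2 * u) ≤ r * f u) {x : ℝ} (hx : u₀ ≤ x) (k : ℕ) :
    tailIntegral f (2 ^ k * x) ≤ (2 * r) ^ k * tailIntegral f x := by
  induction k with
  | zero => simp
  | succ k ih =>
    have hk : u₀ ≤ 2 ^ k * x :=
      hx.trans (le_mul_of_one_le_left (hu₀.trans hx) (one_le_pow₀ one_le_two))
    calc tailIntegral f (2 ^ (k + 1) * x) = tailIntegral f (2 * (2 ^ k * x)) := by ring_nf
      _ ≤ 2 * r * tailIntegral f (2 ^ k * x) :=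
        tailIntegral_two_mul_le (hu₀.trans hk) (hf.mono_set (Ioi_subset_Ioi hk))
          fun u hu => hdecay u (hk.trans hu.le)
      _ ≤ 2 * r * ((2 * r) ^ k * tailIntegral f x) := by gcongr
      _ = (2 * r) ^ (k + 1) * tailIntegral f x := by ring

theorem lt_two_pow_mul_of_lt_tailIntegral (hu₀ : 0 ≤ u₀) (hf : IntegrableOn f (Ioi u₀))
    (hnonneg : ∀ u, u₀ < u → 0 ≤ f u) (hr : 0 ≤ r) (hdecay : ∀ u, u₀ ≤ u → f (2 * u) ≤ r * f u)
    {x y : ℝ} (hx : u₀ ≤ x) {k : ℕ} (h : (2 * r) ^ k * tailIntegral f x < tailIntegral f y) :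
    y < 2 ^ k * x := by
  by_contra! hy
  have hk : u₀ ≤ 2 ^ k * x :=
    hx.trans (le_mul_of_one_le_left (hu₀.trans hx) (one_le_pow₀ one_le_two))
  have hanti := tailIntegral_le_tailIntegral (hf.mono_set (Ioi_subset_Ioi hk))
    (fun u hu => hnonneg u (hk.trans_lt hu)) hy
  linarith [tailIntegral_two_pow_mul_le hu₀ hf hr hdecay hx k]

theorem exists_le_mul_of_tailIntegral_eq_of_two_mul_le {f' : ℝ → ℝ} {a b : ℝ} (hu₀ : 0 ≤ u₀)
    (hf : IntegrableOn f (Ioi u₀)) (hf' : IntegrableOn f' (Ioi u₀))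
    (hnonneg : ∀ u, u₀ < u → 0 ≤ f u) (hr₀ : 0 ≤ r) (hr : 2 * r < 1)
    (hdecay : ∀ u, u₀ ≤ u → f (2 * u) ≤ r * f u) (ha : 0 < a) (hb : 0 < b)
    (hbounds : ∀ u, u₀ ≤ u → a * f u ≤ f' u ∧ f' u ≤ b * f u) :
    ∃ K, ∀ x y, u₀ ≤ x → u₀ ≤ y → 0 < tailIntegral f y →
      tailIntegral f y = tailIntegral f' x → y ≤ K * x ∧ x ≤ K * y := by
  -- doubling the argument `k` times shrinks the tail by more than the ratio bounds `a`, `b` allow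
  obtain ⟨k, hk⟩ := exists_pow_lt_of_lt_one (lt_min ha (inv_pos.2 hb)) hr
  have hka : (2 * r) ^ k < a := hk.trans_le (min_le_left _ _)
  have hkb : b * (2 * r) ^ k < 1 := by
    have := (mul_lt_mul_iff_right₀ hb).2 (hk.trans_le (min_le_right _ _))
    rwa [mul_inv_cancel₀ hb.ne'] at this
  refine ⟨2 ^ k, fun x y hx hy hpos heq => ?_⟩
  have hfx := hf.mono_set (Ioi_subset_Ioi hx)
  have hf'x := hf'.mono_set (Ioi_subset_Ioi hx)
  refine ⟨?_, ?_⟩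
  · have hlow := tailIntegral_mono (hfx.const_mul a) hf'x
      fun u hu => (hbounds u (hx.trans hu.le)).1
    rw [tailIntegral_const_mul] at hlow
    refine (lt_two_pow_mul_of_lt_tailIntegral hu₀ hf hnonneg hr₀ hdecay hx ?_).le
    have : 0 ≤ tailIntegral f x := setIntegral_nonneg measurableSet_Ioi
      fun u hu => hnonneg u (hx.trans_lt hu)
    nlinarith [pow_nonneg (mul_nonneg zero_le_two hr₀) k]
  · have hup := tailIntegral_mono hf'x (hfx.const_mul b)
      fun u hu => (hbounds u (hx.trans hu.le)).2
    rw [tailIntegral_const_mul] at hup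
    refine (lt_two_pow_mul_of_lt_tailIntegral hu₀ hf hnonneg hr₀ hdecay hy ?_).le
    nlinarith

end TailDecay

theorem IsRV.exists_le_mul_of_tailIntegral_eq {f f' : ℝ → ℝ} {ρ L : ℝ} (hf : IsRV f ρ)
    (hρ : ρ < -1) (hfc : ContinuousOn f (Ioi 0)) (hf'c : ContinuousOn f' (Ioi 0))
    (hfpos : ∀ u, 0 < u → 0 < f u) (hratio : Tendsto (fun u => f' u / f u) atTop (𝓝 L))
    (hL : 0 < L) :
    ∃ u₀, IntegrableOn f (Ioi u₀) ∧ IntegrableOn f' (Ioi u₀) ∧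
      ∃ K, ∀ x y, u₀ ≤ x → u₀ ≤ y → 0 < tailIntegral f y →
        tailIntegral f y = tailIntegral f' x → y ≤ K * x ∧ x ≤ K * y := by
  have hpos : ∀ᶠ u : ℝ in atTop, 0 < u := eventually_gt_atTop 0
  obtain ⟨r, hr₀, hr, hdecay⟩ := hf.exists_eventually_two_mul_le hρ (hpos.mono hfpos)
  obtain ⟨u₀, hu₀⟩ := (hdecay.and ((eventually_mul_le_and_le_mul_of_tendsto_div hratio hL
    (hpos.mono hfpos)).and hpos)).exists_forall_of_atTop
  have hu₀pos : 0 < u₀ := (hu₀ u₀ le_rfl).2.2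
  have hint : IntegrableOn f (Ioi u₀) :=
    integrableOn_Ioi_of_two_mul_le hfc (fun u hu => (hfpos u hu).le) hu₀pos hr₀.le hr
      fun u hu => (hu₀ u hu).1
  have hint' : IntegrableOn f' (Ioi u₀) :=
    (hint.const_mul (2 * L)).mono'
      ((hf'c.mono (Ioi_subset_Ioi hu₀pos.le)).aestronglyMeasurable measurableSet_Ioi)
      (ae_restrict_of_forall_mem measurableSet_Ioi fun u hu => by
        obtain ⟨hlow, hup⟩ := (hu₀ u hu.le).2.1
        have hnonneg : 0 ≤ L / 2 * f u := by have := hfpos u (hu₀pos.trans hu); positivity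
        rwa [Real.norm_of_nonneg (hnonneg.trans hlow)])
  exact ⟨u₀, hint, hint',
    exists_le_mul_of_tailIntegral_eq_of_two_mul_le hu₀pos.le hint hint'
      (fun u hu => (hfpos u (hu₀pos.trans hu)).le) hr₀.le hr (fun u hu => (hu₀ u hu).1)
      (half_pos hL) (by positivity) fun u hu => (hu₀ u hu).2.1⟩

theorem tailIntegral_inv_comp_eq {F u : ℝ → ℝ} {T t u₀ : ℝ} (hF : ContinuousOn F (Ioi 0))
    (hFpos : ∀ x, 0 < x → 0 < F x) (hint : IntegrableOn (fun x => (F x)⁻¹) (Ioi u₀))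
    (hupos : ∀ τ ∈ Ioc 0 T, 0 < u τ) (hu : ∀ τ ∈ Ioc 0 T, HasDerivAt u (-F (u τ)) τ)
    (hu₀ : Tendsto u (𝓝[>] 0) atTop) (ht : t ∈ Ioc 0 T) :
    tailIntegral (fun x => (F x)⁻¹) (u t) = t := by
  set H : ℝ → ℝ := fun τ => tailIntegral (fun x => (F x)⁻¹) (u τ) - τ
  have hFinv : ContinuousOn (fun x => (F x)⁻¹) (Ioi 0) :=
    hF.inv₀ fun x hx => (hFpos x hx).ne'
  have hint' : ∀ x, 0 < x → IntegrableOn (fun x => (F x)⁻¹) (Ioi x) := fun x hx =>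
    integrableOn_Ioi_of_continuousOn_Ici (hFinv.mono (Ici_subset_Ioi.2 hx)) hint
  have hH : ∀ τ ∈ Ioc 0 T, HasDerivAt H 0 τ := by
    intro τ hτ
    have hpos := hupos τ hτ
    have hd := ((hasDerivAt_tailIntegral (hFinv.mono (Ioi_subset_Ioi (half_pos hpos).le))
      (hint' _ (half_pos hpos)) (half_lt_self hpos)).comp τ (hu τ hτ)).sub (hasDerivAt_id τ)
    rwa [neg_mul_neg, inv_mul_cancel₀ (hFpos _ hpos).ne', sub_self] at hd
  have hconst : ∀ s ∈ Ioc 0 t, H t = H s := by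
    intro s hs
    have hsub : Icc s t ⊆ Ioc 0 T := fun τ hτ => ⟨hs.1.trans_le hτ.1, hτ.2.trans ht.2⟩
    exact constant_of_has_deriv_right_zero
      (fun τ hτ => (hH τ (hsub hτ)).continuousAt.continuousWithinAt)
      (fun τ hτ => (hH τ (hsub (Ico_subset_Icc_self hτ))).hasDerivWithinAt) t
      (right_mem_Icc.2 hs.2)
  have hlim : Tendsto H (𝓝[>] 0) (𝓝 0) := by
    simpa using ((tendsto_tailIntegral_atTop hint).comp hu₀).sub
      (tendsto_id.mono_left nhdsWithin_le_nhds)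
  have hHt : H t = 0 := tendsto_nhds_unique (tendsto_const_nhds.congr' (by
    filter_upwards [Ioo_mem_nhdsGT ht.1] with s hs using hconst s ⟨hs.1, hs.2.le⟩)) hlim
  exact sub_eq_zero.1 hHt

theorem IsCompact.exists_le_mul_of_continuousOn {s : Set ℝ} {v w : ℝ → ℝ} (hs : IsCompact s)
    (hv : ContinuousOn v s) (hw : ContinuousOn w s) (hvpos : ∀ t ∈ s, 0 < v t) :
    ∃ M, ∀ t ∈ s, w t ≤ M * v t := by
  obtain ⟨M, hM⟩ := hs.bddAbove_image (hw.div hv fun t ht => (hvpos t ht).ne')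
  exact ⟨M, fun t ht => (div_le_iff₀ (hvpos t ht)).1 (hM (mem_image_of_mem _ ht))⟩

theorem exists_inv_mul_le_and_le_mul {v w : ℝ → ℝ} {T K : ℝ}
    (hv : ContinuousOn v (Ioc 0 T)) (hw : ContinuousOn w (Ioc 0 T))
    (hvpos : ∀ t ∈ Ioc 0 T, 0 < v t) (hwpos : ∀ t ∈ Ioc 0 T, 0 < w t)
    (hnear : ∀ᶠ t in 𝓝[>] 0, w t ≤ K * v t ∧ v t ≤ K * w t) :
    ∃ C, 1 < C ∧ ∀ t ∈ Ioc 0 T, C⁻¹ * v t ≤ w t ∧ w t ≤ C * v t := by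
  obtain ⟨t₁, ht₁, hnear⟩ := mem_nhdsGT_iff_exists_Ioo_subset.1 hnear
  have hsub : Icc t₁ T ⊆ Ioc 0 T := fun t ht => ⟨lt_of_lt_of_le ht₁ ht.1, ht.2⟩
  obtain ⟨M₁, hM₁⟩ := isCompact_Icc.exists_le_mul_of_continuousOn (hv.mono hsub) (hw.mono hsub)
    fun t ht => hvpos t (hsub ht)
  obtain ⟨M₂, hM₂⟩ := isCompact_Icc.exists_le_mul_of_continuousOn (hw.mono hsub) (hv.mono hsub)
    fun t ht => hwpos t (hsub ht)
  set C := max (max 2 K) (max M₁ M₂)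
  have hK : K ≤ C := le_max_of_le_left (le_max_right _ _)
  have hC : 1 < C := one_lt_two.trans_le (le_max_of_le_left (le_max_left _ _))
  refine ⟨C, hC, fun t ht => ?_⟩
  rw [inv_mul_le_iff₀ (zero_lt_one.trans hC)]
  have hvt := (hvpos t ht).le
  have hwt := (hwpos t ht).le
  rcases lt_or_ge t t₁ with h | h
  · obtain ⟨hwv, hvw⟩ := hnear ⟨ht.1, h⟩
    exact ⟨hvw.trans (by gcongr), hwv.trans (by gcongr)⟩
  · exact ⟨(hM₂ t ⟨h, ht.2⟩).trans (by gcongr; exact le_max_of_le_right (le_max_right _ _)),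
      (hM₁ t ⟨h, ht.2⟩).trans (by gcongr; exact le_max_of_le_right (le_max_left _ _))⟩

/-- Let `g, h` be positive `C¹` functions on `(0,∞)` with `g ∈ RV_θ`, `h ∈ RV_γ`,
`γ + θ > 1`, and let `c > 0`. If `v, w` solve `v' = -g(c v) h(v)`, `w' = -g(w) h(w)`
on `(0,T]` with `v, w → ∞` as `t → 0⁺`, then there is `C > 1` with
`C⁻¹ v(t) ≤ w(t) ≤ C v(t)` on `(0,T]`. -/
theorem blowup_ode_two_sided_comparison (θ γ c : ℝ) (hγθ : 1 < γ + θ) (hc : 0 < c)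
    (g h : ℝ → ℝ)
    (hgC : ContDiffOn ℝ 1 g (Ioi (0:ℝ))) (hhC : ContDiffOn ℝ 1 h (Ioi (0:ℝ)))
    (hgpos : ∀ u : ℝ, 0 < u → 0 < g u) (hhpos : ∀ u : ℝ, 0 < u → 0 < h u)
    (hgRV : IsRV g θ) (hhRV : IsRV h γ)
    (T : ℝ) (hT : 0 < T) (v w : ℝ → ℝ)
    (hvpos : ∀ t ∈ Ioc (0:ℝ) T, 0 < v t) (hwpos : ∀ t ∈ Ioc (0:ℝ) T, 0 < w t)
    (hv : ∀ t ∈ Ioc (0:ℝ) T, HasDerivAt v (-(g (c * v t) * h (v t))) t)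
    (hw : ∀ t ∈ Ioc (0:ℝ) T, HasDerivAt w (-(g (w t) * h (w t))) t)
    (hv0 : Tendsto v (𝓝[>] (0:ℝ)) atTop) (hw0 : Tendsto w (𝓝[>] (0:ℝ)) atTop) :
    ∃ C : ℝ, 1 < C ∧ ∀ t ∈ Ioc (0:ℝ) T, C⁻¹ * v t ≤ w t ∧ w t ≤ C * v t := by
  set F : ℝ → ℝ := fun u => g u * h u
  set Fc : ℝ → ℝ := fun u => g (c * u) * h u
  have hFpos : ∀ u, 0 < u → 0 < F u := fun u hu => mul_pos (hgpos u hu) (hhpos u hu)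
  have hFcpos : ∀ u, 0 < u → 0 < Fc u := fun u hu =>
    mul_pos (hgpos _ (mul_pos hc hu)) (hhpos u hu)
  have hF : ContinuousOn F (Ioi 0) := hgC.continuousOn.mul hhC.continuousOn
  have hFc : ContinuousOn Fc (Ioi 0) :=
    (hgC.continuousOn.comp (continuousOn_const.mul continuousOn_id)
      fun u hu => mem_Ioi.2 (mul_pos hc hu)).mul hhC.continuousOn
  have hratio : Tendsto (fun u => (Fc u)⁻¹ / (F u)⁻¹) atTop (𝓝 (c ^ (-θ))) :=
    (hgRV.inv c hc).congr' <| (eventually_gt_atTop 0).mono fun u hu => by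
      simp only [F, Fc, mul_inv, mul_div_mul_right _ _ (inv_ne_zero (hhpos u hu).ne')]
  obtain ⟨u₀, hint, hintc, K, hK⟩ := (hgRV.mul hhRV).inv.exists_le_mul_of_tailIntegral_eq
    (f' := fun u => (Fc u)⁻¹) (by linarith) (hF.inv₀ fun u hu => (hFpos u hu).ne')
    (hFc.inv₀ fun u hu => (hFcpos u hu).ne') (fun u hu => inv_pos.2 (hFpos u hu)) hratio
    (Real.rpow_pos_of_pos hc _)
  have htail : ∀ t ∈ Ioc 0 T, tailIntegral (fun u => (F u)⁻¹) (w t) = t := fun t ht =>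
    tailIntegral_inv_comp_eq hF hFpos hint hwpos hw hw0 ht
  have htailc : ∀ t ∈ Ioc 0 T, tailIntegral (fun u => (Fc u)⁻¹) (v t) = t := fun t ht =>
    tailIntegral_inv_comp_eq hFc hFcpos hintc hvpos hv hv0 ht
  refine exists_inv_mul_le_and_le_mul (K := K)
    (fun t ht => (hv t ht).continuousAt.continuousWithinAt)
    (fun t ht => (hw t ht).continuousAt.continuousWithinAt) hvpos hwpos ?_
  filter_upwards [Ioc_mem_nhdsGT hT, hv0.eventually (eventually_ge_atTop u₀),
    hw0.eventually (eventually_ge_atTop u₀)] with t ht hvt hwt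
  exact hK (v t) (w t) hvt hwt (by rw [htail t ht]; exact ht.1) (by rw [htail t ht, htailc t ht])
end
end

section
/- Let p > 1, ℓ ∈ (0,∞), and k ∈ K_ℓ with K(s) = ∫₀ˢ k(θ) dθ. Let f ∈ C¹([0,∞)) satisfy f(0) = 0, f'(u) > 0 for u > 0, and f ∈ RV_ρ with ρ > max{1, p−1, p−1−(p−2)/ℓ}. Set r = (ρ+1)/(ρ+1−p), F(t) = ∫₀ᵗ f(s) ds, p' = p/(p−1), and let φ : (0,∞) → (0,∞) be defined by ∫_{φ(t)}^∞ ds/(p'F(s))^{1/p} = t. Then for any constant ς with p(1−ℓ)/(r−1) < ς < ρ−1, one has lim_{s→0⁺} φ(K(s))^{−ς}/k(s)^p = 0. -/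
/-!
Write `K(s) = ∫₀ˢ k` and `h = K / k`. Monotonicity of `k` gives `h(0+) = 0`, so by L'Hôpital
`h(s) / s → ℓ`: hence `k(s) ≥ K(s) / ((ℓ + 1) s)` near `0`, and integrating `(log K)' = 1 / h`
gives `s ≤ C K(s)^ν` for every `ν < ℓ`.

Iterating `f(2u) / f(u) → 2^ρ` gives Potter bounds `c x^(ρ-ε) ≤ f(x) ≤ C x^(ρ+ε)`, hence
`F(x) ≍ x^(ρ+1±ε)` and `∫ₓ^∞ (p'F)^(-1/p) ≍ x^(-α∓ε)` with `α = (ρ + 1) / p - 1`. Inverting the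
defining relation of `φ` yields `φ(t)^(-ς) ≤ D t^σ` for every `σ < ς / α`.

Together, `φ(K(s))^(-ς) / k(s)^p ≤ const · K(s)^(σ + p(ν - 1))`. Since `r - 1 = 1 / α`, the
hypothesis on `ς` reads `p(1 - ℓ) < ς / α`, which leaves room for `σ < ς / α` and `ν < ℓ` making
this exponent positive.
-/

open Filter MeasureTheory Set Topology

noncomputable section

open Real

theorem exists_mul_rpow_le_of_doubling {f : ℝ → ℝ} {U β : ℝ} (hU : 0 < U) (hβ : 0 ≤ β)
    (hmono : MonotoneOn f (Ici U)) (hfU : 0 < f U)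
    (hdouble : ∀ u, U ≤ u → 2 ^ β * f u ≤ f (2 * u)) :
    ∃ c > 0, ∀ x, U ≤ x → c * x ^ β ≤ f x := by
  refine ⟨f U / (2 * U) ^ β, by positivity, fun x hx => ?_⟩
  obtain ⟨n, hn⟩ := pow_unbounded_of_one_lt (x / U) one_lt_two
  induction n generalizing x with
  | zero => rw [pow_zero, div_lt_one hU] at hn; linarith
  | succ n ih =>
    by_cases hx2 : x ≤ 2 * U
    · calc f U / (2 * U) ^ β * x ^ β ≤ f U / (2 * U) ^ β * (2 * U) ^ β := by
            gcongr; linarith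
        _ = f U := div_mul_cancel₀ _ (by positivity)
        _ ≤ f x := hmono self_mem_Ici hx hx
    · have hx2' : U ≤ x / 2 := by linarith
      have hn' : x / 2 / U < 2 ^ n := by
        rwa [div_right_comm, div_lt_iff₀ two_pos, ← pow_succ]
      have hhalf := ih (x / 2) hx2' hn'
      calc f U / (2 * U) ^ β * x ^ β = 2 ^ β * (f U / (2 * U) ^ β * (x / 2) ^ β) := by
            rw [div_rpow (by linarith) zero_le_two]; field_simp
        _ ≤ 2 ^ β * f (x / 2) := by gcongr
        _ ≤ f (2 * (x / 2)) := hdouble _ hx2'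
        _ = f x := by rw [mul_div_cancel₀ x two_ne_zero]

theorem exists_le_mul_rpow_of_doubling {f : ℝ → ℝ} {U β : ℝ} (hU : 0 < U) (hβ : 0 ≤ β)
    (hmono : MonotoneOn f (Ici U)) (hfU : 0 < f U)
    (hdouble : ∀ u, U ≤ u → f (2 * u) ≤ 2 ^ β * f u) :
    ∃ C > 0, ∀ x, U ≤ x → f x ≤ C * x ^ β := by
  have h2U : f U ≤ f (2 * U) := hmono self_mem_Ici (show U ≤ 2 * U by linarith) (by linarith)
  have h2U₀ : 0 < f (2 * U) := hfU.trans_le h2U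
  refine ⟨f (2 * U) / U ^ β, by positivity, fun x hx => ?_⟩
  obtain ⟨n, hn⟩ := pow_unbounded_of_one_lt (x / U) one_lt_two
  induction n generalizing x with
  | zero => rw [pow_zero, div_lt_one hU] at hn; linarith
  | succ n ih =>
    by_cases hx2 : x ≤ 2 * U
    · calc f x ≤ f (2 * U) := hmono hx (show U ≤ 2 * U by linarith) hx2
        _ = f (2 * U) / U ^ β * U ^ β := (div_mul_cancel₀ _ (by positivity)).symm
        _ ≤ f (2 * U) / U ^ β * x ^ β := by gcongr
    · have hx2' : U ≤ x / 2 := by linarith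
      have hn' : x / 2 / U < 2 ^ n := by
        rwa [div_right_comm, div_lt_iff₀ two_pos, ← pow_succ]
      have hhalf := ih (x / 2) hx2' hn'
      calc f x = f (2 * (x / 2)) := by rw [mul_div_cancel₀ x two_ne_zero]
        _ ≤ 2 ^ β * f (x / 2) := hdouble _ hx2'
        _ ≤ 2 ^ β * (f (2 * U) / U ^ β * (x / 2) ^ β) := by gcongr
        _ = f (2 * U) / U ^ β * x ^ β := by
            rw [div_rpow (by linarith) zero_le_two]; field_simp

theorem integral_le_mul_of_monotoneOn {f : ℝ → ℝ} {x : ℝ} (hf : MonotoneOn f (Icc 0 x))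
    (hx : 0 ≤ x) : ∫ s in (0:ℝ)..x, f s ≤ x * f x := by
  have hint : IntervalIntegrable f volume 0 x := (uIcc_of_le hx ▸ hf).intervalIntegrable
  calc ∫ s in (0:ℝ)..x, f s ≤ ∫ _ in (0:ℝ)..x, f x :=
        intervalIntegral.integral_mono_on hx hint intervalIntegrable_const
          fun s hs => hf hs ⟨hx, le_rfl⟩ hs.2
    _ = x * f x := by simp

theorem half_mul_le_integral_of_monotoneOn {f : ℝ → ℝ} {x : ℝ} (hf : MonotoneOn f (Icc 0 x))
    (hf₀ : 0 ≤ f 0) (hx : 0 ≤ x) : x / 2 * f (x / 2) ≤ ∫ s in (0:ℝ)..x, f s := by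
  have hint : ∀ a b, a ∈ Icc 0 x → b ∈ Icc 0 x → IntervalIntegrable f volume a b :=
    fun a b ha hb => (hf.mono (uIcc_subset_Icc ha hb)).intervalIntegrable
  have hx2 : x / 2 ∈ Icc 0 x := ⟨by linarith, by linarith⟩
  have h0 : (0:ℝ) ∈ Icc 0 x := ⟨le_rfl, hx⟩
  have hxx : x ∈ Icc 0 x := ⟨hx, le_rfl⟩
  rw [← intervalIntegral.integral_add_adjacent_intervals (hint 0 _ h0 hx2) (hint _ x hx2 hxx)]
  have hfirst : 0 ≤ ∫ s in (0:ℝ)..x / 2, f s :=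
    intervalIntegral.integral_nonneg hx2.1 fun s hs =>
      hf₀.trans (hf h0 ⟨hs.1, hs.2.trans hx2.2⟩ hs.1)
  have hsecond : ∫ _ in x / 2..x, f (x / 2) ≤ ∫ s in x / 2..x, f s :=
    intervalIntegral.integral_mono_on (by linarith) intervalIntegrable_const (hint _ x hx2 hxx)
      fun s hs => hf hx2 ⟨hx2.1.trans hs.1, hs.2⟩ hs.1
  rw [intervalIntegral.integral_const, smul_eq_mul] at hsecond
  linarith

theorem rpow_neg_le_of_mul_rpow_neg_le {x t A α ς : ℝ} (hx : 0 < x) (hA : 0 < A) (hα : 0 < α)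
    (hς : 0 ≤ ς) (h : A * x ^ (-α) ≤ t) : x ^ (-ς) ≤ A ^ (-(ς / α)) * t ^ (ς / α) := by
  have ht : 0 < t := (by positivity : 0 < A * x ^ (-α)).trans_le h
  calc x ^ (-ς) = (x ^ (-α)) ^ (ς / α) := by rw [← rpow_mul hx.le]; field_simp
    _ ≤ (t / A) ^ (ς / α) := by gcongr; rw [le_div_iff₀ hA]; linarith
    _ = A ^ (-(ς / α)) * t ^ (ς / α) := by rw [div_rpow ht.le hA.le, rpow_neg hA.le]; ring

theorem rpow_neg_le_of_le_mul_rpow_neg {x t B α ς : ℝ} (hx : 0 < x) (ht : 0 < t) (hB : 0 < B)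
    (hα : 0 < α) (hς : ς ≤ 0) (h : t ≤ B * x ^ (-α)) :
    x ^ (-ς) ≤ B ^ (-(ς / α)) * t ^ (ς / α) := by
  calc x ^ (-ς) = (x ^ (-α)) ^ (ς / α) := by rw [← rpow_mul hx.le]; field_simp
    _ ≤ (t / B) ^ (ς / α) := by
        apply rpow_le_rpow_of_nonpos (by positivity) _ (div_nonpos_of_nonpos_of_nonneg hς hα.le)
        rw [div_le_iff₀ hB]; linarith
    _ = B ^ (-(ς / α)) * t ^ (ς / α) := by rw [div_rpow ht.le hB.le, rpow_neg hB.le]; ring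

theorem rpow_neg_le_of_mul_rpow_le {c x y γ r : ℝ} (hc : 0 < c) (hx : 0 < x) (hr : 0 ≤ r)
    (h : c * x ^ γ ≤ y) : y ^ (-r) ≤ c ^ (-r) * x ^ (-(γ * r)) := by
  calc y ^ (-r) ≤ (c * x ^ γ) ^ (-r) := rpow_le_rpow_of_nonpos (by positivity) h (neg_nonpos.2 hr)
    _ = c ^ (-r) * x ^ (-(γ * r)) := by
        rw [mul_rpow hc.le (by positivity), ← rpow_mul hx.le, mul_neg]

theorem mul_rpow_le_rpow_neg_of_le_mul_rpow {C x y γ r : ℝ} (hC : 0 < C) (hx : 0 < x) (hy : 0 < y)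
    (hr : 0 ≤ r) (h : y ≤ C * x ^ γ) : C ^ (-r) * x ^ (-(γ * r)) ≤ y ^ (-r) := by
  calc C ^ (-r) * x ^ (-(γ * r)) = (C * x ^ γ) ^ (-r) := by
        rw [mul_rpow hC.le (by positivity), ← rpow_mul hx.le, mul_neg]
    _ ≤ y ^ (-r) := rpow_le_rpow_of_nonpos hy h (neg_nonpos.2 hr)

theorem integral_Ioi_mul_rpow_neg {x b α : ℝ} (hx : 0 < x) (hα : 0 < α) :
    ∫ y in Ioi x, b * y ^ (-(α + 1)) = b / α * x ^ (-α) := by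
  rw [integral_const_mul, integral_Ioi_rpow_of_lt (by linarith) hx, show -(α + 1) + 1 = -α by ring]
  field_simp

theorem setIntegral_Ioi_le_of_le_mul_rpow {g : ℝ → ℝ} {x b α : ℝ} (hx : 0 < x) (hα : 0 < α)
    (hg : IntegrableOn g (Ioi x)) (hle : ∀ y ∈ Ioi x, g y ≤ b * y ^ (-(α + 1))) :
    ∫ y in Ioi x, g y ≤ b / α * x ^ (-α) := by
  rw [← integral_Ioi_mul_rpow_neg hx hα]
  exact setIntegral_mono_on hg
    ((integrableOn_Ioi_rpow_of_lt (by linarith) hx).const_mul b) measurableSet_Ioi hle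

theorem le_setIntegral_Ioi_of_mul_rpow_le {g : ℝ → ℝ} {x a α : ℝ} (hx : 0 < x) (hα : 0 < α)
    (hg : IntegrableOn g (Ioi x)) (hle : ∀ y ∈ Ioi x, a * y ^ (-(α + 1)) ≤ g y) :
    a / α * x ^ (-α) ≤ ∫ y in Ioi x, g y := by
  rw [← integral_Ioi_mul_rpow_neg hx hα]
  exact setIntegral_mono_on
    ((integrableOn_Ioi_rpow_of_lt (by linarith) hx).const_mul a) hg measurableSet_Ioi hle

section TailInverse

variable {g φ : ℝ → ℝ}

theorem eventually_lt_of_setIntegral_Ioi_eq (hg : ∀ y, 0 < y → 0 ≤ g y)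
    (hφpos : ∀ t, 0 < t → 0 < φ t) (hφ : ∀ t, 0 < t → ∫ y in Ioi (φ t), g y = t) {W : ℝ}
    (hW : 0 < ∫ y in Ioi W, g y) : ∀ᶠ t in 𝓝[>] 0, W < φ t := by
  filter_upwards [Ioo_mem_nhdsGT hW] with t ht
  by_contra! hφW
  -- a non-integrable `g` would have integral `0` on `Ioi (φ t)`, not `t`
  have hint : IntegrableOn g (Ioi (φ t)) :=
    .of_integral_ne_zero (by rw [hφ t ht.1]; exact ht.1.ne')
  have : ∫ y in Ioi W, g y ≤ ∫ y in Ioi (φ t), g y :=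
    setIntegral_mono_set hint
      ((ae_restrict_mem measurableSet_Ioi).mono fun y hy => hg y ((hφpos t ht.1).trans hy))
      (Ioi_subset_Ioi hφW).eventuallyLE
  linarith [hφ t ht.1, ht.2]

theorem eventually_rpow_bounds_of_setIntegral_Ioi_eq {α₁ α₂ a b : ℝ} (hα₁ : 0 < α₁)
    (hα₂ : 0 < α₂) (ha : 0 < a) (hg : ∀ y, 0 < y → 0 ≤ g y)
    (hφpos : ∀ t, 0 < t → 0 < φ t) (hφ : ∀ t, 0 < t → ∫ y in Ioi (φ t), g y = t)
    (hupper : ∀ᶠ y in atTop, g y ≤ b * y ^ (-(α₁ + 1)))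
    (hlower : ∀ᶠ y in atTop, a * y ^ (-(α₂ + 1)) ≤ g y) :
    ∀ᶠ t in 𝓝[>] 0, a / α₂ * φ t ^ (-α₂) ≤ t ∧ t ≤ b / α₁ * φ t ^ (-α₁) := by
  obtain ⟨V, hV⟩ := eventually_atTop.1 ((hupper.and hlower).and (eventually_gt_atTop 0))
  have hint : ∀ t, 0 < t → IntegrableOn g (Ioi (φ t)) := fun t ht =>
    .of_integral_ne_zero (by rw [hφ t ht]; exact ht.ne')
  -- `φ 1` only serves to make `g` integrable on `Ioi W`
  set W := max V (φ 1)
  have hW : 0 < W := (hφpos 1 one_pos).trans_le (le_max_right _ _)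
  have hVW : ∀ y ∈ Ioi W, V ≤ y := fun y hy => (le_max_left _ _).trans hy.le
  have hWpos : 0 < ∫ y in Ioi W, g y :=
    (by positivity : 0 < a / α₂ * W ^ (-α₂)).trans_le <|
      le_setIntegral_Ioi_of_mul_rpow_le hW hα₂
        ((hint 1 one_pos).mono_set (Ioi_subset_Ioi (le_max_right _ _)))
        fun y hy => (hV y (hVW y hy)).1.2
  filter_upwards [eventually_lt_of_setIntegral_Ioi_eq hg hφpos hφ hWpos, self_mem_nhdsWithin]
    with t hWt ht
  have hφt : 0 < φ t := hW.trans hWt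
  have hVt : ∀ y ∈ Ioi (φ t), V ≤ y := fun y hy => hVW y (hWt.trans hy)
  have hlow := le_setIntegral_Ioi_of_mul_rpow_le hφt hα₂ (hint t ht)
    fun y hy => (hV y (hVt y hy)).1.2
  have hupp := setIntegral_Ioi_le_of_le_mul_rpow hφt hα₁ (hint t ht)
    fun y hy => (hV y (hVt y hy)).1.1
  rw [hφ t ht] at hlow hupp
  exact ⟨hlow, hupp⟩

end TailInverse

theorem exists_rpow_neg_le_mul_rpow {φ : ℝ → ℝ} {α ς σ : ℝ} (hα : 0 < α) (hσ : σ < ς / α)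
    (hφpos : ∀ t, 0 < t → 0 < φ t)
    (hbounds : ∀ α₁ α₂, 0 < α₁ → α₁ < α → α < α₂ → ∃ A B, 0 < A ∧ 0 < B ∧
      ∀ᶠ t in 𝓝[>] 0, A * φ t ^ (-α₂) ≤ t ∧ t ≤ B * φ t ^ (-α₁)) :
    ∃ D > 0, ∀ᶠ t in 𝓝[>] 0, φ t ^ (-ς) ≤ D * t ^ σ := by
  have hnear : ∀ᶠ α' in 𝓝 α, σ < ς / α' :=
    (tendsto_const_nhds.div tendsto_id hα.ne').eventually (lt_mem_nhds hσ)
  obtain ⟨α₁, hσ₁, hα₁⟩ :=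
    ((hnear.filter_mono nhdsWithin_le_nhds).and (Ioo_mem_nhdsLT hα)).exists
  obtain ⟨α₂, hσ₂, hα₂ : α < α₂⟩ :=
    ((hnear.filter_mono nhdsWithin_le_nhds).and (self_mem_nhdsWithin (s := Ioi α))).exists
  obtain ⟨A, B, hA, hB, hAB⟩ := hbounds α₁ α₂ hα₁.1 hα₁.2 hα₂
  have hsmall : ∀ᶠ t in 𝓝[>] (0:ℝ), t ∈ Ioc 0 1 := Ioc_mem_nhdsGT one_pos
  rcases le_or_gt 0 ς with hς | hς
  · refine ⟨A ^ (-(ς / α₂)), by positivity, ?_⟩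
    filter_upwards [hAB, hsmall] with t ht ht₁
    calc φ t ^ (-ς) ≤ A ^ (-(ς / α₂)) * t ^ (ς / α₂) :=
          rpow_neg_le_of_mul_rpow_neg_le (hφpos t ht₁.1) hA (hα.trans hα₂) hς ht.1
      _ ≤ A ^ (-(ς / α₂)) * t ^ σ := mul_le_mul_of_nonneg_left
          (rpow_le_rpow_of_exponent_ge ht₁.1 ht₁.2 hσ₂.le) (by positivity)
  · refine ⟨B ^ (-(ς / α₁)), by positivity, ?_⟩
    filter_upwards [hAB, hsmall] with t ht ht₁
    calc φ t ^ (-ς) ≤ B ^ (-(ς / α₁)) * t ^ (ς / α₁) :=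
          rpow_neg_le_of_le_mul_rpow_neg (hφpos t ht₁.1) ht₁.1 hB hα₁.1 hς.le ht.2
      _ ≤ B ^ (-(ς / α₁)) * t ^ σ := mul_le_mul_of_nonneg_left
          (rpow_le_rpow_of_exponent_ge ht₁.1 ht₁.2 hσ₁.le) (by positivity)

namespace IsRV

variable {f : ℝ → ℝ} {ρ β γ : ℝ}

theorem eventually_two_rpow_mul_lt (hf : IsRV f ρ) (hpos : ∀ x, 0 < x → 0 < f x) (hβ : β < ρ) :
    ∀ᶠ u in atTop, 2 ^ β * f u < f (2 * u) := by
  filter_upwards [(hf 2 two_pos).eventually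
    (lt_mem_nhds (rpow_lt_rpow_of_exponent_lt one_lt_two hβ)), eventually_gt_atTop 0]
    with u hu hu0
  exact (lt_div_iff₀ (hpos u hu0)).1 hu

theorem eventually_lt_two_rpow_mul (hf : IsRV f ρ) (hpos : ∀ x, 0 < x → 0 < f x) (hβ : ρ < β) :
    ∀ᶠ u in atTop, f (2 * u) < 2 ^ β * f u := by
  filter_upwards [(hf 2 two_pos).eventually
    (gt_mem_nhds (rpow_lt_rpow_of_exponent_lt one_lt_two hβ)), eventually_gt_atTop 0]
    with u hu hu0
  exact (div_lt_iff₀ (hpos u hu0)).1 hu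

theorem exists_mul_rpow_le (hf : IsRV f ρ) (hmono : MonotoneOn f (Ici 0))
    (hpos : ∀ x, 0 < x → 0 < f x) (hβ₀ : 0 ≤ β) (hβ : β < ρ) :
    ∃ c > 0, ∀ᶠ x in atTop, c * x ^ β ≤ f x := by
  obtain ⟨U, hU⟩ :=
    eventually_atTop.1 ((hf.eventually_two_rpow_mul_lt hpos hβ).and (eventually_gt_atTop 0))
  have hU₀ := (hU U le_rfl).2
  obtain ⟨c, hc, hcf⟩ := exists_mul_rpow_le_of_doubling hU₀ hβ₀
    (hmono.mono (Ici_subset_Ici.2 hU₀.le)) (hpos U hU₀) fun u hu => (hU u hu).1.le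
  exact ⟨c, hc, eventually_atTop.2 ⟨U, hcf⟩⟩

theorem exists_le_mul_rpow (hf : IsRV f ρ) (hmono : MonotoneOn f (Ici 0))
    (hpos : ∀ x, 0 < x → 0 < f x) (hβ₀ : 0 ≤ β) (hβ : ρ < β) :
    ∃ C > 0, ∀ᶠ x in atTop, f x ≤ C * x ^ β := by
  obtain ⟨U, hU⟩ :=
    eventually_atTop.1 ((hf.eventually_lt_two_rpow_mul hpos hβ).and (eventually_gt_atTop 0))
  have hU₀ := (hU U le_rfl).2
  obtain ⟨C, hC, hCf⟩ := exists_le_mul_rpow_of_doubling hU₀ hβ₀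
    (hmono.mono (Ici_subset_Ici.2 hU₀.le)) (hpos U hU₀) fun u hu => (hU u hu).1.le
  exact ⟨C, hC, eventually_atTop.2 ⟨U, hCf⟩⟩

theorem exists_mul_rpow_le_integral (hf : IsRV f ρ) (hmono : MonotoneOn f (Ici 0))
    (hpos : ∀ x, 0 < x → 0 < f x) (hf₀ : 0 ≤ f 0) (hγ₁ : 1 ≤ γ) (hγ : γ < ρ + 1) :
    ∃ c > 0, ∀ᶠ x in atTop, c * x ^ γ ≤ ∫ s in (0:ℝ)..x, f s := by
  obtain ⟨c, hc, hcf⟩ := hf.exists_mul_rpow_le hmono hpos (sub_nonneg.2 hγ₁)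
    (by linarith : γ - 1 < ρ)
  refine ⟨c / 2 ^ γ, by positivity, ?_⟩
  filter_upwards [(tendsto_id.atTop_div_const two_pos).eventually hcf, eventually_gt_atTop 0]
    with x hx hx₀
  calc c / 2 ^ γ * x ^ γ = x / 2 * (c * (x / 2) ^ (γ - 1)) := by
        rw [rpow_sub_one (by positivity), div_rpow hx₀.le zero_le_two]; field_simp
    _ ≤ x / 2 * f (x / 2) := by gcongr; exact hx
    _ ≤ ∫ s in (0:ℝ)..x, f s :=
        half_mul_le_integral_of_monotoneOn (hmono.mono Icc_subset_Ici_self) hf₀ hx₀.le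

theorem exists_integral_le_mul_rpow (hf : IsRV f ρ) (hmono : MonotoneOn f (Ici 0))
    (hpos : ∀ x, 0 < x → 0 < f x) (hγ₁ : 1 ≤ γ) (hγ : ρ + 1 < γ) :
    ∃ C > 0, ∀ᶠ x in atTop, ∫ s in (0:ℝ)..x, f s ≤ C * x ^ γ := by
  obtain ⟨C, hC, hCf⟩ := hf.exists_le_mul_rpow hmono hpos (sub_nonneg.2 hγ₁)
    (by linarith : ρ < γ - 1)
  refine ⟨C, hC, ?_⟩
  filter_upwards [hCf, eventually_gt_atTop 0] with x hx hx₀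
  calc ∫ s in (0:ℝ)..x, f s ≤ x * f x :=
        integral_le_mul_of_monotoneOn (hmono.mono Icc_subset_Ici_self) hx₀.le
    _ ≤ x * (C * x ^ (γ - 1)) := by gcongr
    _ = C * x ^ γ := by rw [rpow_sub_one hx₀.ne']; field_simp

theorem exists_rpow_bounds_of_setIntegral_Ioi_eq {p α₁ α₂ : ℝ} {F φ : ℝ → ℝ}
    (hp : 1 < p) (hf : IsRV f ρ) (hmono : MonotoneOn f (Ici 0)) (hpos : ∀ x, 0 < x → 0 < f x)
    (hf₀ : 0 ≤ f 0) (hF : ∀ t, F t = ∫ s in (0:ℝ)..t, f s) (hφpos : ∀ t, 0 < t → 0 < φ t)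
    (hφ : ∀ t, 0 < t → ∫ s in Ioi (φ t), ((p / (p - 1)) * F s) ^ (-(1 / p)) = t)
    (hα₁ : 0 < α₁) (hα₁ρ : α₁ < (ρ + 1) / p - 1) (hα₂ρ : (ρ + 1) / p - 1 < α₂) :
    ∃ A B, 0 < A ∧ 0 < B ∧ ∀ᶠ t in 𝓝[>] 0, A * φ t ^ (-α₂) ≤ t ∧ t ≤ B * φ t ^ (-α₁) := by
  have hp₀ : 0 < p := by linarith
  have hq : 0 < p / (p - 1) := div_pos hp₀ (by linarith)
  have hα₂ : 0 < α₂ := by linarith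
  have hexp : ∀ α, p * (α + 1) * (1 / p) = α + 1 := fun α => by field_simp
  obtain ⟨c, hc, hcF⟩ := hf.exists_mul_rpow_le_integral (γ := p * (α₁ + 1)) hmono hpos hf₀
    (by nlinarith) ((lt_div_iff₀' hp₀).1 (by linarith))
  obtain ⟨C, hC, hCF⟩ := hf.exists_integral_le_mul_rpow (γ := p * (α₂ + 1)) hmono hpos
    (by nlinarith) ((div_lt_iff₀' hp₀).1 (by linarith))
  have hFnonneg : ∀ y, 0 < y → 0 ≤ F y := fun y hy => by
    rw [hF]
    exact intervalIntegral.integral_nonneg hy.le fun s hs =>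
      hf₀.trans (hmono self_mem_Ici hs.1 hs.1)
  refine ⟨(p / (p - 1) * C) ^ (-(1 / p)) / α₂, (p / (p - 1) * c) ^ (-(1 / p)) / α₁,
    by positivity, by positivity, eventually_rpow_bounds_of_setIntegral_Ioi_eq hα₁ hα₂
    (by positivity)
    (fun y hy => rpow_nonneg (mul_nonneg hq.le (hFnonneg y hy)) _) hφpos hφ ?_ ?_⟩
  · filter_upwards [hcF, eventually_gt_atTop 0] with y hy hy₀
    rw [← hexp α₁]
    apply rpow_neg_le_of_mul_rpow_le (mul_pos hq hc) hy₀ (by positivity)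
    rw [mul_assoc, hF]
    gcongr
  · filter_upwards [hcF, hCF, eventually_gt_atTop 0] with y hyc hy hy₀
    rw [← hexp α₂, hF]
    apply mul_rpow_le_rpow_neg_of_le_mul_rpow (mul_pos hq hC) hy₀
      (mul_pos hq ((by positivity : 0 < c * y ^ (p * (α₁ + 1))).trans_le hyc)) (by positivity)
    rw [mul_assoc]
    gcongr

end IsRV

theorem div_rpow_le_of_le_mul_rpow {X K k s C D M σ ν p : ℝ} (hK : 0 < K) (hs : 0 < s)
    (hC : 0 < C) (hD : 0 ≤ D) (hM : 0 < M) (hp : 0 ≤ p) (hX : X ≤ D * K ^ σ)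
    (hKk : K ≤ M * s * k) (hsK : s ≤ C * K ^ ν) :
    X / k ^ p ≤ D * (M * C) ^ p * K ^ (σ + p * (ν - 1)) := by
  have hk : K / (M * s) ≤ k := by rw [div_le_iff₀ (by positivity)]; linarith
  calc X / k ^ p ≤ D * K ^ σ / (K / (M * s)) ^ p := by gcongr
    _ = D * K ^ σ * (M * s / K) ^ p := by
        rw [div_eq_mul_inv, ← inv_rpow (by positivity), inv_div]
    _ ≤ D * K ^ σ * (M * (C * K ^ ν) / K) ^ p := by gcongr
    _ = D * (M * C) ^ p * K ^ (σ + p * (ν - 1)) := by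
        rw [mul_div_assoc, mul_div_assoc, ← rpow_sub_one hK.ne', ← mul_assoc,
          mul_rpow (by positivity) (by positivity), ← rpow_mul hK.le, rpow_add hK, mul_comm (ν - 1)]
        ring

theorem exists_le_mul_rpow_of_mul_le {K k : ℝ → ℝ} {δ ν : ℝ} (hδ : 0 < δ)
    (hK : ∀ s ∈ Ioo 0 δ, HasDerivAt K (k s) s) (hKpos : ∀ s ∈ Ioo 0 δ, 0 < K s)
    (hle : ∀ s ∈ Ioo 0 δ, ν * s * k s ≤ K s) :
    ∃ C > 0, ∀ᶠ s in 𝓝[>] 0, s ≤ C * K s ^ ν := by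
  set w : ℝ → ℝ := fun s => log s - ν * log (K s)
  have hw : ∀ s ∈ Ioo 0 δ, HasDerivAt w (s⁻¹ - ν * (k s / K s)) s := fun s hs =>
    (hasDerivAt_log hs.1.ne').sub (((hK s hs).log (hKpos s hs).ne').const_mul ν)
  have hmono : MonotoneOn w (Ioo 0 δ) := by
    refine monotoneOn_of_hasDerivWithinAt_nonneg (convex_Ioo 0 δ)
      (f' := fun s => s⁻¹ - ν * (k s / K s))
      (fun s hs => (hw s hs).continuousAt.continuousWithinAt) (fun s hs => ?_) fun s hs => ?_
    · rw [interior_Ioo] at hs ⊢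
      exact (hw s hs).hasDerivWithinAt
    · rw [interior_Ioo] at hs
      have hsK := mul_pos hs.1 (hKpos s hs)
      have : s⁻¹ - ν * (k s / K s) = (K s - ν * s * k s) / (s * K s) := by
        field_simp [hs.1.ne', (hKpos s hs).ne']
      rw [this]
      exact div_nonneg (sub_nonneg.2 (hle s hs)) hsK.le
  have hδ₂ : δ / 2 ∈ Ioo 0 δ := ⟨half_pos hδ, half_lt_self hδ⟩
  refine ⟨exp (w (δ / 2)), exp_pos _, ?_⟩
  filter_upwards [Ioc_mem_nhdsGT hδ₂.1] with s hs
  have hsδ : s ∈ Ioo 0 δ := ⟨hs.1, hs.2.trans_lt hδ₂.2⟩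
  calc s = exp (w s + ν * log (K s)) := by simp [w, exp_log hs.1]
    _ ≤ exp (w (δ / 2) + ν * log (K s)) := by gcongr; exact hmono hsδ hδ₂ hs.2
    _ = exp (w (δ / 2)) * K s ^ ν := by rw [exp_add, rpow_def_of_pos (hKpos s hsδ), mul_comm ν]

section Primitive

variable {k : ℝ → ℝ} {μ s : ℝ}

theorem MeasureTheory.IntegrableOn.intervalIntegrable_zero_of_mem_Ioo
    (hk : IntegrableOn k (Ioo 0 μ)) (hs : s ∈ Ioo 0 μ) : IntervalIntegrable k volume 0 s :=
  (intervalIntegrable_iff_integrableOn_Ioc_of_le hs.1.le).2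
    (hk.mono_set fun _ hx => ⟨hx.1, hx.2.trans_lt hs.2⟩)

theorem hasDerivAt_integral_of_mem_Ioo (hcont : ContinuousOn k (Ioo 0 μ))
    (hk : IntegrableOn k (Ioo 0 μ)) (hs : s ∈ Ioo 0 μ) :
    HasDerivAt (fun u => ∫ θ in (0:ℝ)..u, k θ) (k s) s :=
  intervalIntegral.integral_hasDerivAt_right (hk.intervalIntegrable_zero_of_mem_Ioo hs)
    (hcont.stronglyMeasurableAtFilter isOpen_Ioo s hs) (hcont.continuousAt (Ioo_mem_nhds hs.1 hs.2))

theorem integral_pos_of_mem_Ioo (hkpos : ∀ s ∈ Ioo (0:ℝ) μ, 0 < k s)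
    (hk : IntegrableOn k (Ioo 0 μ)) (hs : s ∈ Ioo 0 μ) : 0 < ∫ θ in (0:ℝ)..s, k θ :=
  intervalIntegral.intervalIntegral_pos_of_pos_on (hk.intervalIntegrable_zero_of_mem_Ioo hs)
    (fun x hx => hkpos x ⟨hx.1, hx.2.trans hs.2⟩) hs.1

theorem tendsto_integral_nhdsGT_zero (hk : IntegrableOn k (Ioo 0 μ)) (hμ : 0 < μ) :
    Tendsto (fun s => ∫ θ in (0:ℝ)..s, k θ) (𝓝[>] 0) (𝓝 0) := by
  have hcont : ContinuousWithinAt (fun s => ∫ θ in (0:ℝ)..s, k θ) (Icc 0 (μ / 2)) 0 :=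
    intervalIntegral.continuousWithinAt_primitive (measure_singleton 0) (by
      rw [min_self, max_eq_right (half_pos hμ).le]
      exact hk.intervalIntegrable_zero_of_mem_Ioo ⟨half_pos hμ, half_lt_self hμ⟩)
  simpa using (hcont.mono_of_mem_nhdsWithin (Icc_mem_nhdsGT (half_pos hμ))).tendsto

end Primitive

namespace memK

variable {ℓ μ ν : ℝ} {k : ℝ → ℝ}

theorem tendsto_integral_div_nhdsGT_zero (hk : memK ℓ μ k) (hμ : 0 < μ) :
    Tendsto (fun s => (∫ θ in (0:ℝ)..s, k θ) / k s) (𝓝[>] 0) (𝓝 0) := by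
  obtain ⟨hkpos, hmono | hanti, -, hkint, -⟩ := hk
  · refine squeeze_zero' ?_ ?_ (tendsto_nhdsWithin_of_tendsto_nhds tendsto_id)
    · filter_upwards [Ioo_mem_nhdsGT hμ] with s hs
      exact div_nonneg (integral_pos_of_mem_Ioo hkpos hkint hs).le (hkpos s hs).le
    filter_upwards [Ioo_mem_nhdsGT hμ] with s hs
    rw [div_le_iff₀ (hkpos s hs)]
    calc ∫ θ in (0:ℝ)..s, k θ ≤ ∫ _ in (0:ℝ)..s, k s :=
          intervalIntegral.integral_mono_on_of_le_Ioo hs.1.le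
            (hkint.intervalIntegrable_zero_of_mem_Ioo hs) intervalIntegrable_const
            fun x hx => hmono ⟨hx.1, hx.2.trans hs.2⟩ hs hx.2.le
      _ = s * k s := by simp
  · have hm : μ / 2 ∈ Ioo 0 μ := ⟨half_pos hμ, half_lt_self hμ⟩
    refine squeeze_zero' ?_ ?_
      (by simpa using (tendsto_integral_nhdsGT_zero hkint hμ).div_const (k (μ / 2)))
    · filter_upwards [Ioo_mem_nhdsGT hμ] with s hs
      exact div_nonneg (integral_pos_of_mem_Ioo hkpos hkint hs).le (hkpos s hs).le
    filter_upwards [Ioo_mem_nhdsGT hm.1] with s hs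
    have hsμ : s ∈ Ioo 0 μ := ⟨hs.1, hs.2.trans hm.2⟩
    exact div_le_div_of_nonneg_left (integral_pos_of_mem_Ioo hkpos hkint hsμ).le (hkpos _ hm)
      (hanti hsμ hm hs.2.le)

theorem tendsto_integral_div_div_self (hk : memK ℓ μ k) (hμ : 0 < μ) :
    Tendsto (fun s => (∫ θ in (0:ℝ)..s, k θ) / k s / s) (𝓝[>] 0) (𝓝 ℓ) := by
  have ⟨hkpos, _, hkC, hkint, hkd⟩ := hk
  refine deriv.lhopital_zero_nhdsGT ?_ (by simp) (hk.tendsto_integral_div_nhdsGT_zero hμ)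
    (tendsto_nhdsWithin_of_tendsto_nhds tendsto_id) (by simpa using hkd)
  filter_upwards [Ioo_mem_nhdsGT hμ] with s hs
  exact (hasDerivAt_integral_of_mem_Ioo hkC.continuousOn hkint hs).differentiableAt.div
    ((hkC.differentiableOn one_ne_zero).differentiableAt (Ioo_mem_nhds hs.1 hs.2))
    (hkpos s hs).ne'

theorem eventually_integral_le (hk : memK ℓ μ k) (hμ : 0 < μ) (hν : ℓ < ν) :
    ∀ᶠ s in 𝓝[>] 0, ∫ θ in (0:ℝ)..s, k θ ≤ ν * s * k s := by
  filter_upwards [(hk.tendsto_integral_div_div_self hμ).eventually (gt_mem_nhds hν),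
    Ioo_mem_nhdsGT hμ] with s hs hsμ
  rw [div_div, div_lt_iff₀ (mul_pos (hk.1 s hsμ) hsμ.1)] at hs
  linarith

theorem exists_le_mul_integral_rpow (hk : memK ℓ μ k) (hμ : 0 < μ) (hν : ν < ℓ) :
    ∃ C > 0, ∀ᶠ s in 𝓝[>] 0, s ≤ C * (∫ θ in (0:ℝ)..s, k θ) ^ ν := by
  obtain ⟨δ, hδ, hsub⟩ := mem_nhdsGT_iff_exists_Ioo_subset.1
    (((hk.tendsto_integral_div_div_self hμ).eventually (lt_mem_nhds hν)).and
      (Ioo_mem_nhdsGT hμ))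
  refine exists_le_mul_rpow_of_mul_le hδ
    (fun s hs => hasDerivAt_integral_of_mem_Ioo hk.2.2.1.continuousOn hk.2.2.2.1 (hsub hs).2)
    (fun s hs => integral_pos_of_mem_Ioo hk.1 hk.2.2.2.1 (hsub hs).2) fun s hs => ?_
  obtain ⟨hνs, hsμ⟩ := hsub hs
  rw [div_div, lt_div_iff₀ (mul_pos (hk.1 s hsμ) hsμ.1)] at hνs
  linarith

theorem tendsto_div_rpow_of_le_mul_rpow (hk : memK ℓ μ k) (hμ : 0 < μ) (hℓ : 0 < ℓ)
    {G : ℝ → ℝ} {p σ : ℝ} (hp : 0 < p) (hσ : p * (1 - ℓ) < σ) (hG₀ : ∀ t, 0 < t → 0 ≤ G t)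
    (hG : ∃ D > 0, ∀ᶠ t in 𝓝[>] 0, G t ≤ D * t ^ σ) :
    Tendsto (fun s => G (∫ θ in (0:ℝ)..s, k θ) / k s ^ p) (𝓝[>] 0) (𝓝 0) := by
  obtain ⟨D, hD, hGD⟩ := hG
  obtain ⟨ν, hνσ, hνℓ⟩ := exists_between (show 1 - σ / p < ℓ by
    rw [sub_lt_comm, lt_div_iff₀ hp]; linarith)
  have hγ : 0 < σ + p * (ν - 1) := by
    have := sub_lt_comm.1 hνσ
    rw [lt_div_iff₀ hp] at this
    linarith
  obtain ⟨C, hC, hsK⟩ := hk.exists_le_mul_integral_rpow hμ hνℓ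
  have hpos : ∀ᶠ s in 𝓝[>] 0, 0 < ∫ θ in (0:ℝ)..s, k θ ∧ 0 < k s := by
    filter_upwards [Ioo_mem_nhdsGT hμ] with s hs
    exact ⟨integral_pos_of_mem_Ioo hk.1 hk.2.2.2.1 hs, hk.1 s hs⟩
  have hK₀ := tendsto_integral_nhdsGT_zero hk.2.2.2.1 hμ
  have hK : Tendsto (fun s => ∫ θ in (0:ℝ)..s, k θ) (𝓝[>] 0) (𝓝[>] 0) :=
    tendsto_nhdsWithin_iff.2 ⟨hK₀, hpos.mono fun _ h => h.1⟩
  have hbound : Tendsto (fun s => D * ((ℓ + 1) * C) ^ p *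
      (∫ θ in (0:ℝ)..s, k θ) ^ (σ + p * (ν - 1))) (𝓝[>] 0) (𝓝 0) := by
    simpa [zero_rpow hγ.ne'] using
      ((continuousAt_rpow_const 0 _ (Or.inr hγ.le)).tendsto.comp hK₀).const_mul
        (D * ((ℓ + 1) * C) ^ p)
  refine squeeze_zero' ?_ ?_ hbound
  · filter_upwards [hpos] with s hs
    exact div_nonneg (hG₀ _ hs.1) (rpow_nonneg hs.2.le _)
  · filter_upwards [hK.eventually hGD, hsK, hk.eventually_integral_le hμ (lt_add_one ℓ), hpos,
      self_mem_nhdsWithin] with s hGs hs hKs hposs hs₀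
    exact div_rpow_le_of_le_mul_rpow hposs.1 hs₀ hC hD.le (by linarith) hp.le hGs hKs hs

end memK

theorem phi_K_decay_general (p ℓ μ ρ : ℝ) (hp : 1 < p) (hℓ : 0 < ℓ) (hμ : 0 < μ)
    (k : ℝ → ℝ) (hk : memK ℓ μ k)
    (f : ℝ → ℝ) (hfC : ContDiffOn ℝ 1 f (Ici (0:ℝ))) (hf0 : f 0 = 0)
    (hf' : ∀ u : ℝ, 0 < u → 0 < deriv f u)
    (hRV : IsRV f ρ) (hρ : max 1 (max (p - 1) (p - 1 - (p - 2) / ℓ)) < ρ)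
    (r : ℝ) (hr : r = (ρ + 1) / (ρ + 1 - p))
    (F : ℝ → ℝ) (hF : ∀ t, F t = ∫ s in (0:ℝ)..t, f s)
    (φ : ℝ → ℝ) (hφpos : ∀ t : ℝ, 0 < t → 0 < φ t)
    (hφ : ∀ t : ℝ, 0 < t →
      (∫ s in Ioi (φ t), ((p / (p - 1)) * F s) ^ (-(1 / p))) = t)
    (ς : ℝ) (hς1 : p * (1 - ℓ) / (r - 1) < ς) :
    Tendsto (fun s => (φ (∫ θ in (0:ℝ)..s, k θ)) ^ (-ς) / (k s) ^ p)
      (𝓝[>] (0:ℝ)) (𝓝 0) := by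
  have hp₀ : 0 < p := by linarith
  have hρp : p < ρ + 1 := by linarith [(le_max_left _ _).trans (le_max_right 1 _) |>.trans_lt hρ]
  set α := (ρ + 1) / p - 1
  have hα : 0 < α := sub_pos.2 ((one_lt_div hp₀).2 hρp)
  have hς : p * (1 - ℓ) < ς / α := by
    have hr₁ : r - 1 = α⁻¹ := by
      rw [hr]; simp only [α]; field_simp [(by linarith : ρ + 1 - p ≠ 0)]; ring
    rwa [hr₁, div_inv_eq_mul, ← lt_div_iff₀ hα] at hς1
  obtain ⟨σ, hσℓ, hσς⟩ := exists_between hς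
  have hfmono : StrictMonoOn f (Ici 0) := strictMonoOn_of_deriv_pos (convex_Ici 0)
    hfC.continuousOn fun x hx => hf' x (by rwa [interior_Ici] at hx)
  have hfpos : ∀ x, 0 < x → 0 < f x := fun x hx => hf0 ▸ hfmono self_mem_Ici hx.le hx
  exact hk.tendsto_div_rpow_of_le_mul_rpow hμ hℓ hp₀ hσℓ (fun t ht => rpow_nonneg (hφpos t ht).le _)
    (exists_rpow_neg_le_mul_rpow hα hσς hφpos fun α₁ α₂ hα₁ hα₁α hαα₂ =>
      hRV.exists_rpow_bounds_of_setIntegral_Ioi_eq hp hfmono.monotoneOn hfpos hf0.ge hF hφpos hφ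
        hα₁ hα₁α hαα₂)

/-- Let `k ∈ K_ℓ`, `f ∈ C¹([0,∞)) ∩ RV_ρ` with `f(0) = 0`, `f' > 0` on `(0,∞)`,
`ρ > max{1, p-1, p-1-(p-2)/ℓ}`, `r = (ρ+1)/(ρ+1-p)`, and let `φ` be defined by
`∫_{φ(t)}^∞ (p'F(s))^{-1/p} ds = t` with `F(t) = ∫₀ᵗ f` and `p' = p/(p-1)`.
Then for any `ς` with `p(1-ℓ)/(r-1) < ς < ρ-1`,
`φ(K(s))^{-ς} / k(s)^p → 0` as `s → 0⁺`. -/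
theorem phi_K_decay (p ℓ μ ρ : ℝ) (hp : 1 < p) (hℓ : 0 < ℓ) (hμ : 0 < μ)
    (k : ℝ → ℝ) (hk : memK ℓ μ k)
    (f : ℝ → ℝ) (hfC : ContDiffOn ℝ 1 f (Ici (0:ℝ))) (hf0 : f 0 = 0)
    (hf' : ∀ u : ℝ, 0 < u → 0 < deriv f u)
    (hRV : IsRV f ρ) (hρ : max 1 (max (p - 1) (p - 1 - (p - 2) / ℓ)) < ρ)
    (r : ℝ) (hr : r = (ρ + 1) / (ρ + 1 - p))
    (F : ℝ → ℝ) (hF : ∀ t, F t = ∫ s in (0:ℝ)..t, f s)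
    (φ : ℝ → ℝ) (hφpos : ∀ t : ℝ, 0 < t → 0 < φ t)
    (hφ : ∀ t : ℝ, 0 < t →
      (∫ s in Ioi (φ t), ((p / (p - 1)) * F s) ^ (-(1 / p))) = t)
    (ς : ℝ) (hς1 : p * (1 - ℓ) / (r - 1) < ς) (hς2 : ς < ρ - 1) :
    Tendsto (fun s => (φ (∫ θ in (0:ℝ)..s, k θ)) ^ (-ς) / (k s) ^ p)
      (𝓝[>] (0:ℝ)) (𝓝 0) :=
  phi_K_decay_general p ℓ μ ρ hp hℓ hμ k hk f hfC hf0 hf' hRV hρ r hr F hF φ hφpos hφ ς hς1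
end
end
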